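/- arXiv:2512.02571 — 8 statements merged into one kernel-verified Lean document; each statement's English description precedes it below -/
import Mathlib

section
/- Every extreme point (x, y) of the convex hull conv(X) of the feasible set of problem P belongs to X (so y ∈ {0,1}^n), and for each j ∈ {1,…,m} there is at most one index i ∈ {1,…,n} with ℓ_{ij} y_i < x_{ij} < c_{ij} y_i. -/
/-!
An extreme point of `conv X` lies in `X`. If two indices `i₁ ≠ i₂` both had `x_{ij}` strictly
between its bounds, moving a small amount `ε` of column `j` from row `i₂` to row `i₁`, or back,
would keep every constraint of `X` (the column sums of `x` do not change), so the point would be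
the midpoint of two distinct points of `X`.
-/

open Set

theorem eq_zero_of_sub_mem_of_add_mem_of_mem_extremePoints {𝕜 E : Type*} [Ring 𝕜] [LinearOrder 𝕜]
    [IsStrictOrderedRing 𝕜] [Invertible (2 : 𝕜)] [AddCommGroup E] [Module 𝕜 E] {A : Set E}
    {x y : E} (hx : x ∈ A.extremePoints 𝕜) (hsub : x - y ∈ A) (hadd : x + y ∈ A) : y = 0 := by
  simpa using hx.2 hsub hadd (mem_openSegment_sub_add x y)

theorem exists_pos_forall_abs_le_add_mem_Icc {𝕜 : Type*} [Field 𝕜] [LinearOrder 𝕜]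
    [IsStrictOrderedRing 𝕜] {a b x : 𝕜} (hx : x ∈ Ioo a b) :
    ∃ ε > 0, ∀ t, |t| ≤ ε → x + t ∈ Icc a b := by
  refine ⟨min (x - a) (b - x), lt_min (sub_pos.2 hx.1) (sub_pos.2 hx.2), fun t ht => ?_⟩
  have h₁ := (neg_le_of_abs_le ht).trans' (neg_le_neg (min_le_left _ _))
  have h₂ := (le_of_abs_le ht).trans (min_le_right _ _)
  constructor <;> linarith

section FeasibleSet

variable {ι κ : Type*} [DecidableEq ι] [DecidableEq κ]

def feasibleSet [Fintype ι] (l c : ι → κ → ℝ) (d : κ → ℝ) : Set ((ι → κ → ℝ) × (ι → ℝ)) :=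
  {p | (∀ i, p.2 i = 0 ∨ p.2 i = 1) ∧ (∀ j, d j ≤ ∑ i, p.1 i j) ∧
    (∀ i j, l i j * p.2 i ≤ p.1 i j ∧ p.1 i j ≤ c i j * p.2 i)}

def transfer (i₁ i₂ : ι) (j : κ) (t : ℝ) : ι → κ → ℝ :=
  Pi.single i₁ (Pi.single j t) - Pi.single i₂ (Pi.single j t)

theorem transfer_neg (i₁ i₂ : ι) (j : κ) (t : ℝ) :
    transfer i₁ i₂ j (-t) = -transfer i₁ i₂ j t := by
  simp only [transfer, Pi.single_neg, neg_sub, neg_sub_neg]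

theorem transfer_apply_left {i₁ i₂ : ι} (h : i₁ ≠ i₂) (j : κ) (t : ℝ) :
    transfer i₁ i₂ j t i₁ j = t := by
  simp [transfer, h]

theorem sum_transfer_apply [Fintype ι] (i₁ i₂ : ι) (j j' : κ) (t : ℝ) :
    ∑ i, transfer i₁ i₂ j t i j' = 0 := by
  simp [transfer, Pi.single_apply, ite_apply, Finset.sum_sub_distrib]

theorem add_transfer_mem_feasibleSet [Fintype ι] {l c : ι → κ → ℝ} {d : κ → ℝ}
    {p : (ι → κ → ℝ) × (ι → ℝ)} (hp : p ∈ feasibleSet l c d) {i₁ i₂ : ι} (h : i₁ ≠ i₂)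
    {j : κ} {t : ℝ} (h₁ : p.1 i₁ j + t ∈ Icc (l i₁ j * p.2 i₁) (c i₁ j * p.2 i₁))
    (h₂ : p.1 i₂ j - t ∈ Icc (l i₂ j * p.2 i₂) (c i₂ j * p.2 i₂)) :
    p + (transfer i₁ i₂ j t, 0) ∈ feasibleSet l c d := by
  obtain ⟨hy, hdemand, hbounds⟩ := hp
  refine ⟨by simpa using hy, fun j' => ?_, fun i j' => ?_⟩
  · simpa [Finset.sum_add_distrib, sum_transfer_apply] using hdemand j'
  · by_cases hj : j' = j
    · subst hj
      by_cases hi₁ : i = i₁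
      · subst hi₁; simpa [transfer, h] using h₁
      by_cases hi₂ : i = i₂
      · subst hi₂; simpa [transfer, h.symm, sub_eq_add_neg] using h₂
      simpa [transfer, Pi.single_apply, hi₁, hi₂] using hbounds i j'
    · simpa [transfer, Pi.single_apply, ite_apply, hj] using hbounds i j'

end FeasibleSet

theorem stmt1_general
    (n m : ℕ)
    (l c : Fin n → Fin m → ℕ) (d : Fin m → ℕ)
    (X : Set ((Fin n → Fin m → ℝ) × (Fin n → ℝ)))
    (hX : X = {p | (∀ i, p.2 i = 0 ∨ p.2 i = 1) ∧
                   (∀ j, (d j : ℝ) ≤ ∑ i, p.1 i j) ∧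
                   (∀ i j, (l i j : ℝ) * p.2 i ≤ p.1 i j ∧ p.1 i j ≤ (c i j : ℝ) * p.2 i)}) :
    ∀ p ∈ Set.extremePoints ℝ (convexHull ℝ X),
      p ∈ X ∧ ∀ j : Fin m,
        {i : Fin n | (l i j : ℝ) * p.2 i < p.1 i j ∧ p.1 i j < (c i j : ℝ) * p.2 i}.Subsingleton := by
  obtain rfl : X = feasibleSet (fun i j => (l i j : ℝ)) (fun i j => c i j) (fun j => d j) := hX
  intro p hp
  have hpX := extremePoints_convexHull_subset hp
  refine ⟨hpX, fun j i₁ hi₁ i₂ hi₂ => ?_⟩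
  by_contra h
  obtain ⟨ε₁, hε₁, h₁⟩ := exists_pos_forall_abs_le_add_mem_Icc hi₁
  obtain ⟨ε₂, hε₂, h₂⟩ := exists_pos_forall_abs_le_add_mem_Icc hi₂
  have hshift : ∀ t, |t| ≤ min ε₁ ε₂ → p + (transfer i₁ i₂ j t, 0) ∈ convexHull ℝ _ :=
    fun t ht => subset_convexHull ℝ _ <| add_transfer_mem_feasibleSet hpX h
      (h₁ t (ht.trans (min_le_left _ _)))
      (by simpa [sub_eq_add_neg] using h₂ (-t) ((abs_neg t).trans_le (ht.trans (min_le_right _ _))))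
  have hε : 0 < min ε₁ ε₂ := lt_min hε₁ hε₂
  have hzero := eq_zero_of_sub_mem_of_add_mem_of_mem_extremePoints hp
    (by simpa [sub_eq_add_neg, transfer_neg] using
      hshift (-min ε₁ ε₂) ((abs_neg _).trans_le (abs_of_pos hε).le))
    (hshift (min ε₁ ε₂) (abs_of_pos hε).le)
  have htransfer : transfer i₁ i₂ j (min ε₁ ε₂) = 0 := congr_arg Prod.fst hzero
  exact hε.ne' ((transfer_apply_left h j _).symm.trans (congr_fun₂ htransfer i₁ j))

/-- Every extreme point of the convex hull of the feasible set `X` of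
problem P belongs to `X`, and for each constraint `j` there is at most one index `i`
with `ℓ_{ij} y_i < x_{ij} < c_{ij} y_i`. -/
theorem stmt1
    (n m : ℕ) (hn : 0 < n) (hm : 0 < m)
    (v l c : Fin n → Fin m → ℕ) (d : Fin m → ℕ) (f : Fin n → ℕ)
    (hlc : ∀ i j, l i j ≤ c i j) (hcd : ∀ i j, c i j ≤ d j)
    (X : Set ((Fin n → Fin m → ℝ) × (Fin n → ℝ)))
    (hX : X = {p | (∀ i, p.2 i = 0 ∨ p.2 i = 1) ∧
                   (∀ j, (d j : ℝ) ≤ ∑ i, p.1 i j) ∧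
                   (∀ i j, (l i j : ℝ) * p.2 i ≤ p.1 i j ∧ p.1 i j ≤ (c i j : ℝ) * p.2 i)}) :
    ∀ p ∈ Set.extremePoints ℝ (convexHull ℝ X),
      p ∈ X ∧ ∀ j : Fin m,
        {i : Fin n | (l i j : ℝ) * p.2 i < p.1 i j ∧ p.1 i j < (c i j : ℝ) * p.2 i}.Subsingleton :=
  stmt1_general n m l c d X hX
end

section
/- If the feasible set X of an instance of problem P is nonempty, then there exists an optimal solution (x, y) (a minimizer of the value over X) such that, for every j ∈ {1,…,m}, there is at most one index i ∈ {1,…,n} with ℓ_{ij} y_i < x_{ij} < c_{ij} y_i. -/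
/-- If the feasible set `X` of an instance of problem P is nonempty,
then there is an optimal solution such that, for every `j`, at most one index `i`
satisfies `ℓ_{ij} y_i < x_{ij} < c_{ij} y_i`. -/
theorem stmt2
    (n m : ℕ) (hn : 0 < n) (hm : 0 < m)
    (v l c : Fin n → Fin m → ℕ) (d : Fin m → ℕ) (f : Fin n → ℕ)
    (hlc : ∀ i j, l i j ≤ c i j) (hcd : ∀ i j, c i j ≤ d j)
    (X : Set ((Fin n → Fin m → ℝ) × (Fin n → ℝ)))
    (hX : X = {p | (∀ i, p.2 i = 0 ∨ p.2 i = 1) ∧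
                   (∀ j, (d j : ℝ) ≤ ∑ i, p.1 i j) ∧
                   (∀ i j, (l i j : ℝ) * p.2 i ≤ p.1 i j ∧ p.1 i j ≤ (c i j : ℝ) * p.2 i)})
    (hne : X.Nonempty) :
    ∃ p ∈ X,
      (∀ q ∈ X,
        (∑ i, ∑ j, (v i j : ℝ) * p.1 i j) + ∑ i, (f i : ℝ) * p.2 i ≤
          (∑ i, ∑ j, (v i j : ℝ) * q.1 i j) + ∑ i, (f i : ℝ) * q.2 i) ∧
      ∀ j : Fin m,
        {i : Fin n | (l i j : ℝ) * p.2 i < p.1 i j ∧ p.1 i j < (c i j : ℝ) * p.2 i}.Subsingleton := by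
  classical
  have hXmem : ∀ p, p ∈ X ↔ ((∀ i, p.2 i = 0 ∨ p.2 i = 1) ∧
      (∀ j, (d j : ℝ) ≤ ∑ i, p.1 i j) ∧
      (∀ i j, (l i j : ℝ) * p.2 i ≤ p.1 i j ∧ p.1 i j ≤ (c i j : ℝ) * p.2 i)) := by
    intro p; rw [hX]; rfl
  set g : (Fin n → Fin m → ℝ) × (Fin n → ℝ) → ℝ :=
    fun q => (∑ i, ∑ j, (v i j : ℝ) * q.1 i j) + ∑ i, (f i : ℝ) * q.2 i with hg
  set hf : (Fin n → Fin m → ℝ) × (Fin n → ℝ) → ℝ :=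
    fun q => ∑ i, ∑ j, (q.1 i j) ^ 2 with hh
  have hgcont : Continuous g := by
    apply Continuous.add
    · exact continuous_finset_sum _ fun i _ => continuous_finset_sum _ fun j _ =>
        continuous_const.mul ((continuous_apply j).comp ((continuous_apply i).comp continuous_fst))
    · exact continuous_finset_sum _ fun i _ =>
        continuous_const.mul ((continuous_apply i).comp continuous_snd)
  have hhcont : Continuous hf := by
    exact continuous_finset_sum _ fun i _ => continuous_finset_sum _ fun j _ =>
      (((continuous_apply j).comp ((continuous_apply i).comp continuous_fst)).pow 2)
  -- X is closed
  have hXclosed : IsClosed X := by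
    rw [hX]
    have : {p : (Fin n → Fin m → ℝ) × (Fin n → ℝ) | (∀ i, p.2 i = 0 ∨ p.2 i = 1) ∧
        (∀ j, (d j : ℝ) ≤ ∑ i, p.1 i j) ∧
        (∀ i j, (l i j : ℝ) * p.2 i ≤ p.1 i j ∧ p.1 i j ≤ (c i j : ℝ) * p.2 i)} =
        (⋂ i, ({p | p.2 i = 0} ∪ {p | p.2 i = 1})) ∩
        ((⋂ j, {p | (d j : ℝ) ≤ ∑ i, p.1 i j}) ∩
         (⋂ i, ⋂ j, ({p | (l i j : ℝ) * p.2 i ≤ p.1 i j} ∩ {p | p.1 i j ≤ (c i j : ℝ) * p.2 i}))) := by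
      ext p
      simp only [Set.mem_setOf_eq, Set.mem_inter_iff, Set.mem_iInter, Set.mem_union]
    rw [this]
    have cy : ∀ i : Fin n, Continuous fun p : (Fin n → Fin m → ℝ) × (Fin n → ℝ) => p.2 i :=
      fun i => (continuous_apply i).comp continuous_snd
    have cx : ∀ (i : Fin n) (j : Fin m),
        Continuous fun p : (Fin n → Fin m → ℝ) × (Fin n → ℝ) => p.1 i j :=
      fun i j => (continuous_apply j).comp ((continuous_apply i).comp continuous_fst)
    refine IsClosed.inter ?_ (IsClosed.inter ?_ ?_)
    · exact isClosed_iInter fun i =>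
        ((isClosed_eq (cy i) continuous_const).union (isClosed_eq (cy i) continuous_const))
    · exact isClosed_iInter fun j => isClosed_le continuous_const
        (continuous_finset_sum _ fun i _ => cx i j)
    · exact isClosed_iInter fun i => isClosed_iInter fun j =>
        (isClosed_le (continuous_const.mul (cy i)) (cx i j)).inter
          (isClosed_le (cx i j) (continuous_const.mul (cy i)))
  -- X is compact
  have hXcomp : IsCompact X := by
    have hK : IsCompact ((Set.univ.pi fun i : Fin n => Set.univ.pi fun j : Fin m =>
        Set.Icc (0 : ℝ) (c i j)) ×ˢ (Set.univ.pi fun _ : Fin n => Set.Icc (0 : ℝ) 1)) :=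
      (isCompact_univ_pi fun i => isCompact_univ_pi fun j => isCompact_Icc).prod
        (isCompact_univ_pi fun _ => isCompact_Icc)
    refine hK.of_isClosed_subset hXclosed ?_
    intro p hp
    obtain ⟨hy, _, hb⟩ := (hXmem p).mp hp
    have hy01 : ∀ i, 0 ≤ p.2 i ∧ p.2 i ≤ 1 := by
      intro i; rcases hy i with h | h <;> rw [h] <;> norm_num
    constructor
    · intro i _
      intro j _
      refine ⟨?_, ?_⟩
      · have := (hb i j).1
        have h0 : (0 : ℝ) ≤ (l i j : ℝ) * p.2 i :=
          mul_nonneg (Nat.cast_nonneg _) (hy01 i).1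
        linarith
      · have := (hb i j).2
        have h1 : (c i j : ℝ) * p.2 i ≤ (c i j : ℝ) :=
          (mul_le_of_le_one_right (Nat.cast_nonneg _) (hy01 i).2)
        linarith
    · intro i _
      exact ⟨(hy01 i).1, (hy01 i).2⟩
  -- minimize g on X
  obtain ⟨p₀, hp₀X, hp₀⟩ := hXcomp.exists_isMinOn hne hgcont.continuousOn
  have hp₀min : ∀ q ∈ X, g p₀ ≤ g q := fun q hq => hp₀ hq
  -- the optimal set
  set O : Set ((Fin n → Fin m → ℝ) × (Fin n → ℝ)) := X ∩ {q | g q ≤ g p₀} with hO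
  have hOcomp : IsCompact O := hXcomp.inter_right (isClosed_le hgcont continuous_const)
  have hOne : O.Nonempty := ⟨p₀, hp₀X, show g p₀ ≤ g p₀ from le_rfl⟩
  obtain ⟨p, hpO, hpmax⟩ := hOcomp.exists_isMaxOn hOne hhcont.continuousOn
  have hpX : p ∈ X := hpO.1
  have hpopt : ∀ q ∈ X, g p ≤ g q := fun q hq => le_trans hpO.2 (hp₀min q hq)
  have hgp : g p = g p₀ := le_antisymm hpO.2 (hp₀min p hpX)
  refine ⟨p, hpX, fun q hq => hpopt q hq, ?_⟩
  intro j i1 hi1 i2 hi2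
  by_contra hne12
  simp only [Set.mem_setOf_eq] at hi1 hi2
  -- perturbation setup
  set ε : ℝ := min (min (p.1 i1 j - (l i1 j : ℝ) * p.2 i1) ((c i1 j : ℝ) * p.2 i1 - p.1 i1 j))
      (min (p.1 i2 j - (l i2 j : ℝ) * p.2 i2) ((c i2 j : ℝ) * p.2 i2 - p.1 i2 j)) with hε
  have hεpos : 0 < ε := by
    rw [hε]
    refine lt_min (lt_min ?_ ?_) (lt_min ?_ ?_) <;> linarith [hi1.1, hi1.2, hi2.1, hi2.2]
  have hε1 : ε ≤ p.1 i1 j - (l i1 j : ℝ) * p.2 i1 := le_trans (min_le_left _ _) (min_le_left _ _)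
  have hε2 : ε ≤ (c i1 j : ℝ) * p.2 i1 - p.1 i1 j := le_trans (min_le_left _ _) (min_le_right _ _)
  have hε3 : ε ≤ p.1 i2 j - (l i2 j : ℝ) * p.2 i2 := le_trans (min_le_right _ _) (min_le_left _ _)
  have hε4 : ε ≤ (c i2 j : ℝ) * p.2 i2 - p.1 i2 j := le_trans (min_le_right _ _) (min_le_right _ _)
  set e : ℝ → Fin n → Fin m → ℝ := fun t i' j' =>
    if j' = j then ((if i' = i1 then t else 0) - (if i' = i2 then t else 0)) else 0 with he
  set Q : ℝ → (Fin n → Fin m → ℝ) × (Fin n → ℝ) :=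
    fun t => (fun i' j' => p.1 i' j' + e t i' j', p.2) with hQdef
  -- key summation lemma
  have key : ∀ (t : ℝ) (F : Fin n → Fin m → ℝ),
      (∑ i', ∑ j', F i' j' * e t i' j') = t * (F i1 j - F i2 j) := by
    intro t F
    have inner : ∀ i', ∑ j', F i' j' * e t i' j'
        = F i' j * ((if i' = i1 then t else 0) - (if i' = i2 then t else 0)) := by
      intro i'
      rw [Finset.sum_eq_single j]
      · simp [he]
      · intro j' _ hj'; simp [he, hj']
      · simp
    rw [Finset.sum_congr rfl fun i' _ => inner i']
    simp only [mul_sub, mul_ite, mul_zero, Finset.sum_sub_distrib, Finset.sum_ite_eq',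
      Finset.mem_univ, if_true]
    ring
  have key2 : ∀ t : ℝ, (∑ i', ∑ j', (e t i' j') ^ 2) = 2 * t ^ 2 := by
    intro t
    have inner : ∀ i', ∑ j', (e t i' j') ^ 2
        = ((if i' = i1 then t else 0) - (if i' = i2 then t else 0)) ^ 2 := by
      intro i'
      rw [Finset.sum_eq_single j]
      · simp [he]
      · intro j' _ hj'; simp [he, hj']
      · simp
    rw [Finset.sum_congr rfl fun i' _ => inner i']
    rw [Finset.sum_eq_add_of_mem i1 i2 (Finset.mem_univ _) (Finset.mem_univ _) hne12 ?side]
    · simp [hne12, Ne.symm hne12]; ring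
    case side =>
      intro i' _ hi'
      simp [hi'.1, hi'.2]
  -- column sums unchanged
  have hsum : ∀ (t : ℝ) (j' : Fin m), (∑ i', (Q t).1 i' j') = ∑ i', p.1 i' j' := by
    intro t j'
    simp only [hQdef]
    rw [Finset.sum_add_distrib]
    have : (∑ i', e t i' j') = 0 := by
      by_cases hj' : j' = j
      · subst hj'
        simp [he, Finset.sum_sub_distrib, Finset.sum_ite_eq']
      · simp [he, hj']
    rw [this, add_zero]
  -- membership of perturbed points
  have hmem : ∀ t : ℝ, |t| ≤ ε → Q t ∈ X := by
    intro t ht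
    obtain ⟨htl, htr⟩ := abs_le.mp ht
    obtain ⟨hy, hd, hb⟩ := (hXmem p).mp hpX
    rw [hXmem]
    refine ⟨hy, fun j' => (hsum t j') ▸ hd j', ?_⟩
    intro i' j'
    by_cases hj' : j' = j
    · by_cases h1 : i' = i1
      · have hval : (Q t).1 i' j' = p.1 i1 j + t := by
          simp [hQdef, he, hj', h1, hne12]
        rw [hval, hj', h1]
        constructor <;> linarith
      · by_cases h2 : i' = i2
        · have hval : (Q t).1 i' j' = p.1 i2 j - t := by
            simp [hQdef, he, hj', h2, Ne.symm hne12, sub_eq_add_neg]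
          rw [hval, hj', h2]
          constructor <;> linarith
        · have hval : (Q t).1 i' j' = p.1 i' j' := by simp [hQdef, he, h1, h2]
          rw [hval]; exact hb i' j'
    · have hval : (Q t).1 i' j' = p.1 i' j' := by simp [hQdef, he, hj']
      rw [hval]; exact hb i' j'
  -- objective change
  have hgQ : ∀ t : ℝ, g (Q t) = g p + t * ((v i1 j : ℝ) - (v i2 j : ℝ)) := by
    intro t
    have : (∑ i', ∑ j', (v i' j' : ℝ) * (Q t).1 i' j')
        = (∑ i', ∑ j', (v i' j' : ℝ) * p.1 i' j') + t * ((v i1 j : ℝ) - (v i2 j : ℝ)) := by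
      rw [← key t (fun i' j' => (v i' j' : ℝ)), ← Finset.sum_add_distrib]
      refine Finset.sum_congr rfl fun i' _ => ?_
      rw [← Finset.sum_add_distrib]
      refine Finset.sum_congr rfl fun j' _ => ?_
      simp [hQdef]; ring
    simp only [hg, hQdef] at this ⊢
    simp only [this]
    ring
  -- secondary objective change
  have hhQ : ∀ t : ℝ, hf (Q t) = hf p + 2 * t * (p.1 i1 j - p.1 i2 j) + 2 * t ^ 2 := by
    intro t
    have : (∑ i', ∑ j', ((Q t).1 i' j') ^ 2)
        = (∑ i', ∑ j', (p.1 i' j') ^ 2) + 2 * (t * (p.1 i1 j - p.1 i2 j)) + 2 * t ^ 2 := by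
      have expand : ∀ i' j', ((Q t).1 i' j') ^ 2
          = (p.1 i' j') ^ 2 + 2 * (p.1 i' j' * e t i' j') + (e t i' j') ^ 2 := by
        intro i' j'; simp only [hQdef]; ring
      calc (∑ i', ∑ j', ((Q t).1 i' j') ^ 2)
          = (∑ i', ∑ j', ((p.1 i' j') ^ 2 + 2 * (p.1 i' j' * e t i' j') + (e t i' j') ^ 2)) := by
            exact Finset.sum_congr rfl fun i' _ => Finset.sum_congr rfl fun j' _ => expand i' j'
        _ = (∑ i', ∑ j', (p.1 i' j') ^ 2) + 2 * (∑ i', ∑ j', p.1 i' j' * e t i' j')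
              + (∑ i', ∑ j', (e t i' j') ^ 2) := by
            simp only [Finset.sum_add_distrib, Finset.mul_sum]
        _ = _ := by rw [key t p.1, key2 t]
    simp only [hh, this]
    ring
  -- equal costs
  have hv : (v i1 j : ℝ) = (v i2 j : ℝ) := by
    have h1 := hpopt _ (hmem ε (by rw [abs_of_pos hεpos]))
    have h2 := hpopt _ (hmem (-ε) (by rw [abs_neg, abs_of_pos hεpos]))
    rw [hgQ] at h1 h2
    have h3 : ε * ((v i1 j : ℝ) - (v i2 j : ℝ)) = 0 := by linarith
    rcases mul_eq_zero.mp h3 with h | h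
    · exact absurd h hεpos.ne'
    · linarith
  -- choose direction
  set t : ℝ := if p.1 i2 j ≤ p.1 i1 j then ε else -ε with ht
  have htabs : |t| ≤ ε := by
    rw [ht]; split
    · rw [abs_of_pos hεpos]
    · rw [abs_neg, abs_of_pos hεpos]
  have hQX := hmem t htabs
  have hQO : Q t ∈ O := by
    refine ⟨hQX, ?_⟩
    show g (Q t) ≤ g p₀
    rw [hgQ, hv, sub_self, mul_zero, add_zero, hgp]
  have hle : hf (Q t) ≤ hf p := hpmax hQO
  rw [hhQ] at hle
  have hpos : 0 ≤ t * (p.1 i1 j - p.1 i2 j) := by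
    rw [ht]; split
    · next hcase => exact mul_nonneg hεpos.le (sub_nonneg.mpr hcase)
    · next hcase =>
        have hab := lt_of_not_ge hcase
        have h0 : 0 ≤ ε * (p.1 i2 j - p.1 i1 j) :=
          mul_nonneg hεpos.le (sub_nonneg.mpr hab.le)
        nlinarith
  have ht2 : 0 < t ^ 2 := by
    rw [ht]; split <;> nlinarith [hεpos]
  linarith
end

section
/- Let δ > 0 be a real number, let σ be a real number with 0 ≤ σ ≤ 1, and let ν be a positive integer with ν ≥ ⌈δ − σ⌉. Define Y = {(α, ψ) ∈ ℝ_{≥0} × {0,1}^ν : α + Σ_{i=1}^ν ψ_i ≥ δ and α ≤ σ}. Then the convex hull of Y equals the set of all (α, ψ) ∈ ℝ × ℝ^ν satisfying: 0 ≤ α ≤ σ; 0 ≤ ψ_i ≤ 1 for all i ∈ [ν]; α + Σ_i ψ_i ≥ δ; Σ_i ψ_i ≥ ⌈δ − σ⌉; and α ≥ (δ − ⌊δ⌋) · (⌈δ⌉ − Σ_i ψ_i). -/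
/-!
The right-hand side `P` (`coverPolytope`) is a compact convex polytope, so by Krein–Milman it is
the closed convex hull of its extreme points; these turn out to be finitely many, and it
suffices that each lies in `Y`. At an extreme point two fractional coordinates `ψ i`, `ψ j`
could be traded against each other, so at most one coordinate `ψ i` is fractional, and then
`∑ ψ` is not an integer. In the plane of `(α, ψ i)` an extreme point needs two independent tight
constraints among `α = 0`, `α = σ`, `α + ∑ ψ = δ` and `α = fract δ * (⌈δ⌉ - ∑ ψ)`, and every
such pair forces `∑ ψ ∈ ℤ` (for `α = σ` this uses `σ ≤ 1`).
-/

open Set Filter Topology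

theorem eq_zero_of_mem_extremePoints_of_eventually_add_smul_mem {E : Type*} [AddCommGroup E]
    [Module ℝ E] {s : Set E} {p v : E} (hp : p ∈ s.extremePoints ℝ)
    (h : ∀ᶠ t in 𝓝 (0 : ℝ), p + t • v ∈ s) : v = 0 := by
  obtain ⟨ε, hε, hball⟩ := Metric.eventually_nhds_iff.1 h
  have hmem : ∀ t, |t| < ε → p + t • v ∈ s := fun t ht => hball (by simpa using ht)
  have hseg : p ∈ openSegment ℝ (p + (-(ε / 2)) • v) (p + (ε / 2) • v) :=
    ⟨1 / 2, 1 / 2, by norm_num, by norm_num, by norm_num, by module⟩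
  have hneg := hp.2 (hmem _ (by rw [abs_neg, abs_of_pos (half_pos hε)]; linarith))
    (hmem _ (by rw [abs_of_pos (half_pos hε)]; linarith)) hseg
  simpa [hε.ne'] using hneg

theorem eventually_nonneg_add_mul {c d : ℝ} (hc : 0 ≤ c) (h : 0 < c ∨ d = 0) :
    ∀ᶠ t in 𝓝 (0 : ℝ), 0 ≤ c + t * d := by
  rcases h with hc | rfl
  · have hcont : Continuous fun t : ℝ => c + t * d := by fun_prop
    have hlim : Tendsto (fun t : ℝ => c + t * d) (𝓝 0) (𝓝 c) := by
      simpa using hcont.tendsto 0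
    exact (hlim.eventually (lt_mem_nhds hc)).mono fun _ => le_of_lt
  · simp [hc]

theorem exists_sum_eq_natCast {ι : Type*} {s : Finset ι} {ψ : ι → ℝ}
    (h : ∀ j ∈ s, ψ j = 0 ∨ ψ j = 1) : ∃ n : ℕ, ∑ j ∈ s, ψ j = n := by
  classical
  refine ⟨(s.filter (ψ · = 1)).card, ?_⟩
  rw [Finset.natCast_card_filter]
  refine Finset.sum_congr rfl fun j hj => ?_
  rcases h j hj with h0 | h1 <;> simp [*]

theorem sum_ne_intCast_of_unique_fractional {ι : Type*} [Fintype ι] {ψ : ι → ℝ} {i : ι}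
    (h : ∀ j ≠ i, ψ j = 0 ∨ ψ j = 1) (hi : ψ i ∈ Ioo 0 1) (m : ℤ) : ∑ j, ψ j ≠ m := by
  classical
  obtain ⟨n, hn⟩ := exists_sum_eq_natCast (s := Finset.univ.erase i) (ψ := ψ)
    fun j hj => h j (Finset.ne_of_mem_erase hj)
  intro hm
  rw [← Finset.add_sum_erase _ _ (Finset.mem_univ i), hn] at hm
  have h0 : (0 : ℝ) < ((m - n : ℤ) : ℝ) := by push_cast; linarith [hi.1]
  have h1 : ((m - n : ℤ) : ℝ) < 1 := by push_cast; linarith [hi.2]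
  norm_cast at h0 h1
  omega

theorem fract_mul_ceil_sub_le {δ α : ℝ} {k : ℤ} (hα : 0 ≤ α) (h : δ ≤ α + k) :
    Int.fract δ * (⌈δ⌉ - k) ≤ α := by
  rcases le_or_gt ⌈δ⌉ k with hk | hk
  · have : (⌈δ⌉ : ℝ) - k ≤ 0 := by rw [sub_nonpos]; exact_mod_cast hk
    nlinarith [Int.fract_nonneg δ]
  · have hk' : (k : ℝ) + 1 ≤ ⌈δ⌉ := by exact_mod_cast hk
    rcases Int.fract_eq_zero_or_add_one_sub_ceil δ with h0 | h1
    · simp [h0, hα]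
    · nlinarith [Int.fract_lt_one δ]

theorem fract_mul_ceil_sub_ne_of_add_eq {α S δ : ℝ} (hS : ∀ m : ℤ, S ≠ m) (hL : α + S = δ) :
    Int.fract δ * (⌈δ⌉ - S) ≠ α := by
  intro hF
  rcases Int.fract_eq_zero_or_add_one_sub_ceil δ with h0 | h1
  · rw [h0, zero_mul] at hF
    rw [← Int.self_sub_floor] at h0
    exact hS ⌊δ⌋ (by linarith)
  · have hprod : (δ - ⌈δ⌉) * (⌈δ⌉ - S - 1) = 0 := by
      rw [h1] at hF; linear_combination hF + hL
    rcases mul_eq_zero.1 hprod with h | h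
    · linarith [Int.fract_lt_one δ]
    · exact hS (⌈δ⌉ - 1) (by push_cast; linarith)

theorem ne_zero_of_add_eq_of_fract_mul_ceil_sub_le {α S δ : ℝ} (hS : ∀ m : ℤ, S ≠ m)
    (hL : α + S = δ) (hF : Int.fract δ * (⌈δ⌉ - S) ≤ α) : α ≠ 0 := by
  rintro rfl
  rw [zero_add] at hL
  subst hL
  have hzero : Int.fract S * (⌈S⌉ - S) = 0 :=
    le_antisymm hF (mul_nonneg (Int.fract_nonneg S) (sub_nonneg.2 (Int.le_ceil S)))
  rcases mul_eq_zero.1 hzero with h | h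
  · exact hS ⌊S⌋ (by rw [← Int.self_sub_floor] at h; linarith)
  · exact hS ⌈S⌉ (by linarith)

theorem fract_mul_ceil_sub_ne_of_ceil_sub_le {S δ σ : ℝ} (hσ₀ : 0 ≤ σ) (hσ₁ : σ ≤ 1)
    (hS : ∀ m : ℤ, S ≠ m) (h₅ : (⌈δ - σ⌉ : ℝ) ≤ S) (hf : Int.fract δ ≠ 0) :
    Int.fract δ * (⌈δ⌉ - S) ≠ σ := by
  intro hF
  have hf₀ : 0 < Int.fract δ := lt_of_le_of_ne (Int.fract_nonneg δ) hf.symm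
  have hf₁ : Int.fract δ = δ + 1 - ⌈δ⌉ :=
    (Int.fract_eq_zero_or_add_one_sub_ceil δ).resolve_left hf
  have hceil : ⌈δ⌉ - 1 ≤ ⌈δ - σ⌉ := Int.ceil_sub_one δ ▸ Int.ceil_mono (by linarith)
  have hlow : (⌈δ⌉ : ℝ) - 1 < S := by
    refine lt_of_le_of_ne (le_trans (by exact_mod_cast hceil) h₅) fun h => hS (⌈δ⌉ - 1) ?_
    push_cast; linarith
  have hgap : 0 < (⌈δ⌉ : ℝ) - S := by
    refine lt_of_le_of_ne (by nlinarith) fun h => hS ⌈δ⌉ (by linarith)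
  have hσf : σ < Int.fract δ := by nlinarith
  have hup : ⌈δ⌉ - 1 < ⌈δ - σ⌉ := Int.lt_ceil.2 (by push_cast; linarith)
  have hS' : (⌈δ⌉ : ℝ) ≤ S := le_trans (by exact_mod_cast Int.sub_one_lt_iff.1 hup) h₅
  linarith

def coverSet (ν : ℕ) (δ σ : ℝ) : Set (ℝ × (Fin ν → ℝ)) :=
  {p | 0 ≤ p.1 ∧ (∀ i, p.2 i = 0 ∨ p.2 i = 1) ∧ δ ≤ p.1 + ∑ i, p.2 i ∧ p.1 ≤ σ}

def coverPolytope (ν : ℕ) (δ σ : ℝ) : Set (ℝ × (Fin ν → ℝ)) :=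
  {p | 0 ≤ p.1 ∧ p.1 ≤ σ ∧ (∀ i, 0 ≤ p.2 i ∧ p.2 i ≤ 1) ∧ δ ≤ p.1 + ∑ i, p.2 i ∧
    (⌈δ - σ⌉ : ℝ) ≤ ∑ i, p.2 i ∧ Int.fract δ * (⌈δ⌉ - ∑ i, p.2 i) ≤ p.1}

section

variable {ν : ℕ} {δ σ : ℝ} {p : ℝ × (Fin ν → ℝ)}

theorem coverSet_subset_coverPolytope : coverSet ν δ σ ⊆ coverPolytope ν δ σ := by
  rintro p ⟨h₀, hψ, hδ, hσ⟩
  obtain ⟨n, hn⟩ := exists_sum_eq_natCast (s := Finset.univ) fun i _ => hψ i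
  refine ⟨h₀, hσ, fun i => by rcases hψ i with h | h <;> simp [h], hδ, ?_, ?_⟩ <;>
    rw [hn] at hδ ⊢
  · exact_mod_cast Int.ceil_le.2 (by push_cast; linarith)
  · exact_mod_cast fract_mul_ceil_sub_le (k := n) h₀ (by exact_mod_cast hδ)

theorem coverSet_eq_inter :
    coverSet ν δ σ = coverPolytope ν δ σ ∩ {p | ∀ i, p.2 i = 0 ∨ p.2 i = 1} := by
  refine subset_antisymm (fun p hp => ⟨coverSet_subset_coverPolytope hp, hp.2.1⟩) ?_
  rintro p ⟨⟨h₀, hσ, -, hδ, -, -⟩, hψ⟩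
  exact ⟨h₀, hψ, hδ, hσ⟩

theorem convex_coverPolytope : Convex ℝ (coverPolytope ν δ σ) := by
  rintro x ⟨hx₁, hx₂, hx₃, hx₄, hx₅, hx₆⟩ y ⟨hy₁, hy₂, hy₃, hy₄, hy₅, hy₆⟩ a b ha hb hab
  obtain rfl : b = 1 - a := by linarith
  have h₁ : (a • x + (1 - a) • y).1 = a * x.1 + (1 - a) * y.1 := rfl
  have h₂ : ∀ k, (a • x + (1 - a) • y).2 k = a * x.2 k + (1 - a) * y.2 k := fun k => rfl
  have hsum :
      ∑ k, (a * x.2 k + (1 - a) * y.2 k) = a * ∑ k, x.2 k + (1 - a) * ∑ k, y.2 k := by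
    simp only [Finset.sum_add_distrib, Finset.mul_sum]
  refine ⟨?_, ?_, fun k => ?_, ?_, ?_, ?_⟩ <;> simp only [h₁, h₂, hsum]
  · positivity
  · nlinarith
  · constructor <;> nlinarith [hx₃ k, hy₃ k]
  · nlinarith [mul_le_mul_of_nonneg_left hx₄ ha, mul_le_mul_of_nonneg_left hy₄ hb]
  · nlinarith [mul_le_mul_of_nonneg_left hx₅ ha, mul_le_mul_of_nonneg_left hy₅ hb]
  · nlinarith [mul_le_mul_of_nonneg_left hx₆ ha, mul_le_mul_of_nonneg_left hy₆ hb]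

theorem isCompact_coverPolytope : IsCompact (coverPolytope ν δ σ) := by
  have hbox : coverPolytope ν δ σ ⊆ Icc 0 σ ×ˢ univ.pi fun _ => Icc 0 1 :=
    fun p hp => ⟨⟨hp.1, hp.2.1⟩, fun k _ => hp.2.2.1 k⟩
  refine (isCompact_Icc.prod (isCompact_univ_pi fun _ => isCompact_Icc)).of_isClosed_subset ?_
    hbox
  simp only [coverPolytope, ofPred_and, ofPred_forall]
  refine .inter ?_ (.inter ?_ (.inter (isClosed_iInter fun i => .inter ?_ ?_)
    (.inter ?_ (.inter ?_ ?_))))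
    <;> exact isClosed_le (by fun_prop) (by fun_prop)

theorem eventually_add_smul_mem_coverPolytope (hp : p ∈ coverPolytope ν δ σ) {a : ℝ}
    {w : Fin ν → ℝ} (h₁ : 0 < p.1 ∨ a = 0) (h₂ : p.1 < σ ∨ a = 0)
    (h₃ : ∀ k, p.2 k ∈ Ioo 0 1 ∨ w k = 0)
    (h₄ : δ < p.1 + ∑ k, p.2 k ∨ a + ∑ k, w k = 0)
    (h₅ : (⌈δ - σ⌉ : ℝ) < ∑ k, p.2 k ∨ ∑ k, w k = 0)
    (h₆ : Int.fract δ * (⌈δ⌉ - ∑ k, p.2 k) < p.1 ∨ a + Int.fract δ * ∑ k, w k = 0) :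
    ∀ᶠ t in 𝓝 (0 : ℝ), p + t • (a, w) ∈ coverPolytope ν δ σ := by
  obtain ⟨hp₁, hp₂, hp₃, hp₄, hp₅, hp₆⟩ := hp
  have e₁ := eventually_nonneg_add_mul hp₁ h₁
  have e₂ := eventually_nonneg_add_mul (d := -a) (sub_nonneg.2 hp₂)
    (h₂.imp sub_pos.2 neg_eq_zero.2)
  have e₃ : ∀ k, ∀ᶠ t in 𝓝 (0 : ℝ), 0 ≤ p.2 k + t * w k ∧ 0 ≤ (1 - p.2 k) + t * -w k :=
    fun k => (eventually_nonneg_add_mul (hp₃ k).1 ((h₃ k).imp (·.1) id)).and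
      (eventually_nonneg_add_mul (sub_nonneg.2 (hp₃ k).2)
        ((h₃ k).imp (sub_pos.2 ·.2) neg_eq_zero.2))
  have e₄ := eventually_nonneg_add_mul (sub_nonneg.2 hp₄) (h₄.imp sub_pos.2 id)
  have e₅ := eventually_nonneg_add_mul (sub_nonneg.2 hp₅) (h₅.imp sub_pos.2 id)
  have e₆ := eventually_nonneg_add_mul (sub_nonneg.2 hp₆) (h₆.imp sub_pos.2 id)
  filter_upwards [e₁, e₂, eventually_all.2 e₃, e₄, e₅, e₆] with t t₁ t₂ t₃ t₄ t₅ t₆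
  have h₁ : (p + t • (a, w)).1 = p.1 + t * a := rfl
  have h₂ : ∀ k, (p + t • (a, w)).2 k = p.2 k + t * w k := fun k => rfl
  have hsum : ∑ k, (p.2 k + t * w k) = ∑ k, p.2 k + t * ∑ k, w k := by
    simp only [Finset.sum_add_distrib, Finset.mul_sum]
  refine ⟨?_, ?_, fun k => ?_, ?_, ?_, ?_⟩ <;> simp only [h₁, h₂, hsum]
  · linarith
  · linarith
  · constructor <;> linarith [t₃ k]
  all_goals linarith

theorem eq_of_mem_Ioo_of_mem_extremePoints_coverPolytope
    (hp : p ∈ (coverPolytope ν δ σ).extremePoints ℝ) {i j : Fin ν}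
    (hi : p.2 i ∈ Ioo 0 1) (hj : p.2 j ∈ Ioo 0 1) : i = j := by
  by_contra hij
  set w : Fin ν → ℝ := Pi.single i 1 - Pi.single j 1
  have hw : ∀ k, p.2 k ∈ Ioo 0 1 ∨ w k = 0 := by
    intro k
    by_cases hki : k = i
    · exact Or.inl (hki ▸ hi)
    by_cases hkj : k = j
    · exact Or.inl (hkj ▸ hj)
    · simp [w, hki, hkj]
  have hsum : ∑ k, w k = 0 := by simp [w]
  have hzero := eq_zero_of_mem_extremePoints_of_eventually_add_smul_mem hp
    (eventually_add_smul_mem_coverPolytope (a := 0) hp.1 (Or.inr rfl) (Or.inr rfl) hw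
      (Or.inr (by simp [hsum])) (Or.inr hsum) (Or.inr (by simp [hsum])))
  simpa [w, hij] using congr_fun (congr_arg Prod.snd hzero) i

theorem fst_eq_of_mem_extremePoints_coverPolytope
    (hp : p ∈ (coverPolytope ν δ σ).extremePoints ℝ) :
    p.1 = 0 ∨ p.1 = σ ∨ p.1 = δ - ∑ k, p.2 k ∨ p.1 = Int.fract δ * (⌈δ⌉ - ∑ k, p.2 k) := by
  obtain ⟨hp₁, hp₂, -, hp₄, -, hp₆⟩ := hp.1
  by_contra! h
  obtain ⟨h₁, h₂, h₄, h₆⟩ := h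
  have hzero := eq_zero_of_mem_extremePoints_of_eventually_add_smul_mem hp
    (eventually_add_smul_mem_coverPolytope (a := 1) (w := 0) hp.1
      (Or.inl (lt_of_le_of_ne hp₁ (Ne.symm h₁))) (Or.inl (lt_of_le_of_ne hp₂ h₂))
      (fun _ => Or.inr rfl) (Or.inl (lt_of_le_of_ne hp₄ fun h => h₄ (by linarith)))
      (Or.inr (by simp)) (Or.inl (lt_of_le_of_ne hp₆ (Ne.symm h₆))))
  simp at hzero

theorem exists_sum_eq_intCast_of_mem_extremePoints_coverPolytope (hσ₁ : σ ≤ 1)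
    (hp : p ∈ (coverPolytope ν δ σ).extremePoints ℝ) {i : Fin ν} (hi : p.2 i ∈ Ioo 0 1) :
    ∃ m : ℤ, ∑ k, p.2 k = m := by
  by_contra! hS
  obtain ⟨hp₁, hp₂, -, hp₄, hp₅, hp₆⟩ := hp.1
  set S := ∑ k, p.2 k
  have h₅ : (⌈δ - σ⌉ : ℝ) < S := lt_of_le_of_ne hp₅ (hS _).symm
  have stuck : ∀ a b : ℝ, b ≠ 0 → (0 < p.1 ∨ a = 0) → (p.1 < σ ∨ a = 0) →
      (δ < p.1 + S ∨ a + b = 0) →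
      (Int.fract δ * (⌈δ⌉ - S) < p.1 ∨ a + Int.fract δ * b = 0) → False := by
    intro a b hb h₁ h₂ h₄ h₆
    have hw : ∀ k, p.2 k ∈ Ioo 0 1 ∨ (Pi.single i b : Fin ν → ℝ) k = 0 := by
      intro k
      by_cases hk : k = i
      · exact Or.inl (hk ▸ hi)
      · simp [hk]
    have hzero := eq_zero_of_mem_extremePoints_of_eventually_add_smul_mem hp
      (eventually_add_smul_mem_coverPolytope hp.1 h₁ h₂ hw (by simpa using h₄) (Or.inl h₅)
        (by simpa using h₆))
    exact hb (by simpa using congr_fun (congr_arg Prod.snd hzero) i)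
  -- In each case the direction `(a, b • eᵢ)` is parallel to the one constraint that may be tight.
  by_cases hL : p.1 + S = δ
  · refine stuck 1 (-1) (by norm_num) (Or.inl ?_) (Or.inl ?_) (Or.inr (by ring)) (Or.inl ?_)
    · exact lt_of_le_of_ne hp₁ (ne_zero_of_add_eq_of_fract_mul_ceil_sub_le hS hL hp₆).symm
    · exact lt_of_le_of_ne hp₂ fun h => by linarith [Int.le_ceil (δ - σ)]
    · exact lt_of_le_of_ne hp₆ (fract_mul_ceil_sub_ne_of_add_eq hS hL)
  have h₄ : δ < p.1 + S := lt_of_le_of_ne hp₄ (Ne.symm hL)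
  by_cases hF : Int.fract δ * (⌈δ⌉ - S) = p.1 ∧ Int.fract δ ≠ 0
  · obtain ⟨hF, hf⟩ := hF
    refine stuck (Int.fract δ) (-1) (by norm_num) (Or.inl ?_) (Or.inl ?_) (Or.inl h₄)
      (Or.inr (by ring))
    · refine lt_of_le_of_ne hp₁ fun h => hS ⌈δ⌉ ?_
      rcases mul_eq_zero.1 (hF.trans h.symm) with h | h
      · exact absurd h hf
      · linarith
    · exact lt_of_le_of_ne hp₂ fun h =>
        fract_mul_ceil_sub_ne_of_ceil_sub_le (hp₁.trans hp₂) hσ₁ hS hp₅ hf (hF.trans h)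
  · refine stuck 0 1 one_ne_zero (Or.inr rfl) (Or.inr rfl) (Or.inl h₄) ?_
    rcases not_and_or.1 hF with hF | hf
    · exact Or.inl (lt_of_le_of_ne hp₆ hF)
    · exact Or.inr (by simp [not_not.1 hf])

theorem extremePoints_coverPolytope_subset_coverSet (hσ₁ : σ ≤ 1) :
    (coverPolytope ν δ σ).extremePoints ℝ ⊆ coverSet ν δ σ := by
  intro p hp
  rw [coverSet_eq_inter]
  refine ⟨hp.1, fun i => ?_⟩
  by_contra! hi
  have hfrac : ∀ j, p.2 j ≠ 0 → p.2 j ≠ 1 → p.2 j ∈ Ioo 0 1 := fun j h₀ h₁ =>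
    ⟨lt_of_le_of_ne (hp.1.2.2.1 j).1 (Ne.symm h₀), lt_of_le_of_ne (hp.1.2.2.1 j).2 h₁⟩
  have hi' := hfrac i hi.1 hi.2
  have hbinary : ∀ j ≠ i, p.2 j = 0 ∨ p.2 j = 1 := fun j hj => by
    by_contra! h
    exact hj (eq_of_mem_Ioo_of_mem_extremePoints_coverPolytope hp (hfrac j h.1 h.2) hi')
  obtain ⟨m, hm⟩ := exists_sum_eq_intCast_of_mem_extremePoints_coverPolytope hσ₁ hp hi'
  exact sum_ne_intCast_of_unique_fractional hbinary hi' m hm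

theorem finite_extremePoints_coverPolytope (hσ₁ : σ ≤ 1) :
    ((coverPolytope ν δ σ).extremePoints ℝ).Finite := by
  set F : Set (Fin ν → ℝ) := univ.pi fun _ => {0, 1}
  have hF : F.Finite := Finite.pi fun _ => toFinite _
  set A : Set ℝ := {0, σ} ∪ (fun ψ => δ - ∑ k, ψ k) '' F ∪
    (fun ψ => Int.fract δ * (⌈δ⌉ - ∑ k, ψ k)) '' F
  have hA : A.Finite := ((toFinite _).union (hF.image _)).union (hF.image _)
  refine (hA.prod hF).subset fun p hp => ?_
  have hψ : p.2 ∈ F := fun k _ => (extremePoints_coverPolytope_subset_coverSet hσ₁ hp).2.1 k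
  refine ⟨?_, hψ⟩
  rcases fst_eq_of_mem_extremePoints_coverPolytope hp with h | h | h | h
  · exact Or.inl (Or.inl (Or.inl h))
  · exact Or.inl (Or.inl (Or.inr h))
  · exact Or.inl (Or.inr ⟨p.2, hψ, h.symm⟩)
  · exact Or.inr ⟨p.2, hψ, h.symm⟩

end

theorem stmt12_general
    (ν : ℕ) (δ σ : ℝ) (hσ1 : σ ≤ 1) :
    convexHull ℝ
      {p : ℝ × (Fin ν → ℝ) | 0 ≤ p.1 ∧ (∀ i, p.2 i = 0 ∨ p.2 i = 1) ∧
        δ ≤ p.1 + ∑ i, p.2 i ∧ p.1 ≤ σ} =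
    {p : ℝ × (Fin ν → ℝ) | 0 ≤ p.1 ∧ p.1 ≤ σ ∧ (∀ i, 0 ≤ p.2 i ∧ p.2 i ≤ 1) ∧
      δ ≤ p.1 + (∑ i, p.2 i) ∧
      (⌈δ - σ⌉ : ℝ) ≤ (∑ i, p.2 i) ∧
      (δ - ⌊δ⌋) * ((⌈δ⌉ : ℝ) - ∑ i, p.2 i) ≤ p.1} := by
  change convexHull ℝ (coverSet ν δ σ) = coverPolytope ν δ σ
  refine subset_antisymm (convexHull_min coverSet_subset_coverPolytope convex_coverPolytope) ?_
  calc coverPolytope ν δ σ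
      = closure (convexHull ℝ ((coverPolytope ν δ σ).extremePoints ℝ)) :=
        (closure_convexHull_extremePoints isCompact_coverPolytope convex_coverPolytope).symm
    _ = convexHull ℝ ((coverPolytope ν δ σ).extremePoints ℝ) :=
        ((finite_extremePoints_coverPolytope hσ1).isClosed_convexHull ℝ).closure_eq
    _ ⊆ convexHull ℝ (coverSet ν δ σ) :=
        convexHull_mono (extremePoints_coverPolytope_subset_coverSet hσ1)

/-- (Lemma 2 of the paper.) Description of the convex hull of
`Y = {(α, ψ) ∈ ℝ_{≥0} × {0,1}^ν : α + Σ ψ_i ≥ δ, α ≤ σ}`. -/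
theorem stmt12
    (ν : ℕ) (hν : 0 < ν) (δ σ : ℝ) (hδ : 0 < δ) (hσ0 : 0 ≤ σ) (hσ1 : σ ≤ 1)
    (hν' : ⌈δ - σ⌉ ≤ (ν : ℤ)) :
    convexHull ℝ
      {p : ℝ × (Fin ν → ℝ) | 0 ≤ p.1 ∧ (∀ i, p.2 i = 0 ∨ p.2 i = 1) ∧
        δ ≤ p.1 + ∑ i, p.2 i ∧ p.1 ≤ σ} =
    {p : ℝ × (Fin ν → ℝ) | 0 ≤ p.1 ∧ p.1 ≤ σ ∧ (∀ i, 0 ≤ p.2 i ∧ p.2 i ≤ 1) ∧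
      δ ≤ p.1 + (∑ i, p.2 i) ∧
      (⌈δ - σ⌉ : ℝ) ≤ (∑ i, p.2 i) ∧
      (δ - ⌊δ⌋) * ((⌈δ⌉ : ℝ) - ∑ i, p.2 i) ≤ p.1} :=
  stmt12_general ν δ σ hσ1
end

section
/- Let ℓ, c, D be integers with 0 ≤ ℓ < c and D > ℓ, let ν be a positive integer with ν ≥ ⌈(D − c)/c⌉, and set δ = (D − ℓ)/c. Then the convex hull of the set {(x, y) ∈ ℝ × {0,1}^ν : x + c · Σ_{i=1}^ν y_i ≥ D and ℓ ≤ x ≤ c} equals the set of all (x, y) ∈ ℝ × ℝ^ν satisfying: ℓ ≤ x ≤ c; 0 ≤ y_i ≤ 1 for all i; x + c Σ_i y_i ≥ D; Σ_i y_i ≥ ⌈(D − c)/c⌉; and x ≥ ℓ + c · (δ − ⌊δ⌋) · (⌈δ⌉ − Σ_i y_i). -/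
/-!
Every inequality is valid on the binary points, and the polytope is convex. Conversely, let
`(x, y)` lie in the polytope and put `s = ∑ yᵢ`. By Krein–Milman, `y` is a convex combination of
0/1-vectors with coordinate sum `⌊s⌋` or `⌈s⌉`, because an extreme point of
`{y ∈ [0,1]^ν : ∑ yᵢ = s}` has at most one fractional coordinate. Above a 0/1-vector `z` the
smallest feasible `x` is `ℓ + c · max 0 (δ - ∑ zᵢ)`, and on `{⌊s⌋, ⌈s⌉}` this is an affine function
of `∑ zᵢ` whose value at `s` is at most the last lower bound of the polytope. Lifting the
combination along that affine function and along the constant `c` puts two points above `y` into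
the convex hull, and `x` lies between them.
-/

open Finset

section Rounding

variable {ι : Type*} [Fintype ι]

def binaryRoundings (s : ℝ) : Set (ι → ℝ) :=
  {z | (∀ i, z i = 0 ∨ z i = 1) ∧ (∑ i, z i = ⌊s⌋ ∨ ∑ i, z i = ⌈s⌉)}

def unitCubeSlice (s : ℝ) : Set (ι → ℝ) :=
  Set.univ.pi (fun _ => Set.Icc 0 1) ∩ {y | ∑ i, y i = s}

lemma sum_eq_card_of_binary {z : ι → ℝ} (hz : ∀ i, z i = 0 ∨ z i = 1) :
    ∑ i, z i = #{i | z i = 1} := by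
  classical
  rw [← Finset.sum_boole]
  refine Finset.sum_congr rfl fun i _ => ?_
  rcases hz i with h | h <;> simp [h]

lemma finite_binaryRoundings (s : ℝ) : (binaryRoundings s : Set (ι → ℝ)).Finite :=
  (Set.Finite.pi fun _ => Set.toFinite {0, 1}).subset fun _ hz i _ => hz.1 i

lemma isCompact_unitCubeSlice (s : ℝ) : IsCompact (unitCubeSlice s : Set (ι → ℝ)) :=
  (isCompact_univ_pi fun _ => isCompact_Icc).inter_right <|
    isClosed_eq (continuous_finsetSum _ fun i _ => continuous_apply i) continuous_const

lemma convex_unitCubeSlice (s : ℝ) : Convex ℝ (unitCubeSlice s : Set (ι → ℝ)) :=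
  (convex_pi fun _ _ => convex_Icc 0 1).inter <|
    convex_hyperplane ⟨fun _ _ => Finset.sum_add_distrib, fun _ _ => by simp [Finset.mul_sum]⟩ s

lemma add_smul_single_sub_single_mem_unitCubeSlice [DecidableEq ι] {s : ℝ} {y : ι → ℝ}
    (hy : y ∈ unitCubeSlice s) {i j : ι} (hij : i ≠ j) {t : ℝ}
    (hi : y i + t ∈ Set.Icc 0 1) (hj : y j - t ∈ Set.Icc 0 1) :
    y + t • (Pi.single i 1 - Pi.single j 1) ∈ unitCubeSlice s := by
  obtain ⟨hbox, hsum⟩ := hy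
  refine ⟨fun k _ => ?_, ?_⟩
  · rcases eq_or_ne k i with rfl | hki
    · simpa [hij] using hi
    rcases eq_or_ne k j with rfl | hkj
    · simpa [hki, sub_eq_add_neg] using hj
    · simpa [hki, hkj] using hbox k (Set.mem_univ k)
  · simpa [Finset.sum_add_distrib, ← Finset.mul_sum, Finset.sum_sub_distrib] using hsum

lemma binary_or_binary_of_mem_extremePoints {s : ℝ} {y : ι → ℝ}
    (hy : y ∈ (unitCubeSlice s).extremePoints ℝ) {i j : ι} (hij : i ≠ j) :
    (y i = 0 ∨ y i = 1) ∨ (y j = 0 ∨ y j = 1) := by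
  classical
  by_contra! h
  obtain ⟨⟨hi0, hi1⟩, hj0, hj1⟩ := h
  have hbox := hy.1.1
  have hyi := hbox i (Set.mem_univ i)
  have hyj := hbox j (Set.mem_univ j)
  set ε := min (min (y i) (1 - y i)) (min (y j) (1 - y j))
  have hε : 0 < ε := by
    simp only [ε, lt_min_iff, sub_pos]
    exact ⟨⟨hyi.1.lt_of_ne' hi0, hyi.2.lt_of_ne hi1⟩, hyj.1.lt_of_ne' hj0, hyj.2.lt_of_ne hj1⟩
  have hε₁ : ε ≤ y i ∧ ε ≤ 1 - y i ∧ ε ≤ y j ∧ ε ≤ 1 - y j := by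
    simp only [ε, min_le_iff, le_refl, true_or, or_true, and_self]
  have hperturb (t : ℝ) (ht : |t| ≤ ε) :
      y + t • (Pi.single i 1 - Pi.single j 1) ∈ unitCubeSlice s := by
    rw [abs_le] at ht
    exact add_smul_single_sub_single_mem_unitCubeSlice hy.1 hij
      ⟨by linarith, by linarith⟩ ⟨by linarith, by linarith⟩
  have hleft := (mem_extremePoints_iff_left.1 hy).2 _ (by
      simpa only [neg_smul, ← sub_eq_add_neg] using hperturb (-ε) (by simp [abs_of_pos hε]))
    _ (hperturb ε (by simp [abs_of_pos hε])) (mem_openSegment_sub_add y _)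
  have := congrFun hleft i
  simp [hij] at this
  linarith

lemma mem_binaryRoundings_of_binary {z : ι → ℝ} (hz : ∀ i, z i = 0 ∨ z i = 1) :
    z ∈ binaryRoundings (∑ i, z i) :=
  ⟨hz, Or.inl (by rw [sum_eq_card_of_binary hz, Int.floor_natCast, Int.cast_natCast])⟩

lemma mem_convexHull_binaryRoundings_of_single_fractional {y : ι → ℝ} {i : ι}
    (hbin : ∀ k ≠ i, y k = 0 ∨ y k = 1) (hi : y i ∈ Set.Ioo 0 1) :
    y ∈ convexHull ℝ (binaryRoundings (∑ k, y k)) := by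
  classical
  have hupd {t : ℝ} (ht : t = 0 ∨ t = 1) (k : ι) :
      Function.update y i t k = 0 ∨ Function.update y i t k = 1 := by
    rcases eq_or_ne k i with rfl | hk
    · simpa using ht
    · simpa [hk] using hbin k hk
  have hsum (t : ℝ) : ∑ k, Function.update y i t k = t + ∑ k ∈ univ \ {i}, y k :=
    Finset.sum_update_of_mem (mem_univ i) y t
  obtain ⟨m, hm⟩ : ∃ m : ℕ, ∑ k ∈ univ \ {i}, y k = m :=
    ⟨_, by simpa [hsum] using sum_eq_card_of_binary (hupd (Or.inl rfl))⟩
  have hy : ∑ k, y k = m + y i := by simpa [hm, add_comm] using hsum (y i)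
  have hfloor : ⌊∑ k, y k⌋ = m := by
    rw [Int.floor_eq_iff, hy]; push_cast; constructor <;> linarith [hi.1, hi.2]
  have hceil : ⌈∑ k, y k⌉ = m + 1 := by
    rw [Int.ceil_eq_iff, hy]; push_cast; constructor <;> linarith [hi.1, hi.2]
  have h₀ : Function.update y i 0 ∈ binaryRoundings (∑ k, y k) :=
    ⟨hupd (Or.inl rfl), Or.inl (by rw [hsum, hm, hfloor]; simp)⟩
  have h₁ : Function.update y i 1 ∈ binaryRoundings (∑ k, y k) :=
    ⟨hupd (Or.inr rfl), Or.inr (by rw [hsum, hm, hceil]; push_cast; ring)⟩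
  refine segment_subset_convexHull h₀ h₁ ?_
  rw [← Pi.image_update_segment, segment_eq_Icc zero_le_one]
  exact ⟨y i, Set.Ioo_subset_Icc_self hi, Function.update_eq_self i y⟩

theorem mem_convexHull_binaryRoundings {y : ι → ℝ} (hy : ∀ k, y k ∈ Set.Icc 0 1) :
    y ∈ convexHull ℝ (binaryRoundings (∑ k, y k)) := by
  set s := ∑ k, y k
  have hext :
      (unitCubeSlice (ι := ι) s).extremePoints ℝ ⊆ convexHull ℝ (binaryRoundings s) := by
    intro x hx
    obtain ⟨hbox, hxs : ∑ k, x k = s⟩ := hx.1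
    rw [← hxs]
    by_cases hbin : ∀ k, x k = 0 ∨ x k = 1
    · exact subset_convexHull ℝ _ (mem_binaryRoundings_of_binary hbin)
    push Not at hbin
    obtain ⟨i, hi0, hi1⟩ := hbin
    have hxi := hbox i (Set.mem_univ i)
    refine mem_convexHull_binaryRoundings_of_single_fractional (i := i) (fun k hk => ?_)
      ⟨hxi.1.lt_of_ne' hi0, hxi.2.lt_of_ne hi1⟩
    simpa [hi0, hi1] using binary_or_binary_of_mem_extremePoints hx hk
  have hys : y ∈ unitCubeSlice s := ⟨fun k _ => hy k, rfl⟩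
  rw [← closure_convexHull_extremePoints (isCompact_unitCubeSlice s)
    (convex_unitCubeSlice s)] at hys
  rw [← ((finite_binaryRoundings s).isClosed_convexHull ℝ).closure_eq]
  exact closure_mono (convexHull_min hext (convex_convexHull ℝ _)) hys

end Rounding

lemma sub_floor_mul_ceil_sub_le (δ : ℝ) (n : ℤ) :
    (δ - ⌊δ⌋) * (⌈δ⌉ - n) ≤ max 0 (δ - n) := by
  have hfl := Int.floor_le δ
  have hfl' := Int.lt_floor_add_one δ
  rcases le_or_gt ⌈δ⌉ n with h | h
  · have : (⌈δ⌉ : ℝ) ≤ n := by exact_mod_cast h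
    exact (mul_nonpos_of_nonneg_of_nonpos (by linarith) (by linarith)).trans (le_max_left _ _)
  · have hce : (⌈δ⌉ : ℝ) ≤ ⌊δ⌋ + 1 := by exact_mod_cast Int.ceil_le_floor_add_one δ
    have hn : (n : ℝ) ≤ ⌊δ⌋ := by
      exact_mod_cast (show n ≤ ⌊δ⌋ by have := Int.ceil_le_floor_add_one δ; omega)
    refine le_max_of_le_right ?_
    nlinarith

/-- The three affine pieces on the right meet only at integers, so one of them agrees with
`n ↦ max 0 (δ - n)` at both `⌊s⌋` and `⌈s⌉`. -/
lemma exists_affine_eq_max_at_floor_ceil (δ s : ℝ) :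
    ∃ a b : ℝ, a + b * ⌊s⌋ = max 0 (δ - ⌊s⌋) ∧ a + b * ⌈s⌉ = max 0 (δ - ⌈s⌉) ∧
      a + b * s ≤ max (max 0 (δ - s)) ((δ - ⌊δ⌋) * (⌈δ⌉ - s)) := by
  have hfs := Int.floor_le s
  have hcs := Int.le_ceil s
  have hδf := Int.floor_le δ
  have hδc := Int.le_ceil δ
  rcases le_or_gt (⌈δ⌉ : ℝ) s with hs | hs
  · have : (⌈δ⌉ : ℝ) ≤ ⌊s⌋ := by exact_mod_cast Int.le_floor.2 hs
    refine ⟨0, 0, ?_, ?_, ?_⟩ <;> simp only [zero_mul, add_zero]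
    · exact (max_eq_left (by linarith)).symm
    · exact (max_eq_left (by linarith)).symm
    · exact (le_max_left _ _).trans (le_max_left _ _)
  rcases le_or_gt s ⌊δ⌋ with hs' | hs'
  · have : (⌈s⌉ : ℝ) ≤ ⌊δ⌋ := by exact_mod_cast Int.ceil_le.2 hs'
    refine ⟨δ, -1, ?_, ?_, ?_⟩
    · rw [max_eq_right (by linarith)]; ring
    · rw [max_eq_right (by linarith)]; ring
    · exact le_of_eq_of_le (by ring) ((le_max_right _ _).trans (le_max_left _ _))
  have hCF : ⌈δ⌉ = ⌊δ⌋ + 1 := by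
    have : ⌊δ⌋ < ⌈δ⌉ := by exact_mod_cast hs'.trans hs
    have := Int.ceil_le_floor_add_one δ
    omega
  have hCF' : (⌈δ⌉ : ℝ) = ⌊δ⌋ + 1 := by exact_mod_cast hCF
  have hfloor : ⌊s⌋ = ⌊δ⌋ := Int.floor_eq_iff.2 ⟨hs'.le, hCF' ▸ hs⟩
  have hceil : ⌈s⌉ = ⌈δ⌉ := Int.ceil_eq_iff.2 ⟨by linarith, hs.le⟩
  refine ⟨(δ - ⌊δ⌋) * ⌈δ⌉, -(δ - ⌊δ⌋), ?_, ?_, le_of_eq_of_le (by ring) (le_max_right _ _)⟩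
  · rw [hfloor, max_eq_right (by linarith), hCF']; ring
  · rw [hceil, max_eq_left (by linarith), hCF']; ring

lemma mk_mem_convexHull_of_mem_convexHull {𝕜 E F : Type*} [Field 𝕜] [LinearOrder 𝕜]
    [IsStrictOrderedRing 𝕜] [AddCommGroup E] [Module 𝕜 E] [AddCommGroup F] [Module 𝕜 F]
    (φ : E →ᵃ[𝕜] F) {T : Set E} {S : Set (F × E)} (hTS : ∀ z ∈ T, (φ z, z) ∈ S) {y : E}
    (hy : y ∈ convexHull 𝕜 T) : (φ y, y) ∈ convexHull 𝕜 S := by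
  have hgraph := AffineMap.image_convexHull (φ.prod (AffineMap.id 𝕜 E)) T
  exact convexHull_mono (Set.image_subset_iff.2 hTS) (hgraph ▸ ⟨y, hy, rfl⟩)

lemma Convex.mk_mem_of_le_of_le {𝕜 E : Type*} [Field 𝕜] [LinearOrder 𝕜]
    [IsStrictOrderedRing 𝕜] [AddCommGroup E] [Module 𝕜 E] {C : Set (𝕜 × E)} (hC : Convex 𝕜 C)
    {u v x : 𝕜} {y : E} (hu : (u, y) ∈ C) (hv : (v, y) ∈ C) (hux : u ≤ x) (hxv : x ≤ v) :
    (x, y) ∈ C := by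
  refine hC.segment_subset hu hv ?_
  rw [← Prod.image_mk_segment_left, segment_eq_Icc (hux.trans hxv)]
  exact ⟨x, ⟨hux, hxv⟩, rfl⟩

section Covering

variable {ι : Type*} [Fintype ι]

def coveringSet (l c D : ℝ) : Set (ℝ × (ι → ℝ)) :=
  {p | (∀ i, p.2 i = 0 ∨ p.2 i = 1) ∧ D ≤ p.1 + c * ∑ i, p.2 i ∧ l ≤ p.1 ∧ p.1 ≤ c}

def coveringPolytope (l c D δ : ℝ) : Set (ℝ × (ι → ℝ)) :=
  {p | l ≤ p.1 ∧ p.1 ≤ c ∧ (∀ i, 0 ≤ p.2 i ∧ p.2 i ≤ 1) ∧ D ≤ p.1 + c * (∑ i, p.2 i) ∧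
    (⌈(D - c) / c⌉ : ℝ) ≤ (∑ i, p.2 i) ∧ l + c * (δ - ⌊δ⌋) * ((⌈δ⌉ : ℝ) - ∑ i, p.2 i) ≤ p.1}

lemma convex_coveringPolytope {l c D δ : ℝ} :
    Convex ℝ (coveringPolytope (ι := ι) l c D δ) := by
  rintro ⟨x, y⟩ ⟨hlx, hxc, hy, hD, hm, hδ⟩ ⟨x', y'⟩ ⟨hlx', hxc', hy', hD', hm', hδ'⟩ a b ha hb hab
  simp only [coveringPolytope, Set.mem_ofPred_eq, Prod.fst_add, Prod.snd_add, Prod.smul_mk,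
    Pi.add_apply, Pi.smul_apply, smul_eq_mul, Finset.sum_add_distrib, ← Finset.mul_sum] at *
  refine ⟨?_, ?_, fun i => ⟨?_, ?_⟩, ?_, ?_, ?_⟩
  · linear_combination a * hlx + b * hlx' - l * hab
  · linear_combination a * hxc + b * hxc' + c * hab
  · linear_combination a * (hy i).1 + b * (hy' i).1
  · linear_combination a * (hy i).2 + b * (hy' i).2 + hab
  · linear_combination a * hD + b * hD' - D * hab
  · linear_combination a * hm + b * hm' - (⌈(D - c) / c⌉ : ℝ) * hab
  · linear_combination a * hδ + b * hδ' - (l + c * (δ - ⌊δ⌋) * ⌈δ⌉) * hab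

variable {l c D δ : ℝ}

lemma coveringSet_subset_coveringPolytope (hc : 0 < c) (hδ : c * δ = D - l) :
    coveringSet (ι := ι) l c D ⊆ coveringPolytope l c D δ := by
  rintro ⟨x, z⟩ ⟨hz, hD, hlx, hxc⟩
  obtain ⟨n, hn⟩ : ∃ n : ℕ, ∑ i, z i = n := ⟨_, sum_eq_card_of_binary hz⟩
  dsimp only at hz hD hlx hxc
  simp only [coveringPolytope, Set.mem_ofPred_eq, hn] at hD ⊢
  refine ⟨hlx, hxc, fun i => by rcases hz i with h | h <;> simp [h], hD, ?_, ?_⟩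
  · have : ⌈(D - c) / c⌉ ≤ (n : ℤ) :=
      Int.ceil_le.2 (by rw [div_le_iff₀ hc]; push_cast; linarith)
    exact_mod_cast this
  · calc l + c * (δ - ⌊δ⌋) * (⌈δ⌉ - n) = l + c * ((δ - ⌊δ⌋) * (⌈δ⌉ - (n : ℤ))) := by
          push_cast; ring
      _ ≤ l + c * max 0 (δ - (n : ℤ)) := by grw [sub_floor_mul_ceil_sub_le δ n]
      _ ≤ x := by
          rw [mul_max_of_nonneg _ _ hc.le, ← max_add_add_left]
          push_cast
          exact max_le (by linarith) (by linarith)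

lemma coveringPolytope_subset_convexHull (hc : 0 < c) (hlc : l ≤ c) (hδ : c * δ = D - l) :
    coveringPolytope (ι := ι) l c D δ ⊆ convexHull ℝ (coveringSet l c D) := by
  rintro ⟨x, y⟩ ⟨hlx, hxc, hy, hD, hm, hx⟩
  dsimp only at hlx hxc hy hD hm hx
  set s := ∑ i, y i
  have hmax (t : ℝ) : l + c * max 0 (δ - t) = max l (D - c * t) := by
    rw [mul_max_of_nonneg _ _ hc.le, ← max_add_add_left, mul_zero, add_zero,
      show l + c * (δ - t) = D - c * t by linear_combination hδ]
  have hfloor : D - c ≤ c * ⌊s⌋ := by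
    have : (D - c) / c ≤ ⌊s⌋ := (Int.le_ceil _).trans (by exact_mod_cast Int.le_floor.2 hm)
    rwa [div_le_iff₀ hc, mul_comm] at this
  obtain ⟨a, b, hfl, hce, hab⟩ := exists_affine_eq_max_at_floor_ceil δ s
  let φ : (ι → ℝ) →ᵃ[ℝ] ℝ := AffineMap.const ℝ _ (l + c * a) +
    (c * b) • (∑ i, LinearMap.proj i : (ι → ℝ) →ₗ[ℝ] ℝ).toAffineMap
  have hφ (z : ι → ℝ) : φ z = l + c * (a + b * ∑ i, z i) := by simp [φ]; ring
  have hT : ∀ z ∈ binaryRoundings s,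
      (φ z, z) ∈ coveringSet l c D ∧ ((c : ℝ), z) ∈ coveringSet l c D := by
    rintro z ⟨hz, hn⟩
    obtain ⟨n, hn, hφn, hcn⟩ :
        ∃ n : ℤ, ∑ i, z i = n ∧ φ z = max l (D - c * n) ∧ D - c ≤ c * n := by
      rcases hn with hn | hn
      · exact ⟨_, hn, by rw [hφ, hn, hfl, hmax], hfloor⟩
      · refine ⟨_, hn, by rw [hφ, hn, hce, hmax], hfloor.trans ?_⟩
        gcongr; exact_mod_cast Int.floor_le_ceil s
    simp only [coveringSet, Set.mem_ofPred_eq, hn, hφn]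
    exact ⟨⟨hz, by linarith [le_max_right l (D - c * n)], le_max_left _ _,
      max_le hlc (by linarith)⟩, hz, by linarith, hlc, le_rfl⟩
  have hy' := mem_convexHull_binaryRoundings hy
  refine (convex_convexHull ℝ _).mk_mem_of_le_of_le
    (mk_mem_convexHull_of_mem_convexHull φ (fun z hz => (hT z hz).1) hy')
    (mk_mem_convexHull_of_mem_convexHull (AffineMap.const ℝ _ c) (fun z hz => (hT z hz).2) hy')
    ?_ hxc
  calc φ y = l + c * (a + b * s) := hφ y
    _ ≤ l + c * max (max 0 (δ - s)) ((δ - ⌊δ⌋) * (⌈δ⌉ - s)) := by gcongr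
    _ ≤ x := by
      rw [mul_max_of_nonneg _ _ hc.le, mul_max_of_nonneg _ _ hc.le, mul_zero]
      refine add_le_of_le_sub_left (max_le (max_le ?_ ?_) ?_) <;> linarith

theorem convexHull_coveringSet (hc : 0 < c) (hlc : l ≤ c) (hδ : c * δ = D - l) :
    convexHull ℝ (coveringSet (ι := ι) l c D) = coveringPolytope l c D δ :=
  (convexHull_min (coveringSet_subset_coveringPolytope hc hδ) convex_coveringPolytope).antisymm
    (coveringPolytope_subset_convexHull hc hlc hδ)

end Covering

theorem stmt14_general
    (l c D : ℤ) (hl : 0 ≤ l) (hlc : l < c)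
    (ν : ℕ)
    (δ : ℝ) (hδ : δ = ((D : ℝ) - (l : ℝ)) / (c : ℝ)) :
    convexHull ℝ
      {p : ℝ × (Fin ν → ℝ) | (∀ i, p.2 i = 0 ∨ p.2 i = 1) ∧
        (D : ℝ) ≤ p.1 + (c : ℝ) * ∑ i, p.2 i ∧ (l : ℝ) ≤ p.1 ∧ p.1 ≤ (c : ℝ)} =
    {p : ℝ × (Fin ν → ℝ) | (l : ℝ) ≤ p.1 ∧ p.1 ≤ (c : ℝ) ∧
      (∀ i, 0 ≤ p.2 i ∧ p.2 i ≤ 1) ∧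
      (D : ℝ) ≤ p.1 + (c : ℝ) * (∑ i, p.2 i) ∧
      (⌈((D : ℝ) - (c : ℝ)) / (c : ℝ)⌉ : ℝ) ≤ (∑ i, p.2 i) ∧
      (l : ℝ) + (c : ℝ) * (δ - ⌊δ⌋) * ((⌈δ⌉ : ℝ) - ∑ i, p.2 i) ≤ p.1} := by
  have hc : (0 : ℝ) < c := by exact_mod_cast hl.trans_lt hlc
  exact convexHull_coveringSet hc (by exact_mod_cast hlc.le) (by rw [hδ]; field_simp)

/-- Description of the convex hull of
`{(x, y) ∈ ℝ × {0,1}^ν : x + c·Σ y_i ≥ D, ℓ ≤ x ≤ c}` with `δ = (D − ℓ)/c`. -/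
theorem stmt14
    (l c D : ℤ) (hl : 0 ≤ l) (hlc : l < c) (hD : l < D)
    (ν : ℕ) (hν : 0 < ν)
    (hν' : ⌈((D : ℝ) - (c : ℝ)) / (c : ℝ)⌉ ≤ (ν : ℤ))
    (δ : ℝ) (hδ : δ = ((D : ℝ) - (l : ℝ)) / (c : ℝ)) :
    convexHull ℝ
      {p : ℝ × (Fin ν → ℝ) | (∀ i, p.2 i = 0 ∨ p.2 i = 1) ∧
        (D : ℝ) ≤ p.1 + (c : ℝ) * ∑ i, p.2 i ∧ (l : ℝ) ≤ p.1 ∧ p.1 ≤ (c : ℝ)} =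
    {p : ℝ × (Fin ν → ℝ) | (l : ℝ) ≤ p.1 ∧ p.1 ≤ (c : ℝ) ∧
      (∀ i, 0 ≤ p.2 i ∧ p.2 i ≤ 1) ∧
      (D : ℝ) ≤ p.1 + (c : ℝ) * (∑ i, p.2 i) ∧
      (⌈((D : ℝ) - (c : ℝ)) / (c : ℝ)⌉ : ℝ) ≤ (∑ i, p.2 i) ∧
      (l : ℝ) + (c : ℝ) * (δ - ⌊δ⌋) * ((⌈δ⌉ : ℝ) - ∑ i, p.2 i) ≤ p.1} :=
  stmt14_general l c D hl hlc ν δ hδ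
end

section
/- Let S′ be a finite nonempty index set, let f_i > 0 and w_i ≥ 0 be given for each i ∈ S′, let f^max = max_{i∈S′} f_i and f^min = min_{i∈S′} f_i, let H ≥ 1 be an integer, and let values 0 ≤ ȳ_i ≤ 1 (i ∈ S′) satisfy Σ_{i∈S′} ȳ_i = H. Then there exist 0/1 values ŷ_i (i ∈ S′) such that Σ_{i∈S′} w_i ŷ_i ≥ Σ_{i∈S′} w_i ȳ_i and Σ_{i∈S′} f_i ŷ_i ≤ (1 − 1/H + f^max/(H · f^min)) · Σ_{i∈S′} f_i ȳ_i. -/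
/-!
Consider the points `y` of the box `[0,1]^S` with the same total as `ȳ`, at least its `w`-weight
and at most its `f`-cost. While more than two coordinates of `y` are fractional, the maps
`y ↦ ∑ y` and `y ↦ ∑ w y` have a common nonzero kernel vector supported on them; moving along it,
in the sign that does not increase the cost, until a coordinate reaches `0` or `1` makes one more
coordinate integral. Once at most two coordinates are fractional, integrality of the total `H`
leaves either none or two whose values add up to `1`. Rounding the heavier of the two up and the
other down keeps the weight and raises the cost by at most `f^max - f^min`, which is at most
`(f^max / f^min - 1) / H · ∑ f ȳ` because `∑ f ȳ ≥ H f^min`.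
-/

namespace FractionalRounding

open Finset

variable {ι : Type*}

open scoped Classical in
noncomputable def fracCoords (S : Finset ι) (y : ι → ℝ) : Finset ι :=
  {x ∈ S | y x ∈ Set.Ioo 0 1}

lemma mem_fracCoords {S : Finset ι} {y : ι → ℝ} {x : ι} :
    x ∈ fracCoords S y ↔ x ∈ S ∧ y x ∈ Set.Ioo 0 1 := by
  simp [fracCoords]

lemma fracCoords_subset (S : Finset ι) (y : ι → ℝ) : fracCoords S y ⊆ S :=
  fun _ hx => (mem_fracCoords.mp hx).1

lemma eq_zero_or_eq_one_of_notMem_fracCoords {S : Finset ι} {y : ι → ℝ}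
    (hy : ∀ x ∈ S, y x ∈ Set.Icc 0 1) {x : ι} (hx : x ∈ S) (hxF : x ∉ fracCoords S y) :
    y x = 0 ∨ y x = 1 := by
  obtain ⟨h0, h1⟩ := hy x hx
  by_contra! h
  exact hxF (mem_fracCoords.mpr ⟨hx, lt_of_le_of_ne h0 (Ne.symm h.1), lt_of_le_of_ne h1 h.2⟩)

lemma sum_mul_add_smul (S : Finset ι) (g y d : ι → ℝ) (t : ℝ) :
    ∑ x ∈ S, g x * (y + t • d) x = ∑ x ∈ S, g x * y x + t * ∑ x ∈ S, g x * d x := by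
  simp only [Pi.add_apply, Pi.smul_apply, smul_eq_mul, mul_add, sum_add_distrib, mul_sum]
  congr 1
  exact sum_congr rfl fun x _ => by ring

/-- The time at which `v + t * s` leaves `[0, 1]`. -/
noncomputable def exitTime (s v : ℝ) : ℝ :=
  if 0 < s then (1 - v) / s else v / -s

lemma exitTime_pos {s v : ℝ} (hs : s ≠ 0) (hv : v ∈ Set.Ioo 0 1) : 0 < exitTime s v := by
  obtain ⟨h0, h1⟩ := hv
  unfold exitTime
  split_ifs with hpos
  · exact div_pos (by linarith) hpos
  · exact div_pos h0 (neg_pos.mpr (lt_of_le_of_ne (not_lt.mp hpos) hs))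

lemma add_mul_mem_Icc_of_le_exitTime {s v t : ℝ} (hs : s ≠ 0) (hv : v ∈ Set.Icc 0 1)
    (ht : 0 ≤ t) (hle : t ≤ exitTime s v) : v + t * s ∈ Set.Icc 0 1 := by
  obtain ⟨h0, h1⟩ := hv
  unfold exitTime at hle
  split_ifs at hle with hpos
  · have := (le_div_iff₀ hpos).mp hle
    constructor <;> nlinarith
  · have hneg : 0 < -s := neg_pos.mpr (lt_of_le_of_ne (not_lt.mp hpos) hs)
    have := (le_div_iff₀ hneg).mp hle
    constructor <;> nlinarith

lemma add_exitTime_mul_notMem_Ioo {s : ℝ} (hs : s ≠ 0) (v : ℝ) :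
    v + exitTime s v * s ∉ Set.Ioo 0 1 := by
  have : v + exitTime s v * s = 0 ∨ v + exitTime s v * s = 1 := by
    unfold exitTime
    split_ifs
    · right; field_simp; ring
    · left; field_simp; ring
  rintro ⟨h0, h1⟩
  rcases this with h | h <;> linarith

lemma exists_pos_fracCoords_add_smul_ssubset {S : Finset ι} {y d : ι → ℝ}
    (hy : ∀ x ∈ S, y x ∈ Set.Icc 0 1) (hd : ∀ x ∈ S, x ∉ fracCoords S y → d x = 0)
    (hne : ∃ x ∈ fracCoords S y, d x ≠ 0) :
    ∃ t : ℝ, 0 < t ∧ (∀ x ∈ S, (y + t • d) x ∈ Set.Icc 0 1) ∧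
      fracCoords S (y + t • d) ⊂ fracCoords S y := by
  classical
  set T := {x ∈ fracCoords S y | d x ≠ 0}
  have hT : T.Nonempty := by simpa [T, Finset.Nonempty] using hne
  have hmemT {x} (hx : x ∈ T) : x ∈ fracCoords S y ∧ d x ≠ 0 := by simpa [T] using hx
  set t := T.inf' hT fun x => exitTime (d x) (y x)
  have ht : 0 < t := (lt_inf'_iff hT).mpr fun x hx =>
    exitTime_pos (hmemT hx).2 (mem_fracCoords.mp (hmemT hx).1).2
  have hmove {x} (hx : d x = 0) : (y + t • d) x = y x := by simp [hx]
  refine ⟨t, ht, fun x hx => ?_, (ssubset_iff_of_subset fun x hx => ?_).mpr ?_⟩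
  · by_cases hdx : d x = 0
    · rw [hmove hdx]; exact hy x hx
    · have hxF : x ∈ fracCoords S y := by_contra fun h => hdx (hd x hx h)
      exact add_mul_mem_Icc_of_le_exitTime hdx (hy x hx) ht.le
        (inf'_le _ (by simp [T, hxF, hdx]))
  · obtain ⟨hxS, hxI⟩ := mem_fracCoords.mp hx
    by_cases hdx : d x = 0
    · rw [hmove hdx] at hxI; exact mem_fracCoords.mpr ⟨hxS, hxI⟩
    · exact by_contra fun h => hdx (hd x hxS h)
  · obtain ⟨x, hxT, hxt⟩ := exists_mem_eq_inf' hT fun x => exitTime (d x) (y x)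
    refine ⟨x, (hmemT hxT).1, fun hx => ?_⟩
    have := (mem_fracCoords.mp hx).2
    simp only [Pi.add_apply, Pi.smul_apply] at this
    rw [show t = exitTime (d x) (y x) from hxt] at this
    exact add_exitTime_mul_notMem_Ioo (hmemT hxT).2 _ this

lemma exists_sum_eq_zero_sum_mul_eq_zero {F : Finset ι} (w : ι → ℝ) (hF : 2 < #F) :
    ∃ d : ι → ℝ, ∑ x ∈ F, d x = 0 ∧ ∑ x ∈ F, w x * d x = 0 ∧ ∃ x ∈ F, d x ≠ 0 := by
  have hdep : ¬ LinearIndepOn ℝ (fun x => ((1 : ℝ), w x)) (F : Set ι) := fun h => by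
    have := h.fintype_card_le_finrank
    simp [Module.finrank_prod] at this
    omega
  obtain ⟨d, hd, hne⟩ := not_linearIndepOn_finset_iff.mp hdep
  have h1 := congrArg Prod.fst hd
  have h2 := congrArg Prod.snd hd
  simp only [Prod.fst_sum, Prod.snd_sum, Prod.smul_mk, smul_eq_mul, mul_one, Prod.fst_zero,
    Prod.snd_zero] at h1 h2
  exact ⟨d, h1, by simpa only [mul_comm] using h2, hne⟩

variable (S : Finset ι) (f w : ι → ℝ)

structure Improves (y y' : ι → ℝ) : Prop where
  sum_eq : ∑ x ∈ S, y' x = ∑ x ∈ S, y x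
  weight_le : ∑ x ∈ S, w x * y x ≤ ∑ x ∈ S, w x * y' x
  cost_le : ∑ x ∈ S, f x * y' x ≤ ∑ x ∈ S, f x * y x

variable {S f w}

lemma Improves.rfl {y : ι → ℝ} : Improves S f w y y := ⟨_root_.rfl, le_rfl, le_rfl⟩

lemma Improves.trans {y y' y'' : ι → ℝ} (h : Improves S f w y y') (h' : Improves S f w y' y'') :
    Improves S f w y y'' :=
  ⟨h'.sum_eq.trans h.sum_eq, h.weight_le.trans h'.weight_le, h'.cost_le.trans h.cost_le⟩

lemma exists_improves_fracCoords_ssubset {y : ι → ℝ} (hy : ∀ x ∈ S, y x ∈ Set.Icc 0 1)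
    (hF : 2 < #(fracCoords S y)) :
    ∃ y', (∀ x ∈ S, y' x ∈ Set.Icc 0 1) ∧ Improves S f w y y' ∧
      fracCoords S y' ⊂ fracCoords S y := by
  classical
  set F := fracCoords S y
  obtain ⟨d, hd1, hdw, hdne⟩ := exists_sum_eq_zero_sum_mul_eq_zero w hF
  obtain ⟨e, he1, hew, hef, hne⟩ : ∃ e : ι → ℝ, ∑ x ∈ F, e x = 0 ∧ ∑ x ∈ F, w x * e x = 0 ∧
      ∑ x ∈ F, f x * e x ≤ 0 ∧ ∃ x ∈ F, e x ≠ 0 := by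
    rcases le_total (∑ x ∈ F, f x * d x) 0 with hf | hf
    · exact ⟨d, hd1, hdw, hf, hdne⟩
    · refine ⟨-d, by simp [hd1], by simp [hdw], by simpa using hf, ?_⟩
      simpa using hdne
  set d' : ι → ℝ := fun x => if x ∈ F then e x else 0
  have hsum (g : ι → ℝ) : ∑ x ∈ S, g x * d' x = ∑ x ∈ F, g x * e x := by
    simp only [d', mul_ite, mul_zero, sum_ite_mem]
    rw [inter_eq_right.mpr (fracCoords_subset S y)]
  obtain ⟨t, ht, hbox, hssub⟩ := exists_pos_fracCoords_add_smul_ssubset hy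
    (d := d') (fun x _ hx => if_neg hx)
    (by obtain ⟨x, hx, hex⟩ := hne; exact ⟨x, hx, by simpa [d', hx] using hex⟩)
  refine ⟨y + t • d', hbox, ⟨?_, ?_, ?_⟩, hssub⟩
  · have h := sum_mul_add_smul S 1 y d' t
    rw [hsum] at h
    simpa [he1] using h
  · rw [sum_mul_add_smul, hsum, hew, mul_zero, add_zero]
  · rw [sum_mul_add_smul, hsum]
    linarith [mul_nonpos_of_nonneg_of_nonpos ht.le hef]

lemma exists_improves_card_fracCoords_le_two {y : ι → ℝ} (hy : ∀ x ∈ S, y x ∈ Set.Icc 0 1) :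
    ∃ y', (∀ x ∈ S, y' x ∈ Set.Icc 0 1) ∧ Improves S f w y y' ∧ #(fracCoords S y') ≤ 2 := by
  induction hn : #(fracCoords S y) using Nat.strong_induction_on generalizing y with
  | _ n ih =>
    by_cases h2 : n ≤ 2
    · exact ⟨y, hy, .rfl, hn ▸ h2⟩
    obtain ⟨y₁, hy₁, himp₁, hssub⟩ := exists_improves_fracCoords_ssubset (f := f) (w := w) hy
      (by omega)
    obtain ⟨y', hy', himp, hcard⟩ := ih _ (hn ▸ card_lt_card hssub) hy₁ rfl
    exact ⟨y', hy', himp₁.trans himp, hcard⟩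

lemma exists_sum_fracCoords_eq_intCast {y : ι → ℝ} (hy : ∀ x ∈ S, y x ∈ Set.Icc 0 1) {n : ℕ}
    (hn : ∑ x ∈ S, y x = n) : ∃ k : ℤ, ∑ x ∈ fracCoords S y, y x = k := by
  classical
  have hint : ∑ x ∈ S \ fracCoords S y, y x = #{x ∈ S \ fracCoords S y | y x = 1} := by
    rw [← sum_boole]
    refine sum_congr rfl fun x hx => ?_
    obtain ⟨hxS, hxF⟩ := mem_sdiff.mp hx
    rcases eq_zero_or_eq_one_of_notMem_fracCoords hy hxS hxF with h | h <;> simp [h]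
  refine ⟨n - #{x ∈ S \ fracCoords S y | y x = 1}, ?_⟩
  rw [← sum_sdiff (fracCoords_subset S y), hint] at hn
  push_cast
  linarith

lemma sum_fracCoords_mem_Ioo {y : ι → ℝ} (hF : (fracCoords S y).Nonempty) :
    ∑ x ∈ fracCoords S y, y x ∈ Set.Ioo 0 (#(fracCoords S y) : ℝ) := by
  have hI {x} (hx : x ∈ fracCoords S y) := (mem_fracCoords.mp hx).2
  refine ⟨sum_pos (fun x hx => (hI hx).1) hF, ?_⟩
  simpa using sum_lt_sum_of_nonempty hF fun x hx => (hI hx).2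

lemma inf'_le_sup' (hS : S.Nonempty) : S.inf' hS f ≤ S.sup' hS f := by
  obtain ⟨i, hi⟩ := hS
  exact (inf'_le f hi).trans (le_sup' f hi)

lemma exists_zero_one_of_fracCoords_eq_pair [DecidableEq ι] (hS : S.Nonempty) {y : ι → ℝ}
    (hy : ∀ x ∈ S, y x ∈ Set.Icc 0 1) {i j : ι} (hij : i ≠ j) (hF : fracCoords S y = {i, j})
    (hsum : y i + y j = 1) (hw : w j ≤ w i) :
    ∃ ŷ : ι → ℝ, (∀ x ∈ S, ŷ x = 0 ∨ ŷ x = 1) ∧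
      ∑ x ∈ S, w x * y x ≤ ∑ x ∈ S, w x * ŷ x ∧
      ∑ x ∈ S, f x * ŷ x ≤ ∑ x ∈ S, f x * y x + (S.sup' hS f - S.inf' hS f) := by
  have hi : i ∈ S := fracCoords_subset S y (by simp [hF])
  have hj : j ∈ S := fracCoords_subset S y (by simp [hF])
  have hdir (g : ι → ℝ) :
      ∑ x ∈ S, g x * (Pi.single i 1 - Pi.single j 1 : ι → ℝ) x = g i - g j := by
    simp [mul_sub, sum_sub_distrib, Pi.single_apply, hi, hj]
  have hyj := hy j hj
  refine ⟨y + y j • (Pi.single i 1 - Pi.single j 1), fun x hx => ?_, ?_, ?_⟩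
  · by_cases hxi : x = i
    · subst hxi; simp [hij, hsum]
    by_cases hxj : x = j
    · subst hxj; simp [Ne.symm hij]
    have hxF : x ∉ fracCoords S y := by simp [hF, hxi, hxj]
    simpa [hxi, hxj] using eq_zero_or_eq_one_of_notMem_fracCoords hy hx hxF
  · rw [sum_mul_add_smul, hdir]
    nlinarith [hyj.1]
  · rw [sum_mul_add_smul, hdir]
    have hfij : f i - f j ≤ S.sup' hS f - S.inf' hS f := sub_le_sub (le_sup' f hi) (inf'_le f hj)
    nlinarith [hyj.1, hyj.2, sub_nonneg.mpr (inf'_le_sup' (f := f) hS)]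

lemma exists_zero_one_of_card_fracCoords_le_two (hS : S.Nonempty) {y : ι → ℝ}
    (hy : ∀ x ∈ S, y x ∈ Set.Icc 0 1) {n : ℕ} (hn : ∑ x ∈ S, y x = n)
    (h2 : #(fracCoords S y) ≤ 2) :
    ∃ ŷ : ι → ℝ, (∀ x ∈ S, ŷ x = 0 ∨ ŷ x = 1) ∧
      ∑ x ∈ S, w x * y x ≤ ∑ x ∈ S, w x * ŷ x ∧
      ∑ x ∈ S, f x * ŷ x ≤ ∑ x ∈ S, f x * y x + (S.sup' hS f - S.inf' hS f) := by
  classical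
  rcases (fracCoords S y).eq_empty_or_nonempty with hE | hne
  · refine ⟨y, fun x hx => eq_zero_or_eq_one_of_notMem_fracCoords hy hx (by simp [hE]), le_rfl, ?_⟩
    linarith [sub_nonneg.mpr (inf'_le_sup' (f := f) hS)]
  obtain ⟨k, hk⟩ := exists_sum_fracCoords_eq_intCast hy hn
  obtain ⟨hk0, hk2⟩ := hk ▸ sum_fracCoords_mem_Ioo hne
  have hk0 : 0 < k := by exact_mod_cast hk0
  have hk2 : k < #(fracCoords S y) := by exact_mod_cast hk2
  obtain ⟨i, j, hij, hF⟩ := card_eq_two.mp (by omega : #(fracCoords S y) = 2)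
  have hsum : y i + y j = 1 := by
    rw [hF, sum_pair hij] at hk
    rw [hk]
    exact_mod_cast (by omega : k = 1)
  rcases le_total (w j) (w i) with hw | hw
  · exact exists_zero_one_of_fracCoords_eq_pair hS hy hij hF hsum hw
  · exact exists_zero_one_of_fracCoords_eq_pair hS hy hij.symm (hF.trans (pair_comm i j))
      (by linarith) hw

lemma sum_mul_inf'_le_sum_mul (hS : S.Nonempty) {y : ι → ℝ} (hy : ∀ x ∈ S, 0 ≤ y x) :
    (∑ x ∈ S, y x) * S.inf' hS f ≤ ∑ x ∈ S, f x * y x := by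
  rw [sum_mul]
  exact sum_le_sum fun x hx => by
    rw [mul_comm]; exact mul_le_mul_of_nonneg_right (inf'_le f hx) (hy x hx)

lemma add_sub_le_mul_of_mul_le {m M F H : ℝ} (hm : 0 < m) (hmM : m ≤ M) (hH : 0 < H)
    (hF : H * m ≤ F) : F + (M - m) ≤ (1 - 1 / H + M / (H * m)) * F := by
  have hfactor : (1 - 1 / H + M / (H * m)) * F = F + (M - m) * (F / (H * m)) := by
    field_simp; ring
  have hratio : 1 ≤ F / (H * m) := (one_le_div (by positivity)).mpr hF
  rw [hfactor]
  nlinarith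

end FractionalRounding

theorem stmt15_general
    {ι : Type*} (S : Finset ι) (hS : S.Nonempty)
    (f w : ι → ℝ) (hf : ∀ i ∈ S, 0 < f i)
    (H : ℕ) (hH : 1 ≤ H)
    (ybar : ι → ℝ) (hybar : ∀ i ∈ S, 0 ≤ ybar i ∧ ybar i ≤ 1)
    (hsum : ∑ i ∈ S, ybar i = (H : ℝ)) :
    ∃ yhat : ι → ℝ,
      (∀ i ∈ S, yhat i = 0 ∨ yhat i = 1) ∧
      (∑ i ∈ S, w i * ybar i ≤ ∑ i ∈ S, w i * yhat i) ∧
      (∑ i ∈ S, f i * yhat i ≤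
        (1 - 1 / (H : ℝ) + (S.sup' hS f) / ((H : ℝ) * S.inf' hS f)) *
          ∑ i ∈ S, f i * ybar i) := by
  obtain ⟨y, hy, himp, hcard⟩ :=
    FractionalRounding.exists_improves_card_fracCoords_le_two (f := f) (w := w) hybar
  obtain ⟨yhat, h01, hweight, hcost⟩ := FractionalRounding.exists_zero_one_of_card_fracCoords_le_two
    (f := f) hS hy (himp.sum_eq.trans hsum) hcard
  have hlower : (H : ℝ) * S.inf' hS f ≤ ∑ i ∈ S, f i * ybar i :=
    hsum ▸ FractionalRounding.sum_mul_inf'_le_sum_mul hS fun i hi => (hybar i hi).1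
  refine ⟨yhat, h01, himp.weight_le.trans hweight, ?_⟩
  calc ∑ i ∈ S, f i * yhat i ≤ ∑ i ∈ S, f i * ybar i + (S.sup' hS f - S.inf' hS f) := by
        linarith [himp.cost_le]
    _ ≤ _ := FractionalRounding.add_sub_le_mul_of_mul_le ((Finset.lt_inf'_iff hS).mpr hf)
        (FractionalRounding.inf'_le_sup' hS) (by exact_mod_cast hH) hlower

/-- (Lemma A.1(a) of the paper.) Rounding a fractional vector with
`Σ ȳ_i = H` to a 0/1 vector keeping the covered weight while increasing the cost by a
factor at most `1 − 1/H + f^max/(H·f^min)`. -/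
theorem stmt15
    {ι : Type*} (S : Finset ι) (hS : S.Nonempty)
    (f w : ι → ℝ) (hf : ∀ i ∈ S, 0 < f i) (hw : ∀ i ∈ S, 0 ≤ w i)
    (H : ℕ) (hH : 1 ≤ H)
    (ybar : ι → ℝ) (hybar : ∀ i ∈ S, 0 ≤ ybar i ∧ ybar i ≤ 1)
    (hsum : ∑ i ∈ S, ybar i = (H : ℝ)) :
    ∃ yhat : ι → ℝ,
      (∀ i ∈ S, yhat i = 0 ∨ yhat i = 1) ∧
      (∑ i ∈ S, w i * ybar i ≤ ∑ i ∈ S, w i * yhat i) ∧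
      (∑ i ∈ S, f i * yhat i ≤
        (1 - 1 / (H : ℝ) + (S.sup' hS f) / ((H : ℝ) * S.inf' hS f)) *
          ∑ i ∈ S, f i * ybar i) :=
  stmt15_general S hS f w hf H hH ybar hybar hsum
end

section
/- Let S′ be a finite nonempty index set, let f_i > 0 and w_i ≥ 0 be given for each i ∈ S′, let f^max = max_{i∈S′} f_i and f^min = min_{i∈S′} f_i, let H ≥ 1 be an integer, and let values 0 ≤ ȳ_i ≤ 1 (i ∈ S′) satisfy Σ_{i∈S′} ȳ_i ≥ H. Then there exist 0/1 values ŷ_i (i ∈ S′) such that Σ_{i∈S′} w_i ŷ_i ≥ Σ_{i∈S′} w_i ȳ_i and Σ_{i∈S′} f_i ŷ_i ≤ (1 + f^max/(H · f^min)) · Σ_{i∈S′} f_i ȳ_i. -/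
/-!
While two coordinates of `ȳ` are fractional, move cost from the one with the smaller ratio `w/f`
to the other, keeping `∑ f ȳ` fixed, until one of them reaches `0` or `1`; the weight `∑ w ȳ`
does not decrease. Rounding up the single fractional coordinate that remains costs at most
`f^max`, and `f^max ≤ f^max / (H f^min) · ∑ f ȳ` because `∑ f ȳ ≥ f^min ∑ ȳ ≥ H f^min`.
-/

open Finset

section

variable {ι : Type*}

noncomputable def fractionalSupport (S : Finset ι) (y : ι → ℝ) : Finset ι :=
  {i ∈ S | 0 < y i ∧ y i < 1}

theorem sum_mul_add_single_sub_single [DecidableEq ι] {S : Finset ι} (g y : ι → ℝ) {i j : ι}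
    (hi : i ∈ S) (hj : j ∈ S) (a b : ℝ) :
    ∑ k ∈ S, g k * (y + Pi.single i a - Pi.single j b : ι → ℝ) k
      = ∑ k ∈ S, g k * y k + g i * a - g j * b := by
  simp only [Pi.add_apply, Pi.sub_apply, mul_sub, mul_add, sum_sub_distrib, sum_add_distrib,
    Pi.single_apply, mul_ite, mul_zero, sum_ite_eq', hi, hj, if_true]

theorem exists_transfer [DecidableEq ι] {S : Finset ι} {f w y : ι → ℝ} {i j : ι}
    (hi : i ∈ S) (hj : j ∈ S) (hij : i ≠ j) (hfi : 0 < f i) (hfj : 0 < f j)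
    (hratio : w j / f j ≤ w i / f i) (hy : ∀ k ∈ S, 0 ≤ y k ∧ y k ≤ 1)
    (hyi : y i < 1) (hyj : 0 < y j) :
    ∃ z : ι → ℝ, (∀ k ∈ S, 0 ≤ z k ∧ z k ≤ 1) ∧
      ∑ k ∈ S, f k * z k = ∑ k ∈ S, f k * y k ∧
      ∑ k ∈ S, w k * y k ≤ ∑ k ∈ S, w k * z k ∧
      (∀ k, k ≠ i → k ≠ j → z k = y k) ∧ (z i = 1 ∨ z j = 0) := by
  set t := min ((1 - y i) * f i) (y j * f j)
  have ht : 0 ≤ t := le_min (by nlinarith) (by positivity)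
  have hti : t / f i ≤ 1 - y i := (div_le_iff₀ hfi).2 (min_le_left _ _)
  have htj : t / f j ≤ y j := (div_le_iff₀ hfj).2 (min_le_right _ _)
  set z := y + Pi.single i (t / f i) - Pi.single j (t / f j)
  have hz : ∀ k, z k = y k + (if k = i then t / f i else 0) - (if k = j then t / f j else 0) := by
    intro k; simp [z, Pi.single_apply]
  have hzi : z i = y i + t / f i := by simp [hz, hij]
  have hzj : z j = y j - t / f j := by simp [hz, hij.symm]
  refine ⟨z, fun k hk => ?_, ?_, ?_, fun k hki hkj => by simp [hz, hki, hkj], ?_⟩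
  · have : 0 ≤ t / f i := by positivity
    have : 0 ≤ t / f j := by positivity
    by_cases hki : k = i
    · subst hki; rw [hzi]; constructor <;> linarith [hy k hk]
    by_cases hkj : k = j
    · subst hkj; rw [hzj]; constructor <;> linarith [hy k hk]
    simpa [hz, hki, hkj] using hy k hk
  · rw [sum_mul_add_single_sub_single f y hi hj]
    field_simp
    ring
  · rw [sum_mul_add_single_sub_single w y hi hj, mul_div_left_comm, mul_div_left_comm (w j)]
    nlinarith [mul_le_mul_of_nonneg_left hratio ht]
  · have : t = (1 - y i) * f i ∨ t = y j * f j := min_choice _ _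
    rcases this with h | h
    · left; rw [hzi, h]; field_simp; ring
    · right; rw [hzj, h]; field_simp; ring

theorem exists_card_fractionalSupport_lt [DecidableEq ι] {S : Finset ι} {f w y : ι → ℝ}
    (hf : ∀ i ∈ S, 0 < f i) (hy : ∀ k ∈ S, 0 ≤ y k ∧ y k ≤ 1)
    (hcard : 1 < (fractionalSupport S y).card) :
    ∃ z : ι → ℝ, (∀ k ∈ S, 0 ≤ z k ∧ z k ≤ 1) ∧
      ∑ k ∈ S, f k * z k = ∑ k ∈ S, f k * y k ∧
      ∑ k ∈ S, w k * y k ≤ ∑ k ∈ S, w k * z k ∧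
      (fractionalSupport S z).card < (fractionalSupport S y).card := by
  obtain ⟨i, hi, j, hj, hij, hratio⟩ : ∃ i ∈ fractionalSupport S y, ∃ j ∈ fractionalSupport S y,
      i ≠ j ∧ w j / f j ≤ w i / f i := by
    obtain ⟨a, ha, b, hb, hab⟩ := one_lt_card.mp hcard
    rcases le_total (w b / f b) (w a / f a) with h | h
    exacts [⟨a, ha, b, hb, hab, h⟩, ⟨b, hb, a, ha, hab.symm, h⟩]
  simp only [fractionalSupport, mem_filter] at hi hj
  obtain ⟨z, hz, hfz, hwz, hzy, hend⟩ := exists_transfer hi.1 hj.1 hij (hf i hi.1) (hf j hj.1)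
    hratio hy hi.2.2 hj.2.1
  refine ⟨z, hz, hfz, hwz, card_lt_card ⟨fun k hk => ?_, fun hsub => ?_⟩⟩
  · simp only [fractionalSupport, mem_filter] at hk ⊢
    by_cases hki : k = i
    · subst hki; exact hi
    by_cases hkj : k = j
    · subst hkj; exact hj
    rwa [← hzy k hki hkj]
  · rcases hend with h | h
    · have := (mem_filter.mp (hsub (mem_filter.mpr hi))).2.2; linarith
    · have := (mem_filter.mp (hsub (mem_filter.mpr hj))).2.1; linarith

theorem exists_card_fractionalSupport_le_one [DecidableEq ι] {S : Finset ι} {f w : ι → ℝ}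
    (hf : ∀ i ∈ S, 0 < f i) (y : ι → ℝ) (hy : ∀ k ∈ S, 0 ≤ y k ∧ y k ≤ 1) :
    ∃ z : ι → ℝ, (∀ k ∈ S, 0 ≤ z k ∧ z k ≤ 1) ∧
      ∑ k ∈ S, f k * z k = ∑ k ∈ S, f k * y k ∧
      ∑ k ∈ S, w k * y k ≤ ∑ k ∈ S, w k * z k ∧
      (fractionalSupport S z).card ≤ 1 := by
  by_cases hcard : (fractionalSupport S y).card ≤ 1
  · exact ⟨y, hy, rfl, le_rfl, hcard⟩
  obtain ⟨z, hz, hfz, hwz, hlt⟩ := exists_card_fractionalSupport_lt (w := w) hf hy (not_le.mp hcard)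
  obtain ⟨x, hx, hfx, hwx, hx1⟩ := exists_card_fractionalSupport_le_one hf z hz
  exact ⟨x, hx, hfx.trans hfz, hwz.trans hwx, hx1⟩
termination_by (fractionalSupport S y).card

theorem ceil_eq_zero_or_one {x : ℝ} (h0 : 0 ≤ x) (h1 : x ≤ 1) :
    (⌈x⌉ : ℝ) = 0 ∨ (⌈x⌉ : ℝ) = 1 := by
  rcases h0.eq_or_lt with h | h
  · simp [← h]
  · right; exact_mod_cast Int.ceil_eq_iff.mpr ⟨by norm_num [h], by exact_mod_cast h1⟩

theorem sum_mul_ceil_le {S : Finset ι} (hS : S.Nonempty) {f y : ι → ℝ}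
    (hf : ∀ i ∈ S, 0 ≤ f i) (hy : ∀ k ∈ S, 0 ≤ y k ∧ y k ≤ 1) :
    ∑ k ∈ S, f k * ⌈y k⌉ ≤ ∑ k ∈ S, f k * y k + (fractionalSupport S y).card * S.sup' hS f := by
  have hsupp : ∑ k ∈ S, f k * (⌈y k⌉ - y k)
      = ∑ k ∈ fractionalSupport S y, f k * (⌈y k⌉ - y k) := by
    refine (sum_filter_of_ne fun k hk hne => ?_).symm
    by_contra hint
    rcases not_and_or.mp hint with h | h
    · simp [le_antisymm (not_lt.mp h) (hy k hk).1] at hne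
    · simp [le_antisymm (hy k hk).2 (not_lt.mp h)] at hne
  have hle : ∑ k ∈ fractionalSupport S y, f k * (⌈y k⌉ - y k)
      ≤ (fractionalSupport S y).card • S.sup' hS f := by
    refine sum_le_card_nsmul _ _ _ fun k hk => ?_
    obtain ⟨hkS, -⟩ := mem_filter.mp hk
    calc f k * (⌈y k⌉ - y k) ≤ f k * 1 :=
          mul_le_mul_of_nonneg_left (by linarith [Int.ceil_lt_add_one (y k)]) (hf k hkS)
      _ ≤ S.sup' hS f := (mul_one (f k)).trans_le (le_sup' f hkS)
  simp only [mul_sub, sum_sub_distrib, nsmul_eq_mul] at hsupp hle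
  linarith

theorem exists_binary_sum_mul_le_add_sup' {S : Finset ι} (hS : S.Nonempty) {f w y : ι → ℝ}
    (hf : ∀ i ∈ S, 0 < f i) (hw : ∀ i ∈ S, 0 ≤ w i) (hy : ∀ k ∈ S, 0 ≤ y k ∧ y k ≤ 1) :
    ∃ yhat : ι → ℝ, (∀ i ∈ S, yhat i = 0 ∨ yhat i = 1) ∧
      ∑ i ∈ S, w i * y i ≤ ∑ i ∈ S, w i * yhat i ∧
      ∑ i ∈ S, f i * yhat i ≤ ∑ i ∈ S, f i * y i + S.sup' hS f := by
  classical
  obtain ⟨z, hz, hfz, hwz, hcard⟩ := exists_card_fractionalSupport_le_one (w := w) hf y hy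
  obtain ⟨a, ha⟩ := id hS
  have hsup : 0 ≤ S.sup' hS f := ((lt_sup'_iff hS).2 ⟨a, ha, hf a ha⟩).le
  refine ⟨fun i => ⌈z i⌉, fun i hi => ceil_eq_zero_or_one (hz i hi).1 (hz i hi).2, ?_, ?_⟩
  · exact hwz.trans (sum_le_sum fun i hi =>
      mul_le_mul_of_nonneg_left (Int.le_ceil (z i)) (hw i hi))
  · calc ∑ i ∈ S, f i * ⌈z i⌉
        ≤ ∑ i ∈ S, f i * z i + (fractionalSupport S z).card * S.sup' hS f :=
          sum_mul_ceil_le hS (fun i hi => (hf i hi).le) hz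
      _ ≤ ∑ i ∈ S, f i * y i + S.sup' hS f := by
          rw [hfz]; gcongr; exact_mod_cast (mul_le_of_le_one_left hsup (by exact_mod_cast hcard))

theorem inf'_mul_sum_le_sum_mul {S : Finset ι} (hS : S.Nonempty) {f y : ι → ℝ}
    (hy : ∀ i ∈ S, 0 ≤ y i) :
    S.inf' hS f * ∑ i ∈ S, y i ≤ ∑ i ∈ S, f i * y i := by
  rw [mul_sum]
  exact sum_le_sum fun i hi => mul_le_mul_of_nonneg_right (inf'_le f hi) (hy i hi)

end

/-- (Lemma A.1(b) of the paper.) Rounding a fractional vector with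
`Σ ȳ_i ≥ H` to a 0/1 vector keeping the covered weight while increasing the cost by a
factor at most `1 + f^max/(H·f^min)`. -/
theorem stmt16
    {ι : Type*} (S : Finset ι) (hS : S.Nonempty)
    (f w : ι → ℝ) (hf : ∀ i ∈ S, 0 < f i) (hw : ∀ i ∈ S, 0 ≤ w i)
    (H : ℕ) (hH : 1 ≤ H)
    (ybar : ι → ℝ) (hybar : ∀ i ∈ S, 0 ≤ ybar i ∧ ybar i ≤ 1)
    (hsum : (H : ℝ) ≤ ∑ i ∈ S, ybar i) :
    ∃ yhat : ι → ℝ,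
      (∀ i ∈ S, yhat i = 0 ∨ yhat i = 1) ∧
      (∑ i ∈ S, w i * ybar i ≤ ∑ i ∈ S, w i * yhat i) ∧
      (∑ i ∈ S, f i * yhat i ≤
        (1 + (S.sup' hS f) / ((H : ℝ) * S.inf' hS f)) * ∑ i ∈ S, f i * ybar i) := by
  obtain ⟨yhat, hbin, hw_le, hf_le⟩ := exists_binary_sum_mul_le_add_sup' hS hf hw hybar
  refine ⟨yhat, hbin, hw_le, ?_⟩
  set F := S.sup' hS f
  set m := S.inf' hS f
  obtain ⟨a, ha⟩ := id hS
  have hF : 0 < F := (lt_sup'_iff hS).2 ⟨a, ha, hf a ha⟩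
  have hm : 0 < m := (lt_inf'_iff hS).2 hf
  have hHm : 0 < (H : ℝ) * m := by positivity
  have hcost : (H : ℝ) * m ≤ ∑ i ∈ S, f i * ybar i := calc
    (H : ℝ) * m ≤ m * ∑ i ∈ S, ybar i := by rw [mul_comm]; gcongr
    _ ≤ ∑ i ∈ S, f i * ybar i := inf'_mul_sum_le_sum_mul hS fun i hi => (hybar i hi).1
  have hF_le : F ≤ F / ((H : ℝ) * m) * ∑ i ∈ S, f i * ybar i := by
    rw [div_mul_eq_mul_div, le_div_iff₀ hHm]
    exact mul_le_mul_of_nonneg_left hcost hF.le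
  linarith
end

section
/- In the appendix setting for 1-MKC, for each h ∈ [η] and each signature σ with P^{h,σ} ≠ ∅, there exists a feasible solution (ŷ, α̂) ∈ {0,1}^η × ℝ of the 1-MKC instance such that Σ_i f̄_i ŷ_i + v̄ α̂ ≤ (1 + ε) · min{ Σ_i f̄_i y_i + v̄ α : (y, α) ∈ P^{h,σ} } (the minimum being attained since P^{h,σ} is compact). In particular, OPT ≤ (1 + ε) · min{ Σ_i f̄_i y_i + v̄ α : (y, α) ∈ P^{h,σ} }. -/
/-- The set `S^{h,k}` (`k` zero-based, so the exponents are `−k` and `−(k+1)`). -/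
noncomputable def Shk (η : ℕ) (fbar : Fin η → ℝ) (ε : ℝ) (h : Fin η) (k : ℕ) : Finset (Fin η) :=
  Finset.univ.filter (fun i => h < i ∧ fbar i ≤ fbar h * (1 + ε) ^ (-(k : ℤ)) ∧
    fbar h * (1 + ε) ^ (-((k : ℤ) + 1)) < fbar i)

/-- The polytope `P^{h,σ}` from the appendix. -/
def Pset (η K : ℕ) (fbar wbar : Fin η → ℝ) (dbar cbar ε : ℝ) (J : ℕ)
    (h : Fin η) (σ : Fin K → ℕ) : Set ((Fin η → ℝ) × ℝ) :=
  {p | (∀ i, 0 ≤ p.1 i ∧ p.1 i ≤ 1) ∧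
       (dbar - p.2 ≤ ∑ i, wbar i * p.1 i) ∧ 0 ≤ p.2 ∧ p.2 ≤ cbar ∧
       (∀ i, i < h → p.1 i = 0) ∧ p.1 h = 1 ∧
       (∀ k : Fin K, σ k < J → ∑ i ∈ Shk η fbar ε h (k : ℕ), p.1 i = (σ k : ℝ)) ∧
       (∀ k : Fin K, σ k = J → (J : ℝ) ≤ ∑ i ∈ Shk η fbar ε h (k : ℕ), p.1 i)}

open Finset

lemma mkc_classify (η K : ℕ) (fbar : Fin η → ℝ) (ε : ℝ)
    (h i : Fin η) (hK : 0 < K) (hhi : h < i) (hfi : fbar i ≤ fbar h)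
    (hnt : fbar h * (1 + ε) ^ (-(K : ℤ)) < fbar i) :
    ∃ k : Fin K, i ∈ Shk η fbar ε h (k : ℕ) := by
  classical
  have hpred : fbar h * (1 + ε) ^ (-(((K - 1 : ℕ) : ℤ) + 1)) < fbar i := by
    have hcast : -(((K - 1 : ℕ) : ℤ) + 1) = -(K : ℤ) := by omega
    rw [hcast]; exact hnt
  have hex : ∃ n : ℕ, fbar h * (1 + ε) ^ (-((n : ℤ) + 1)) < fbar i := ⟨K - 1, hpred⟩
  set k₀ := Nat.find hex with hk₀def
  have hk₀le : k₀ ≤ K - 1 := Nat.find_min' hex hpred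
  have hk₀K : k₀ < K := by omega
  have hlow : fbar h * (1 + ε) ^ (-((k₀ : ℤ) + 1)) < fbar i := Nat.find_spec hex
  have hup : fbar i ≤ fbar h * (1 + ε) ^ (-(k₀ : ℤ)) := by
    rcases Nat.eq_zero_or_pos k₀ with hk0 | hk0
    · rw [hk0]; simpa using hfi
    · have hnot := Nat.find_min hex (show k₀ - 1 < k₀ by omega)
      push_neg at hnot
      have hcast : -(((k₀ - 1 : ℕ) : ℤ) + 1) = -(k₀ : ℤ) := by omega
      rwa [hcast] at hnot
  exact ⟨⟨k₀, hk₀K⟩, mem_filter.2 ⟨mem_univ i, hhi, hup, hlow⟩⟩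

lemma mkc_compact (η K : ℕ) (fbar wbar : Fin η → ℝ) (dbar cbar ε : ℝ) (J : ℕ)
    (h : Fin η) (σ : Fin K → ℕ) :
    IsCompact (Pset η K fbar wbar dbar cbar ε J h σ) := by
  classical
  have hcont : ∀ i : Fin η, Continuous fun p : (Fin η → ℝ) × ℝ => p.1 i :=
    fun i => (continuous_apply i).comp continuous_fst
  have hclosed : IsClosed (Pset η K fbar wbar dbar cbar ε J h σ) := by
    unfold Pset
    simp only [Set.setOf_and]
    refine IsClosed.inter ?_ (IsClosed.inter ?_ (IsClosed.inter ?_ (IsClosed.inter ?_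
      (IsClosed.inter ?_ (IsClosed.inter ?_ (IsClosed.inter ?_ ?_))))))
    · rw [Set.setOf_forall]
      refine isClosed_iInter fun i => ?_
      simp only [Set.setOf_and]
      exact (isClosed_le continuous_const (hcont i)).inter
        (isClosed_le (hcont i) continuous_const)
    · exact isClosed_le (continuous_const.sub continuous_snd)
        (continuous_finset_sum _ fun i _ => continuous_const.mul (hcont i))
    · exact isClosed_le continuous_const continuous_snd
    · exact isClosed_le continuous_snd continuous_const
    · rw [Set.setOf_forall]
      refine isClosed_iInter fun i => ?_
      by_cases hi : i < h
      · simp only [hi, true_implies]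
        exact isClosed_eq (hcont i) continuous_const
      · have : {p : (Fin η → ℝ) × ℝ | i < h → p.1 i = 0} = Set.univ := by
          ext p; simp [hi]
        rw [this]; exact isClosed_univ
    · exact isClosed_eq (hcont h) continuous_const
    · rw [Set.setOf_forall]
      refine isClosed_iInter fun k => ?_
      by_cases hk : σ k < J
      · simp only [hk, true_implies]
        exact isClosed_eq (continuous_finset_sum _ fun i _ => hcont i) continuous_const
      · have : {p : (Fin η → ℝ) × ℝ | σ k < J → ∑ i ∈ Shk η fbar ε h (k : ℕ), p.1 i = (σ k : ℝ)}
            = Set.univ := by ext p; simp [hk]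
        rw [this]; exact isClosed_univ
    · rw [Set.setOf_forall]
      refine isClosed_iInter fun k => ?_
      by_cases hk : σ k = J
      · simp only [hk, true_implies]
        exact isClosed_le continuous_const (continuous_finset_sum _ fun i _ => hcont i)
      · have : {p : (Fin η → ℝ) × ℝ | σ k = J → (J : ℝ) ≤ ∑ i ∈ Shk η fbar ε h (k : ℕ), p.1 i}
            = Set.univ := by ext p; simp [hk]
        rw [this]; exact isClosed_univ
  have hsub : Pset η K fbar wbar dbar cbar ε J h σ ⊆
      Set.Icc ((fun _ => 0 : Fin η → ℝ), (0 : ℝ)) ((fun _ => 1 : Fin η → ℝ), cbar) := by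
    rintro ⟨y, α⟩ hp
    obtain ⟨hbox, -, hα0, hαc, -⟩ := hp
    exact ⟨⟨fun i => (hbox i).1, hα0⟩, ⟨fun i => (hbox i).2, hαc⟩⟩
  exact IsCompact.of_isClosed_subset isCompact_Icc hclosed hsub

open Finset

variable {ι : Type*} [DecidableEq ι]

/-- Exchange argument: a greedy prefix (by cost/weight ratio) is at most any fractional
feasible solution's cost plus the cost of its last element. -/
lemma mkc_exchange (U S : Finset ι) (hSU : S ⊆ U) (j₀ : ι) (hj₀ : j₀ ∈ S)
    (w f y : ι → ℝ) (hw : ∀ i ∈ U, 0 < w i) (hf : ∀ i ∈ U, 0 ≤ f i)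
    (h1 : ∀ i ∈ S.erase j₀, f i * w j₀ ≤ f j₀ * w i)
    (h2 : ∀ i ∈ U, i ∉ S.erase j₀ → f j₀ * w i ≤ f i * w j₀)
    (hy : ∀ i ∈ U, 0 ≤ y i ∧ y i ≤ 1)
    (hcov : ∑ i ∈ S.erase j₀, w i ≤ ∑ i ∈ U, w i * y i) :
    ∑ i ∈ S, f i ≤ (∑ i ∈ U, f i * y i) + f j₀ := by
  classical
  set S' := S.erase j₀ with hS'
  have hS'U : S' ⊆ U := (erase_subset _ _).trans hSU
  have hwj₀ : 0 < w j₀ := hw j₀ (hSU hj₀)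
  set r : ℝ := f j₀ / w j₀ with hr
  have hr0 : 0 ≤ r := div_nonneg (hf j₀ (hSU hj₀)) hwj₀.le
  set g : ι → ℝ := fun i => f i * y i - r * (w i * y i) with hg
  -- on S', g i ≥ f i - r * w i
  have hgS' : ∀ i ∈ S', f i - r * w i ≤ g i := by
    intro i hi
    have hfi : f i ≤ r * w i := by
      rw [hr, div_mul_eq_mul_div, le_div_iff₀ hwj₀]
      calc f i * w j₀ ≤ f j₀ * w i := h1 i hi
        _ = f j₀ * w i := rfl
    have hyi := hy i (hS'U hi)
    have : (f i - r * w i) * (1 - y i) ≤ 0 :=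
      mul_nonpos_of_nonpos_of_nonneg (by linarith) (by linarith [hyi.2])
    simp only [hg]; nlinarith
  -- on U \ S', g i ≥ 0
  have hgU : ∀ i ∈ U \ S', 0 ≤ g i := by
    intro i hi
    rw [mem_sdiff] at hi
    have hfi : r * w i ≤ f i := by
      rw [hr, div_mul_eq_mul_div, div_le_iff₀ hwj₀]
      exact h2 i hi.1 hi.2
    have hyi := hy i hi.1
    simp only [hg]; nlinarith
  have key : ∑ i ∈ S', (f i - r * w i) ≤ ∑ i ∈ U, g i := by
    calc ∑ i ∈ S', (f i - r * w i) ≤ ∑ i ∈ S', g i := sum_le_sum hgS'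
      _ ≤ ∑ i ∈ U, g i := sum_le_sum_of_subset_of_nonneg hS'U (fun i hiU hiS => hgU i (mem_sdiff.2 ⟨hiU, hiS⟩))
  have hUg : ∑ i ∈ U, g i = (∑ i ∈ U, f i * y i) - r * ∑ i ∈ U, w i * y i := by
    simp only [hg, mul_sum, sum_sub_distrib]
  have hS'g : ∑ i ∈ S', (f i - r * w i) = (∑ i ∈ S', f i) - r * ∑ i ∈ S', w i := by
    simp only [mul_sum, sum_sub_distrib]
  have hmul : r * (∑ i ∈ S', w i) ≤ r * ∑ i ∈ U, w i * y i :=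
    mul_le_mul_of_nonneg_left hcov hr0
  have hsplit : (∑ i ∈ S', f i) + f j₀ = ∑ i ∈ S, f i := sum_erase_add S f hj₀
  rw [hUg] at key; rw [hS'g] at key
  linarith

/-- Greedy structure: there is a set `S` of total weight at least `W` with the prefix
structure needed for the exchange argument. -/
lemma mkc_greedy (w f : ι → ℝ) (U : Finset ι) (W : ℝ)
    (hw : ∀ i ∈ U, 0 < w i) (hWle : W ≤ ∑ i ∈ U, w i) :
    ∃ S, S ⊆ U ∧ W ≤ ∑ i ∈ S, w i ∧ (S = ∅ ∨ ∃ j₀ ∈ S,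
      ((∑ i ∈ S.erase j₀, w i) < W ∧
       (∀ i ∈ S.erase j₀, f i * w j₀ ≤ f j₀ * w i) ∧
       (∀ i ∈ U, i ∉ S.erase j₀ → f j₀ * w i ≤ f i * w j₀))) := by
  classical
  induction U using Finset.strongInduction generalizing W with
  | _ U IH =>
    by_cases hW : W ≤ 0
    · exact ⟨∅, empty_subset _, by simpa using hW, Or.inl rfl⟩
    push_neg at hW
    have hUne : U.Nonempty := by
      rcases U.eq_empty_or_nonempty with h | h
      · subst h; simp at hWle; linarith
      · exact h
    obtain ⟨j, hjU, hjmin⟩ := U.exists_min_image (fun i => f i / w i) hUne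
    have hratio : ∀ i ∈ U, f j * w i ≤ f i * w j := by
      intro i hi
      have := hjmin i hi
      rwa [div_le_div_iff₀ (hw j hjU) (hw i hi)] at this
    by_cases hWj : W ≤ w j
    · refine ⟨{j}, by simpa using hjU, by simpa using hWj, Or.inr ⟨j, mem_singleton_self j, ?_, ?_, ?_⟩⟩
      · simpa using hW
      · simp
      · intro i hi _; exact hratio i hi
    · push_neg at hWj
      have hjsum : (∑ i ∈ U.erase j, w i) + w j = ∑ i ∈ U, w i := sum_erase_add U w hjU
      obtain ⟨S', hS'sub, hS'W, hS'struct⟩ := IH (U.erase j) (erase_ssubset hjU) (W - w j)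
        (fun i hi => hw i (erase_subset _ _ hi)) (by linarith)
      rcases hS'struct with hS'emp | ⟨j₀, hj₀S', hlt, hin, hout⟩
      · exfalso; subst hS'emp; simp at hS'W; linarith
      have hjS' : j ∉ S' := fun hmem => (mem_erase.1 (hS'sub hmem)).1 rfl
      have hj₀U : j₀ ∈ U := erase_subset _ _ (hS'sub hj₀S')
      have hjne : j ≠ j₀ := fun heq => hjS' (heq ▸ hj₀S')
      refine ⟨insert j S', insert_subset hjU (hS'sub.trans (erase_subset _ _)),
        by rw [sum_insert hjS']; linarith, Or.inr ⟨j₀, mem_insert_of_mem hj₀S', ?_, ?_, ?_⟩⟩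
      · rw [erase_insert_of_ne hjne, sum_insert (fun hmem => hjS' (erase_subset _ _ hmem))]
        linarith
      · rw [erase_insert_of_ne hjne]
        intro i hi
        rcases mem_insert.1 hi with rfl | hi'
        · exact hratio j₀ hj₀U
        · exact hin i hi'
      · rw [erase_insert_of_ne hjne]
        intro i hiU hi
        have hij : i ≠ j := fun heq => hi (by rw [heq]; exact mem_insert_self j _)
        exact hout i (mem_erase.2 ⟨hij, hiU⟩) (fun hmem => hi (mem_insert_of_mem hmem))

/-- Existence of a "top-m weights" subset. -/
lemma mkc_topm (w : ι → ℝ) : ∀ (m : ℕ) (A : Finset ι), m ≤ A.card →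
    ∃ S, S ⊆ A ∧ S.card = m ∧ ∀ i ∈ A, i ∉ S → ∀ j ∈ S, w i ≤ w j := by
  intro m
  induction m with
  | zero => exact fun A _ => ⟨∅, empty_subset _, card_empty, fun i _ _ j hj => absurd hj (notMem_empty j)⟩
  | succ m ih =>
    intro A hm
    have hAne : A.Nonempty := card_pos.1 (by omega)
    obtain ⟨j, hjA, hjmax⟩ := A.exists_max_image w hAne
    obtain ⟨S', hS'sub, hS'card, hS'dom⟩ := ih (A.erase j) (by rw [card_erase_of_mem hjA]; omega)
    have hjS' : j ∉ S' := fun hmem => (mem_erase.1 (hS'sub hmem)).1 rfl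
    refine ⟨insert j S', insert_subset hjA (hS'sub.trans (erase_subset _ _)),
      by rw [card_insert_of_notMem hjS', hS'card], ?_⟩
    intro i hiA hiS j' hj'
    rcases mem_insert.1 hj' with rfl | hj''
    · exact hjmax i hiA
    · exact hS'dom i (mem_erase.2 ⟨fun heq => hiS (by rw [heq]; exact mem_insert_self j _), hiA⟩)
        (fun hmem => hiS (mem_insert_of_mem hmem)) j' hj''

/-- Rounding an exact class: a subset of at most `m` elements whose weight dominates
any fractional solution of mass at most `m`. -/
lemma mkc_pick_exact (A : Finset ι) (m : ℕ) (w : ι → ℝ) (hw : ∀ i ∈ A, 0 ≤ w i) :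
    ∃ S, S ⊆ A ∧ S.card ≤ m ∧ ∀ y : ι → ℝ, (∀ i ∈ A, 0 ≤ y i ∧ y i ≤ 1) →
      (∑ i ∈ A, y i ≤ (m : ℝ)) → ∑ i ∈ A, w i * y i ≤ ∑ i ∈ S, w i := by
  classical
  rcases Nat.eq_zero_or_pos m with rfl | hm
  · refine ⟨∅, empty_subset _, le_refl _, fun y hy hsum => ?_⟩
    have hzero : ∀ i ∈ A, y i = 0 := by
      intro i hi
      have h0 : ∑ i ∈ A, y i = 0 := le_antisymm (by simpa using hsum) (sum_nonneg fun i hi => (hy i hi).1)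
      exact (sum_eq_zero_iff_of_nonneg (fun i hi => (hy i hi).1)).1 h0 i hi
    rw [sum_empty]
    rw [sum_congr rfl (fun i hi => by rw [hzero i hi, mul_zero])]
    simp
  by_cases hcard : A.card ≤ m
  · refine ⟨A, Finset.Subset.refl A, hcard, fun y hy _ => ?_⟩
    exact sum_le_sum fun i hi => by
      have := hy i hi
      nlinarith [hw i hi]
  · push_neg at hcard
    obtain ⟨S, hSA, hScard, hSdom⟩ := mkc_topm w m A hcard.le
    have hSne : S.Nonempty := card_pos.1 (by omega)
    obtain ⟨jmin, hjmin, hjminle⟩ := S.exists_min_image w hSne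
    set c : ℝ := w jmin with hc
    have hc0 : 0 ≤ c := hw jmin (hSA hjmin)
    refine ⟨S, hSA, hScard.le, fun y hy hsum => ?_⟩
    have hsplitA : (∑ i ∈ A \ S, w i * y i) + ∑ i ∈ S, w i * y i = ∑ i ∈ A, w i * y i :=
      sum_sdiff hSA
    have hsplity : (∑ i ∈ A \ S, y i) + ∑ i ∈ S, y i = ∑ i ∈ A, y i := sum_sdiff hSA
    have h1 : ∑ i ∈ A \ S, w i * y i ≤ c * ∑ i ∈ A \ S, y i := by
      rw [mul_sum]
      refine sum_le_sum fun i hi => ?_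
      rw [mem_sdiff] at hi
      have hwi : w i ≤ c := hSdom i hi.1 hi.2 jmin hjmin
      exact mul_le_mul_of_nonneg_right hwi (hy i hi.1).1
    have h3 : c * ∑ i ∈ A \ S, y i ≤ c * ((m : ℝ) - ∑ i ∈ S, y i) := by
      apply mul_le_mul_of_nonneg_left _ hc0
      linarith
    have h4 : (∑ i ∈ S, w i * y i) + c * ((m : ℝ) - ∑ i ∈ S, y i) ≤ ∑ i ∈ S, w i := by
      have hcm : c * (m : ℝ) = ∑ _i ∈ S, c := by
        rw [sum_const, hScard, nsmul_eq_mul, mul_comm]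
      have heq : (∑ i ∈ S, w i * y i) + c * ((m : ℝ) - ∑ i ∈ S, y i)
          = ∑ i ∈ S, (w i * y i + c * (1 - y i)) := by
        simp only [mul_sub, mul_one]
        rw [sum_add_distrib, sum_sub_distrib, sum_const, hScard, nsmul_eq_mul, ← mul_sum]
        ring
      rw [heq]
      refine sum_le_sum fun i hi => ?_
      have hyi := hy i (hSA hi)
      have hci : c ≤ w i := hjminle i hi
      nlinarith
    linarith


/-- (Lemma A.2 of the paper.) For each `h` and signature `σ` with
`P^{h,σ} ≠ ∅`, there is a feasible 0/1 solution of the 1-MKC instance of value at most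
`(1+ε)` times the minimum of the objective over `P^{h,σ}`; in particular
`OPT ≤ (1+ε) · min over P^{h,σ}`. -/
theorem stmt17
    (η : ℕ) (hη : 0 < η)
    (fbar wbar : Fin η → ℝ) (vbar dbar cbar : ℝ)
    (hf : ∀ i, 0 < fbar i) (hv : 0 < vbar)
    (hw : ∀ i, 0 < wbar i ∧ wbar i ≤ dbar) (hc : 0 < cbar ∧ cbar ≤ dbar)
    (hsort : ∀ i i' : Fin η, i ≤ i' → fbar i' ≤ fbar i)
    (ε : ℝ) (hε : ε ∈ Set.Ioo (0 : ℝ) 1)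
    (K : ℕ) (hK : 0 < K) (hKle : (1 + ε) ^ (-(K : ℤ)) ≤ ε)
    (hKmin : ∀ K' : ℕ, 0 < K' → (1 + ε) ^ (-(K' : ℤ)) ≤ ε → K ≤ K')
    (J : ℕ) (hJ : J = ⌈1 + 1 / ε⌉₊)
    (h : Fin η) (σ : Fin K → ℕ) (hσ : ∀ k, σ k ≤ J)
    (hPne : (Pset η K fbar wbar dbar cbar ε J h σ).Nonempty) :
    (∃ (y : Fin η → ℝ) (α : ℝ),
      ((∀ i, y i = 0 ∨ y i = 1) ∧ 0 ≤ α ∧ α ≤ cbar ∧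
        dbar - α ≤ ∑ i, wbar i * y i) ∧
      (∑ i, fbar i * y i) + vbar * α ≤
        (1 + ε) * sInf {r : ℝ | ∃ p ∈ Pset η K fbar wbar dbar cbar ε J h σ,
          r = (∑ i, fbar i * p.1 i) + vbar * p.2}) ∧
    (∀ OPT : ℝ,
      IsLeast {r : ℝ | ∃ (y : Fin η → ℝ) (α : ℝ),
        (∀ i, y i = 0 ∨ y i = 1) ∧ 0 ≤ α ∧ α ≤ cbar ∧
        (dbar - α ≤ ∑ i, wbar i * y i) ∧
        r = (∑ i, fbar i * y i) + vbar * α} OPT →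
      OPT ≤ (1 + ε) * sInf {r : ℝ | ∃ p ∈ Pset η K fbar wbar dbar cbar ε J h σ,
          r = (∑ i, fbar i * p.1 i) + vbar * p.2}) := by
  classical
  obtain ⟨hε0, hε1⟩ := hε
  have hbase : (1:ℝ) < 1 + ε := by linarith
  have hbase0 : (0:ℝ) < 1 + ε := by linarith
  have hbne : (1:ℝ) + ε ≠ 0 := ne_of_gt hbase0
  have hzpos : ∀ z : ℤ, (0:ℝ) < (1 + ε) ^ z := fun z => zpow_pos hbase0 z
  have hzmono : ∀ a b : ℤ, a ≤ b → ((1:ℝ) + ε) ^ a ≤ (1 + ε) ^ b :=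
    fun a b hab => zpow_le_zpow_right₀ hbase.le hab
  have hpow : ∀ k : ℕ, fbar h * (1+ε)^(-(k:ℤ)) = (1+ε) * (fbar h * (1+ε)^(-((k:ℤ)+1))) := by
    intro k
    have hexp : (-(k:ℤ)) = 1 + (-((k:ℤ)+1)) := by ring
    rw [hexp, zpow_add₀ hbne, zpow_one]; ring
  -- minimum attained
  obtain ⟨p, hpP, hpmin⟩ := (mkc_compact η K fbar wbar dbar cbar ε J h σ).exists_isMinOn hPne
    (((continuous_finset_sum _ fun i _ =>
        continuous_const.mul ((continuous_apply i).comp continuous_fst)).add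
      (continuous_const.mul continuous_snd)).continuousOn :
        ContinuousOn (fun p : (Fin η → ℝ) × ℝ => (∑ i, fbar i * p.1 i) + vbar * p.2) _)
  obtain ⟨y, α⟩ := p
  have hleast : IsLeast {r : ℝ | ∃ p ∈ Pset η K fbar wbar dbar cbar ε J h σ,
      r = (∑ i, fbar i * p.1 i) + vbar * p.2} ((∑ i, fbar i * y i) + vbar * α) := by
    constructor
    · exact ⟨(y, α), hpP, rfl⟩
    · rintro r ⟨q, hq, rfl⟩
      exact isMinOn_iff.1 hpmin q hq
  have hsinf : sInf {r : ℝ | ∃ p ∈ Pset η K fbar wbar dbar cbar ε J h σ,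
      r = (∑ i, fbar i * p.1 i) + vbar * p.2} = (∑ i, fbar i * y i) + vbar * α :=
    hleast.csInf_eq
  simp only [Pset, Set.mem_setOf_eq] at hpP
  obtain ⟨hbox, hcov, hα0, hαc, hlt0, hyh, hexact, hbig⟩ := hpP
  -- index sets
  obtain ⟨C, hCdef⟩ : ∃ C : Fin K → Finset (Fin η), C = fun k : Fin K => Shk η fbar ε h (k : ℕ) :=
    ⟨_, rfl⟩
  have hexactC : ∀ k : Fin K, σ k < J → ∑ i ∈ C k, y i = (σ k : ℝ) := by
    intro k hk; rw [hCdef]; exact hexact k hk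
  have hbigC : ∀ k : Fin K, σ k = J → (J : ℝ) ≤ ∑ i ∈ C k, y i := by
    intro k hk; rw [hCdef]; exact hbig k hk
  obtain ⟨T, hTdef⟩ : ∃ T : Finset (Fin η), T = Finset.univ.filter
    (fun i => h < i ∧ fbar i ≤ fbar h * (1 + ε) ^ (-(K : ℤ))) := ⟨_, rfl⟩
  obtain ⟨Afin, hAdef⟩ : ∃ A : Finset (Fin η), A = Finset.univ.filter (fun i => h < i) :=
    ⟨_, rfl⟩
  obtain ⟨KE, hKEdef⟩ : ∃ s : Finset (Fin K), s = Finset.univ.filter (fun k => σ k < J) :=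
    ⟨_, rfl⟩
  obtain ⟨KJ, hKJdef⟩ : ∃ s : Finset (Fin K), s = Finset.univ.filter (fun k => ¬ σ k < J) :=
    ⟨_, rfl⟩
  obtain ⟨U, hUdef⟩ : ∃ U : Finset (Fin η), U = T ∪ KJ.biUnion C := ⟨_, rfl⟩
  -- membership facts
  have hCk : ∀ (k : Fin K) i, i ∈ C k → h < i ∧ fbar i ≤ fbar h * (1+ε)^(-((k:ℕ):ℤ)) ∧
      fbar h * (1+ε)^(-(((k:ℕ):ℤ)+1)) < fbar i := by
    intro k i hi
    rw [hCdef] at hi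
    exact (Finset.mem_filter.1 hi).2
  have hTk : ∀ i ∈ T, h < i ∧ fbar i ≤ fbar h * (1 + ε) ^ (-(K : ℤ)) := by
    intro i hi
    rw [hTdef] at hi
    exact (Finset.mem_filter.1 hi).2
  -- disjointness
  have hCC : ∀ a b : ℕ, a < b → ∀ i : Fin η,
      i ∈ Shk η fbar ε h a → i ∈ Shk η fbar ε h b → False := by
    intro a b hab i hia hib
    have h1 : fbar h * (1+ε)^(-((a:ℤ)+1)) < fbar i := (Finset.mem_filter.1 hia).2.2.2
    have h2 : fbar i ≤ fbar h * (1+ε)^(-(b:ℤ)) := (Finset.mem_filter.1 hib).2.2.1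
    have h3 : ((1:ℝ)+ε)^(-(b:ℤ)) ≤ (1+ε)^(-((a:ℤ)+1)) := hzmono _ _ (by omega)
    nlinarith [hf h]
  have hdCC : ∀ k k' : Fin K, k ≠ k' → Disjoint (C k) (C k') := by
    intro k k' hne
    rw [Finset.disjoint_left]
    intro i hik hik'
    have hvne : (k:ℕ) ≠ (k':ℕ) := fun heq => hne (Fin.ext heq)
    rcases Nat.lt_or_ge (k:ℕ) (k':ℕ) with hlt | hge
    · exact hCC (k:ℕ) (k':ℕ) hlt i (by rwa [hCdef] at hik) (by rwa [hCdef] at hik')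
    · have hlt' : (k':ℕ) < (k:ℕ) := by omega
      exact hCC (k':ℕ) (k:ℕ) hlt' i (by rwa [hCdef] at hik') (by rwa [hCdef] at hik)
  have hdTC : ∀ k : Fin K, ∀ i, i ∈ T → i ∈ C k → False := by
    intro k i hiT hiC
    have h1 : fbar i ≤ fbar h * (1+ε)^(-(K:ℤ)) := (hTk i hiT).2
    have h2 : fbar h * (1+ε)^(-(((k:ℕ):ℤ)+1)) < fbar i := (hCk k i hiC).2.2
    have h3 : ((1:ℝ)+ε)^(-(K:ℤ)) ≤ (1+ε)^(-(((k:ℕ):ℤ)+1)) := by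
      refine hzmono _ _ ?_
      have := k.isLt
      omega
    nlinarith [hf h]
  -- partition of the indices above h
  have hApart : Afin = (Finset.univ.biUnion C) ∪ T := by
    ext i
    constructor
    · intro hi
      have hhi : h < i := by
        rw [hAdef] at hi
        exact (Finset.mem_filter.1 hi).2
      by_cases ht : fbar i ≤ fbar h * (1+ε)^(-(K:ℤ))
      · exact Finset.mem_union_right _
          (by rw [hTdef]; exact Finset.mem_filter.2 ⟨Finset.mem_univ i, hhi, ht⟩)
      · push_neg at ht
        obtain ⟨k, hk⟩ := mkc_classify η K fbar ε h i hK hhi (hsort h i hhi.le) ht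
        exact Finset.mem_union_left _ (Finset.mem_biUnion.2 ⟨k, Finset.mem_univ k,
          by rw [hCdef]; exact hk⟩)
    · intro hi
      rw [hAdef]
      refine Finset.mem_filter.2 ⟨Finset.mem_univ i, ?_⟩
      rcases Finset.mem_union.1 hi with hiB | hiT
      · obtain ⟨k, -, hk⟩ := Finset.mem_biUnion.1 hiB
        exact (hCk k i hk).1
      · exact (hTk i hiT).1
  have hpairC : Set.PairwiseDisjoint (↑(Finset.univ : Finset (Fin K)) : Set (Fin K)) C :=
    fun k _ k' _ hne => hdCC k k' hne
  have hpairKJ : Set.PairwiseDisjoint (↑KJ : Set (Fin K)) C :=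
    fun k _ k' _ hne => hdCC k k' hne
  have hdisjTB : Disjoint T (KJ.biUnion C) := by
    rw [Finset.disjoint_left]
    intro i hiT hiB
    obtain ⟨k, -, hk⟩ := Finset.mem_biUnion.1 hiB
    exact hdTC k i hiT hk
  have hpart : ∀ g : Fin η → ℝ, ∑ i ∈ Afin, g i
      = (∑ k : Fin K, ∑ i ∈ C k, g i) + ∑ i ∈ T, g i := by
    intro g
    rw [hApart, Finset.sum_union (by
      rw [Finset.disjoint_right]
      intro i hiT hiB
      obtain ⟨k, -, hk⟩ := Finset.mem_biUnion.1 hiB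
      exact hdTC k i hiT hk), Finset.sum_biUnion hpairC]
  have hUsum : ∀ g : Fin η → ℝ, ∑ i ∈ U, g i
      = (∑ i ∈ T, g i) + ∑ k ∈ KJ, ∑ i ∈ C k, g i := by
    intro g
    rw [hUdef, Finset.sum_union hdisjTB, Finset.sum_biUnion hpairKJ]
  have hKsplit : ∀ v : Fin K → ℝ, ∑ k : Fin K, v k = (∑ k ∈ KE, v k) + ∑ k ∈ KJ, v k := by
    intro v
    rw [hKEdef, hKJdef]
    exact (Finset.sum_filter_add_sum_filter_not Finset.univ _ v).symm
  -- splitting a full sum at h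
  have hsplit : ∀ g z : Fin η → ℝ, (∀ i, i < h → z i = 0) → z h = 1 →
      ∑ i, g i * z i = g h + ∑ i ∈ Afin, g i * z i := by
    intro g z hz0 hzh
    have hfil : (Finset.univ : Finset (Fin η)).filter (fun i => ¬ h < i)
        = insert h (Finset.univ.filter (fun i => i < h)) := by
      ext i
      simp only [Finset.mem_filter, Finset.mem_univ, true_and, Finset.mem_insert, not_lt]
      constructor
      · intro hle
        rcases lt_or_eq_of_le hle with hlt | heq
        · exact Or.inr hlt
        · exact Or.inl heq
      · rintro (rfl | hlt)
        · exact le_refl _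
        · exact hlt.le
    have hnotmem : h ∉ Finset.univ.filter (fun i : Fin η => i < h) := by simp
    calc ∑ i, g i * z i
        = (∑ i ∈ Finset.univ.filter (fun i => h < i), g i * z i)
          + ∑ i ∈ Finset.univ.filter (fun i => ¬ h < i), g i * z i :=
          (Finset.sum_filter_add_sum_filter_not Finset.univ _ _).symm
      _ = (∑ i ∈ Afin, g i * z i) + (g h * z h + ∑ i ∈ Finset.univ.filter (fun i => i < h), g i * z i) := by
          rw [hfil, Finset.sum_insert hnotmem, hAdef]
      _ = g h + ∑ i ∈ Afin, g i * z i := by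
          have hz : ∑ i ∈ Finset.univ.filter (fun i : Fin η => i < h), g i * z i = 0 :=
            Finset.sum_eq_zero (fun i hi => by
              rw [hz0 i (Finset.mem_filter.1 hi).2, mul_zero])
          rw [hzh, hz]
          ring
  -- choose rounded sets for exact classes
  have hEk : ∀ k : Fin K, ∃ S, S ⊆ C k ∧ S.card ≤ σ k ∧ ∀ y' : Fin η → ℝ,
      (∀ i ∈ C k, 0 ≤ y' i ∧ y' i ≤ 1) → (∑ i ∈ C k, y' i ≤ (σ k : ℝ)) →
      ∑ i ∈ C k, wbar i * y' i ≤ ∑ i ∈ S, wbar i :=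
    fun k => mkc_pick_exact (C k) (σ k) wbar (fun i _ => (hw i).1.le)
  choose E hE1 hE2 hE3 using hEk
  -- greedy on U
  have hWle : ∑ i ∈ U, wbar i * y i ≤ ∑ i ∈ U, wbar i :=
    Finset.sum_le_sum fun i _ => by nlinarith [(hbox i).1, (hbox i).2, (hw i).1]
  obtain ⟨SU, hSU_sub, hSU_W, hSU_struct⟩ :=
    mkc_greedy wbar fbar U (∑ i ∈ U, wbar i * y i) (fun i _ => (hw i).1) hWle
  -- the rounded solution
  have hCgt : ∀ k : Fin K, ∀ i ∈ C k, h < i := fun k i hi => (hCk k i hi).1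
  have hUgt : ∀ i ∈ U, h < i := by
    intro i hi
    rcases Finset.mem_union.1 (by rwa [hUdef] at hi) with hiT | hiB
    · exact (hTk i hiT).1
    · obtain ⟨k, -, hk⟩ := Finset.mem_biUnion.1 hiB
      exact hCgt k i hk
  have hdisjEU : Disjoint (KE.biUnion E) SU := by
    rw [Finset.disjoint_left]
    intro i hiE hiS
    obtain ⟨k, hkKE, hik⟩ := Finset.mem_biUnion.1 hiE
    have hik' : i ∈ C k := hE1 k hik
    have hSU_sub' : SU ⊆ T ∪ KJ.biUnion C := by rw [hUdef] at hSU_sub; exact hSU_sub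
    rcases Finset.mem_union.1 (hSU_sub' hiS) with hiT | hiB
    · exact hdTC k i hiT hik'
    · obtain ⟨k', hk'KJ, hik''⟩ := Finset.mem_biUnion.1 hiB
      have hkk' : k ≠ k' := by
        intro heq
        rw [hKEdef] at hkKE
        rw [hKJdef] at hk'KJ
        exact (Finset.mem_filter.1 hk'KJ).2 (heq ▸ (Finset.mem_filter.1 hkKE).2)
      exact Finset.disjoint_left.1 (hdCC k k' hkk') hik' hik''
  obtain ⟨Shat, hShatdef⟩ : ∃ s : Finset (Fin η), s = insert h ((KE.biUnion E) ∪ SU) :=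
    ⟨_, rfl⟩
  obtain ⟨yhat, hyhatdef⟩ : ∃ z : Fin η → ℝ, z = fun i => if i ∈ Shat then 1 else 0 :=
    ⟨_, rfl⟩
  have hnotn : h ∉ (KE.biUnion E) ∪ SU := by
    intro hmem
    rcases Finset.mem_union.1 hmem with h1 | h2
    · obtain ⟨k, -, hk⟩ := Finset.mem_biUnion.1 h1
      exact lt_irrefl h (hCgt k h (hE1 k hk))
    · exact lt_irrefl h (hUgt h (hSU_sub h2))
  have hpairE : Set.PairwiseDisjoint (↑KE : Set (Fin K)) E := fun k _ k' _ hne =>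
    Finset.disjoint_of_subset_left (hE1 k)
      (Finset.disjoint_of_subset_right (hE1 k') (hdCC k k' hne))
  have hsumShat : ∀ g : Fin η → ℝ, ∑ i ∈ Shat, g i
      = g h + ((∑ k ∈ KE, ∑ i ∈ E k, g i) + ∑ i ∈ SU, g i) := by
    intro g
    rw [hShatdef, Finset.sum_insert hnotn, Finset.sum_union hdisjEU, Finset.sum_biUnion hpairE]
  have hind : ∀ g : Fin η → ℝ, ∑ i, g i * yhat i = ∑ i ∈ Shat, g i := by
    intro g
    calc ∑ i, g i * yhat i = ∑ i, if i ∈ Shat then g i else 0 :=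
          Finset.sum_congr rfl fun i _ => by
            by_cases hi : i ∈ Shat <;> simp [hyhatdef, hi]
      _ = ∑ i ∈ Finset.univ ∩ Shat, g i := Finset.sum_ite_mem _ _ _
      _ = ∑ i ∈ Shat, g i := by rw [Finset.univ_inter]
  -- weight feasibility
  have hyfrac_w : ∑ i, wbar i * y i
      = wbar h + ((∑ k ∈ KE, ∑ i ∈ C k, wbar i * y i) + ∑ i ∈ U, wbar i * y i) := by
    rw [hsplit wbar y hlt0 hyh, hpart (fun i => wbar i * y i),
      hKsplit (fun k => ∑ i ∈ C k, wbar i * y i), hUsum (fun i => wbar i * y i)]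
    ring
  have hwfrac : ∀ k ∈ KE, ∑ i ∈ C k, wbar i * y i ≤ ∑ i ∈ E k, wbar i := by
    intro k hk
    refine hE3 k y (fun i _ => hbox i) ?_
    rw [hKEdef] at hk
    exact le_of_eq (hexactC k (Finset.mem_filter.1 hk).2)
  have hweight : dbar - α ≤ ∑ i, wbar i * yhat i := by
    have h1 : ∑ k ∈ KE, ∑ i ∈ C k, wbar i * y i ≤ ∑ k ∈ KE, ∑ i ∈ E k, wbar i :=
      Finset.sum_le_sum hwfrac
    have h3 : ∑ i, wbar i * yhat i
        = wbar h + ((∑ k ∈ KE, ∑ i ∈ E k, wbar i) + ∑ i ∈ SU, wbar i) := by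
      rw [hind wbar, hsumShat wbar]
    rw [h3]
    linarith [hcov, hyfrac_w, h1, hSU_W]
  -- cost bounds
  have hclassfy : ∀ k : Fin K,
      (fbar h * (1+ε)^(-(((k:ℕ):ℤ)+1))) * (∑ i ∈ C k, y i) ≤ ∑ i ∈ C k, fbar i * y i := by
    intro k
    rw [Finset.mul_sum]
    refine Finset.sum_le_sum fun i hi => ?_
    have hlow := (hCk k i hi).2.2
    exact mul_le_mul_of_nonneg_right hlow.le (hbox i).1
  have hEkcost : ∀ k ∈ KE, ∑ i ∈ E k, fbar i ≤ (1+ε) * ∑ i ∈ C k, fbar i * y i := by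
    intro k hk
    have hlb0 : (0:ℝ) < fbar h * (1+ε)^(-(((k:ℕ):ℤ)+1)) := mul_pos (hf h) (hzpos _)
    have hub : ∀ i ∈ E k, fbar i ≤ (1+ε) * (fbar h * (1+ε)^(-(((k:ℕ):ℤ)+1))) := by
      intro i hi
      have h2 := (hCk k i (hE1 k hi)).2.1
      rw [hpow (k:ℕ)] at h2
      exact h2
    have hcard : ((E k).card : ℝ) ≤ (σ k : ℝ) := Nat.cast_le.2 (hE2 k)
    have hyck : ∑ i ∈ C k, y i = (σ k : ℝ) := by
      rw [hKEdef] at hk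
      exact hexactC k (Finset.mem_filter.1 hk).2
    have hclass := hclassfy k
    rw [hyck] at hclass
    calc ∑ i ∈ E k, fbar i
        ≤ ∑ _i ∈ E k, (1+ε) * (fbar h * (1+ε)^(-(((k:ℕ):ℤ)+1))) := Finset.sum_le_sum hub
      _ = ((E k).card : ℝ) * ((1+ε) * (fbar h * (1+ε)^(-(((k:ℕ):ℤ)+1)))) := by
          rw [Finset.sum_const, nsmul_eq_mul]
      _ ≤ (σ k : ℝ) * ((1+ε) * (fbar h * (1+ε)^(-(((k:ℕ):ℤ)+1)))) :=
          mul_le_mul_of_nonneg_right hcard (by positivity)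
      _ = (1+ε) * ((fbar h * (1+ε)^(-(((k:ℕ):ℤ)+1))) * (σ k : ℝ)) := by ring
      _ ≤ (1+ε) * ∑ i ∈ C k, fbar i * y i := by
          have : (fbar h * (1+ε)^(-(((k:ℕ):ℤ)+1))) * (σ k : ℝ) ≤ ∑ i ∈ C k, fbar i * y i := hclass
          exact mul_le_mul_of_nonneg_left this hbase0.le
  have hUfy0 : (0:ℝ) ≤ ∑ i ∈ U, fbar i * y i :=
    Finset.sum_nonneg fun i _ => mul_nonneg (hf i).le (hbox i).1
  have hUcost : ∑ i ∈ SU, fbar i ≤ (1+ε) * (∑ i ∈ U, fbar i * y i) + ε * fbar h := by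
    have hεfh : (0:ℝ) ≤ ε * fbar h := mul_nonneg hε0.le (hf h).le
    rcases hSU_struct with rfl | ⟨j₀, hj₀, hltW, hin, hout⟩
    · rw [Finset.sum_empty]
      linarith [hεfh, mul_nonneg hbase0.le hUfy0]
    · have hexch : ∑ i ∈ SU, fbar i ≤ (∑ i ∈ U, fbar i * y i) + fbar j₀ :=
        mkc_exchange U SU hSU_sub j₀ hj₀ wbar fbar y (fun i _ => (hw i).1)
          (fun i _ => (hf i).le) hin hout (fun i _ => hbox i) hltW.le
      have hSU_sub' : SU ⊆ T ∪ KJ.biUnion C := by rw [hUdef] at hSU_sub; exact hSU_sub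
      rcases Finset.mem_union.1 (hSU_sub' hj₀) with hjT | hjB
      · have hjf : fbar j₀ ≤ ε * fbar h := by
          have h1 := (hTk j₀ hjT).2
          have h2 : fbar h * (1+ε)^(-(K:ℤ)) ≤ fbar h * ε :=
            mul_le_mul_of_nonneg_left hKle (hf h).le
          nlinarith
        have h4 : (0:ℝ) ≤ ε * ∑ i ∈ U, fbar i * y i := mul_nonneg hε0.le hUfy0
        linarith [hexch, hjf, h4]
      · obtain ⟨k, hkKJ, hjC⟩ := Finset.mem_biUnion.1 hjB
        have hσk : σ k = J := by
          rw [hKJdef] at hkKJ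
          exact le_antisymm (hσ k) (not_lt.1 (Finset.mem_filter.1 hkKJ).2)
        have hbigk : (J:ℝ) ≤ ∑ i ∈ C k, y i := hbigC k hσk
        have hlb0 : (0:ℝ) < fbar h * (1+ε)^(-(((k:ℕ):ℤ)+1)) := mul_pos (hf h) (hzpos _)
        have hclass := hclassfy k
        have hCU : ∑ i ∈ C k, fbar i * y i ≤ ∑ i ∈ U, fbar i * y i := by
          refine Finset.sum_le_sum_of_subset_of_nonneg ?_
            (fun i _ _ => mul_nonneg (hf i).le (hbox i).1)
          intro i hi
          rw [hUdef]
          exact Finset.mem_union.2 (Or.inr (Finset.mem_biUnion.2 ⟨k, hkKJ, hi⟩))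
        have hjf : fbar j₀ ≤ (1+ε) * (fbar h * (1+ε)^(-(((k:ℕ):ℤ)+1))) := by
          have h2 := (hCk k j₀ hjC).2.1
          rw [hpow (k:ℕ)] at h2
          exact h2
        have hJlb : (J:ℝ) * (fbar h * (1+ε)^(-(((k:ℕ):ℤ)+1))) ≤ ∑ i ∈ U, fbar i * y i := by
          have h1 : (J:ℝ) * (fbar h * (1+ε)^(-(((k:ℕ):ℤ)+1)))
              ≤ (∑ i ∈ C k, y i) * (fbar h * (1+ε)^(-(((k:ℕ):ℤ)+1))) :=
            mul_le_mul_of_nonneg_right hbigk hlb0.le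
          linarith [hclass, hCU]
        have hceil : (1 + 1/ε : ℝ) ≤ (J:ℝ) := by
          rw [hJ]
          exact Nat.le_ceil _
        have hJε : (1+ε) ≤ ε * (J:ℝ) := by
          have hmul : ε * (1 + 1/ε) = ε + 1 := by field_simp
          nlinarith
        have hjf2 : fbar j₀ ≤ ε * ∑ i ∈ U, fbar i * y i := by
          calc fbar j₀ ≤ (1+ε) * (fbar h * (1+ε)^(-(((k:ℕ):ℤ)+1))) := hjf
            _ ≤ (ε * (J:ℝ)) * (fbar h * (1+ε)^(-(((k:ℕ):ℤ)+1))) :=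
                mul_le_mul_of_nonneg_right hJε hlb0.le
            _ = ε * ((J:ℝ) * (fbar h * (1+ε)^(-(((k:ℕ):ℤ)+1)))) := by ring
            _ ≤ ε * ∑ i ∈ U, fbar i * y i := mul_le_mul_of_nonneg_left hJlb hε0.le
        linarith [hexch, hjf2, hεfh]
  -- total cost
  have hyfrac_f : ∑ i, fbar i * y i
      = fbar h + ((∑ k ∈ KE, ∑ i ∈ C k, fbar i * y i) + ∑ i ∈ U, fbar i * y i) := by
    rw [hsplit fbar y hlt0 hyh, hpart (fun i => fbar i * y i),
      hKsplit (fun k => ∑ i ∈ C k, fbar i * y i), hUsum (fun i => fbar i * y i)]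
    ring
  have hKEcost : ∑ k ∈ KE, ∑ i ∈ E k, fbar i
      ≤ (1+ε) * ∑ k ∈ KE, ∑ i ∈ C k, fbar i * y i := by
    rw [Finset.mul_sum]
    exact Finset.sum_le_sum hEkcost
  have hKEfy0 : (0:ℝ) ≤ ∑ k ∈ KE, ∑ i ∈ C k, fbar i * y i :=
    Finset.sum_nonneg fun k _ => Finset.sum_nonneg fun i _ => mul_nonneg (hf i).le (hbox i).1
  have hcost : ∑ i, fbar i * yhat i ≤ (1+ε) * ∑ i, fbar i * y i := by
    have hlhs : ∑ i, fbar i * yhat i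
        = fbar h + ((∑ k ∈ KE, ∑ i ∈ E k, fbar i) + ∑ i ∈ SU, fbar i) := by
      rw [hind fbar, hsumShat fbar]
    rw [hlhs, hyfrac_f]
    linarith [hKEcost, hUcost, mul_nonneg hε0.le hKEfy0]
  -- final bound
  have h01 : ∀ i, yhat i = 0 ∨ yhat i = 1 := by
    intro i
    by_cases hi : i ∈ Shat <;> simp [hyhatdef, hi]
  have hfinal : (∑ i, fbar i * yhat i) + vbar * α
      ≤ (1 + ε) * sInf {r : ℝ | ∃ p ∈ Pset η K fbar wbar dbar cbar ε J h σ,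
          r = (∑ i, fbar i * p.1 i) + vbar * p.2} := by
    rw [hsinf]
    have hvα : (0:ℝ) ≤ vbar * α := mul_nonneg hv.le hα0
    linarith [hcost, mul_nonneg hε0.le hvα]
  refine ⟨⟨yhat, α, ⟨h01, hα0, hαc, hweight⟩, hfinal⟩, ?_⟩
  intro OPT hOPT
  exact le_trans (hOPT.2 ⟨yhat, α, h01, hα0, hαc, hweight, rfl⟩) hfinal
end

section
/- In the appendix setting for 1-MKC, let Q be the convex hull of the union of the sets P^{h,σ} over all h ∈ [η] and all signatures σ, and assume Q is nonempty. Then OPT ≤ (1 + ε) · min{ Σ_i f̄_i y_i + v̄ α : (y, α) ∈ Q }, where OPT is the minimum value of the 1-MKC instance over feasible solutions (y, α) ∈ {0,1}^η × ℝ. -/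
/-- Top-n by weight subset exists. -/
lemma top_exists {ι : Type*} [DecidableEq ι] (w : ι → ℝ) :
    ∀ (n : ℕ) (S : Finset ι), ∃ T ⊆ S, T.card = min n S.card ∧
      ∀ i ∈ T, ∀ j ∈ S, j ∉ T → w j ≤ w i := by
  intro n
  induction n with
  | zero => intro S; exact ⟨∅, by simp, by simp, by simp⟩
  | succ n ih =>
    intro S
    rcases S.eq_empty_or_nonempty with rfl | hS
    · exact ⟨∅, by simp, by simp, by simp⟩
    · obtain ⟨i₀, hi₀S, hi₀max⟩ := S.exists_max_image w hS
      obtain ⟨T', hT'sub, hT'card, hT'max⟩ := ih (S.erase i₀)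
      have hi₀T' : i₀ ∉ T' := fun h => (Finset.mem_erase.mp (hT'sub h)).1 rfl
      refine ⟨insert i₀ T', Finset.insert_subset hi₀S (hT'sub.trans (S.erase_subset i₀)), ?_, ?_⟩
      · have hpos : 0 < S.card := Finset.card_pos.mpr hS
        rw [Finset.card_insert_of_notMem hi₀T', hT'card, Finset.card_erase_of_mem hi₀S]
        omega
      · intro i hi j hjS hjT
        rcases Finset.mem_insert.mp hi with rfl | hiT'
        · exact hi₀max j hjS
        · exact hT'max i hiT' j
            (Finset.mem_erase.mpr ⟨fun h => hjT (h ▸ Finset.mem_insert_self _ _), hjS⟩)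
            (fun h => hjT (Finset.mem_insert_of_mem h))

/-- Rounding with cardinality budget: top-n weights cover any fractional weighted sum. -/
lemma lemA {ι : Type*} [DecidableEq ι] (w y : ι → ℝ) (S : Finset ι) (n : ℕ)
    (hw : ∀ i ∈ S, 0 ≤ w i) (hy0 : ∀ i ∈ S, 0 ≤ y i) (hy1 : ∀ i ∈ S, y i ≤ 1)
    (hsum : ∑ i ∈ S, y i ≤ (n : ℝ)) :
    ∃ T ⊆ S, T.card ≤ n ∧ ∑ i ∈ S, w i * y i ≤ ∑ i ∈ T, w i := by
  obtain ⟨T, hTsub, hTcard, hTtop⟩ := top_exists w n S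
  refine ⟨T, hTsub, by omega, ?_⟩
  rcases Nat.lt_or_ge S.card n with hlt | hge
  · -- T = S
    have hTS : T = S := Finset.eq_of_subset_of_card_le hTsub (by omega)
    subst hTS
    exact Finset.sum_le_sum fun i hi => by nlinarith [hw i hi, hy1 i hi, hy0 i hi]
  · have hTcard' : T.card = n := by omega
    rcases Nat.eq_zero_or_pos n with rfl | hn
    · -- all y are 0
      have hy0' : ∀ i ∈ S, y i = 0 := by
        intro i hi
        have h0 : ∑ i ∈ S, y i = 0 := le_antisymm (by simpa using hsum) (Finset.sum_nonneg hy0)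
        exact (Finset.sum_eq_zero_iff_of_nonneg hy0).mp h0 i hi
      have : ∑ i ∈ S, w i * y i = 0 := Finset.sum_eq_zero fun i hi => by rw [hy0' i hi, mul_zero]
      rw [this]
      exact Finset.sum_nonneg fun i hi => hw i (hTsub hi)
    · have hTne : T.Nonempty := Finset.card_pos.mp (by omega)
      obtain ⟨im, himT, himmin⟩ := T.exists_min_image w hTne
      have hc0 : 0 ≤ w im := hw im (hTsub himT)
      have hsplit : ∑ i ∈ S \ T, w i * y i + ∑ i ∈ T, w i * y i = ∑ i ∈ S, w i * y i :=
        Finset.sum_sdiff hTsub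
      have h1 : ∑ i ∈ S \ T, w i * y i ≤ w im * ∑ i ∈ S \ T, y i := by
        rw [Finset.mul_sum]
        refine Finset.sum_le_sum fun j hj => ?_
        have hjS := (Finset.mem_sdiff.mp hj).1
        have hjT := (Finset.mem_sdiff.mp hj).2
        have := hTtop im himT j hjS hjT
        nlinarith [hy0 j hjS]
      have h2 : ∑ i ∈ S \ T, y i ≤ (n : ℝ) - ∑ i ∈ T, y i := by
        have : ∑ i ∈ S \ T, y i + ∑ i ∈ T, y i = ∑ i ∈ S, y i := Finset.sum_sdiff hTsub
        linarith
      have h3 : (n : ℝ) - ∑ i ∈ T, y i = ∑ i ∈ T, (1 - y i) := by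
        rw [Finset.sum_sub_distrib, Finset.sum_const, hTcard']
        simp
      have h4 : ∑ i ∈ T, w i * y i + w im * ∑ i ∈ T, (1 - y i) ≤ ∑ i ∈ T, w i := by
        rw [Finset.mul_sum, ← Finset.sum_add_distrib]
        refine Finset.sum_le_sum fun i hi => ?_
        have := himmin i hi
        have := hy1 i (hTsub hi)
        nlinarith
      nlinarith


/-- Density-sorted prefix existence. -/
lemma pre_aux {ι : Type*} [DecidableEq ι] (w f : ι → ℝ) :
    ∀ (n : ℕ) (S : Finset ι), S.card ≤ n → (∀ i ∈ S, 0 < w i) → ∀ W : ℝ, W ≤ ∑ i ∈ S, w i →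
    ∃ T ⊆ S, W ≤ ∑ i ∈ T, w i ∧
      (T = ∅ ∨ ∃ j ∈ T, (∑ i ∈ T.erase j, w i) < W ∧
        (∀ i ∈ T, f i * w j ≤ f j * w i) ∧
        (∀ l ∈ S, l ∉ T → f j * w l ≤ f l * w j)) := by
  intro n
  induction n with
  | zero =>
    intro S hcard hw W hW
    have hS : S = ∅ := Finset.card_eq_zero.mp (by omega)
    subst hS
    exact ⟨∅, Finset.Subset.refl _, by simpa using hW, Or.inl rfl⟩
  | succ n ih =>
    intro S hcard hw W hW
    by_cases hW0 : W ≤ 0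
    · exact ⟨∅, Finset.empty_subset _, by simpa using hW0, Or.inl rfl⟩
    push_neg at hW0
    have hSne : S.Nonempty := by
      rcases S.eq_empty_or_nonempty with rfl | h
      · simp at hW; linarith
      · exact h
    obtain ⟨j₀, hj₀S, hj₀⟩ := S.exists_max_image (fun i => f i / w i) hSne
    have hj₀d : ∀ i ∈ S, f i * w j₀ ≤ f j₀ * w i := by
      intro i hi
      have := hj₀ i hi
      rw [div_le_div_iff₀ (hw i hi) (hw j₀ hj₀S)] at this
      linarith
    by_cases hcase : W ≤ ∑ i ∈ S.erase j₀, w i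
    · obtain ⟨T, hTs, hTw, hTj⟩ := ih (S.erase j₀)
        (by have := Finset.card_erase_of_mem hj₀S; omega)
        (fun i hi => hw i (S.erase_subset _ hi)) W hcase
      refine ⟨T, hTs.trans (S.erase_subset _), hTw, ?_⟩
      rcases hTj with rfl | ⟨j, hjT, hje, hjd, hjout⟩
      · exact Or.inl rfl
      · refine Or.inr ⟨j, hjT, hje, hjd, fun l hlS hlT => ?_⟩
        by_cases hl : l = j₀
        · subst hl
          exact hj₀d j (S.erase_subset _ (hTs hjT))
        · exact hjout l (Finset.mem_erase.mpr ⟨hl, hlS⟩) hlT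
    · push_neg at hcase
      refine ⟨S, Finset.Subset.refl _, hW,
        Or.inr ⟨j₀, hj₀S, hcase, fun i hi => hj₀d i hi, fun l hlS hlT => absurd hlS hlT⟩⟩

/-- Exchange argument: the density-cheapest prefix costs at most any fractional cover. -/
lemma exch {ι : Type*} [DecidableEq ι] (w f y : ι → ℝ) (S T : Finset ι) (j : ι)
    (hjS : j ∈ S) (hT : T ⊆ S) (hjT : j ∉ T)
    (hw : ∀ i ∈ S, 0 < w i) (hf : ∀ i ∈ S, 0 ≤ f i)
    (hy0 : ∀ i ∈ S, 0 ≤ y i) (hy1 : ∀ i ∈ S, y i ≤ 1)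
    (hdT : ∀ i ∈ T, f i * w j ≤ f j * w i)
    (hdout : ∀ l ∈ S, l ∉ T → f j * w l ≤ f l * w j)
    (hwT : ∑ i ∈ T, w i ≤ ∑ i ∈ S, w i * y i) :
    ∑ i ∈ T, f i ≤ ∑ i ∈ S, f i * y i := by
  have hwj : 0 < w j := hw j hjS
  have key : ∑ i ∈ T, (f i * w j + f j * (w i * y i - w i)) +
      ∑ i ∈ S \ T, (f j * (w i * y i)) ≤
      ∑ i ∈ T, f i * y i * w j + ∑ i ∈ S \ T, f i * y i * w j := by
    refine add_le_add (Finset.sum_le_sum fun i hi => ?_) (Finset.sum_le_sum fun i hi => ?_)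
    · have h1 := hdT i hi
      have h2 := hy1 i (hT hi)
      have h3 := hy0 i (hT hi)
      nlinarith
    · have hiS := (Finset.mem_sdiff.mp hi).1
      have hiT := (Finset.mem_sdiff.mp hi).2
      have h1 := hdout i hiS hiT
      have h3 := hy0 i hiS
      nlinarith
  have hsplit1 : ∑ i ∈ S \ T, (w i * y i) + ∑ i ∈ T, (w i * y i) = ∑ i ∈ S, w i * y i :=
    Finset.sum_sdiff hT
  have hsplit2 : ∑ i ∈ S \ T, f i * y i * w j + ∑ i ∈ T, f i * y i * w j
      = ∑ i ∈ S, f i * y i * w j := Finset.sum_sdiff hT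
  have hfj : 0 ≤ f j := hf j hjS
  have eT : ∑ i ∈ T, (f i * w j + f j * (w i * y i - w i))
      = (∑ i ∈ T, f i) * w j + f j * (∑ i ∈ T, w i * y i) - f j * ∑ i ∈ T, w i := by
    rw [Finset.sum_add_distrib, ← Finset.sum_mul, ← Finset.mul_sum, Finset.sum_sub_distrib,
      mul_sub]
    ring
  have eO : ∑ i ∈ S \ T, (f j * (w i * y i)) = f j * ∑ i ∈ S \ T, w i * y i :=
    (Finset.mul_sum _ _ _).symm
  have eS : ∑ i ∈ S, f i * y i * w j = (∑ i ∈ S, f i * y i) * w j := (Finset.sum_mul _ _ _).symm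
  rw [eT, eO] at key
  rw [eS] at hsplit2
  have hmul := mul_le_mul_of_nonneg_left hwT hfj
  have e3 : f j * ∑ i ∈ S, w i * y i
      = f j * ∑ i ∈ S \ T, w i * y i + f j * ∑ i ∈ T, w i * y i := by
    rw [← hsplit1]; ring
  have final : (∑ i ∈ T, f i) * w j ≤ (∑ i ∈ S, f i * y i) * w j := by linarith
  exact le_of_mul_le_mul_right final hwj

/-- Greedy covering: integral cover of the fractional weight with cost overshoot at most `B`. -/
lemma lemG {ι : Type*} [DecidableEq ι] (w f y : ι → ℝ) (S : Finset ι) (B : ℝ)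
    (hw : ∀ i ∈ S, 0 < w i) (hf : ∀ i ∈ S, 0 ≤ f i) (hfB : ∀ i ∈ S, f i ≤ B) (hB : 0 ≤ B)
    (hy0 : ∀ i ∈ S, 0 ≤ y i) (hy1 : ∀ i ∈ S, y i ≤ 1) :
    ∃ T ⊆ S, (∑ i ∈ S, w i * y i ≤ ∑ i ∈ T, w i) ∧
      (∑ i ∈ T, f i ≤ ∑ i ∈ S, f i * y i + B) := by
  have hWle : ∑ i ∈ S, w i * y i ≤ ∑ i ∈ S, w i :=
    Finset.sum_le_sum fun i hi => by nlinarith [hw i hi, hy1 i hi, hy0 i hi]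
  obtain ⟨T, hTs, hTw, hTj⟩ := pre_aux w f S.card S le_rfl hw _ hWle
  refine ⟨T, hTs, hTw, ?_⟩
  have hfy0 : 0 ≤ ∑ i ∈ S, f i * y i :=
    Finset.sum_nonneg fun i hi => mul_nonneg (hf i hi) (hy0 i hi)
  rcases hTj with rfl | ⟨j, hjT, hje, hjd, hjout⟩
  · simp only [Finset.sum_empty]; linarith
  · have hexch : ∑ i ∈ T.erase j, f i ≤ ∑ i ∈ S, f i * y i := by
      refine exch w f y S (T.erase j) j (hTs hjT) ((T.erase_subset _).trans hTs)
        (Finset.notMem_erase _ _) hw hf hy0 hy1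
        (fun i hi => hjd i (T.erase_subset _ hi)) (fun l hlS hlT => ?_) (le_of_lt hje)
      by_cases hl : l = j
      · subst hl; exact le_refl _
      · exact hjout l hlS (fun hlT' => hlT (Finset.mem_erase.mpr ⟨hl, hlT'⟩))
    have hsum : ∑ i ∈ T, f i = f j + ∑ i ∈ T.erase j, f i := (Finset.add_sum_erase _ _ hjT).symm
    have hfjB : f j ≤ B := hfB j (hTs hjT)
    linarith

lemma core (η K : ℕ) (fbar wbar : Fin η → ℝ) (dbar cbar ε : ℝ) (J : ℕ)
    (h : Fin η) (σ : Fin K → ℕ)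
    (hf : ∀ i, 0 < fbar i) (hwpos : ∀ i, 0 < wbar i)
    (hsort : ∀ i i' : Fin η, i ≤ i' → fbar i' ≤ fbar i)
    (hε0 : 0 < ε) (hK : 0 < K)
    (hKle : (1 + ε) ^ (-(K : ℤ)) ≤ ε)
    (hJge : (1:ℝ) + 1/ε ≤ (J:ℝ))
    (hσJ : ∀ k, σ k ≤ J)
    (p : (Fin η → ℝ) × ℝ) (hp : p ∈ Pset η K fbar wbar dbar cbar ε J h σ) :
    ∃ yy : Fin η → ℝ, (∀ i, yy i = 0 ∨ yy i = 1) ∧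
      (dbar - p.2 ≤ ∑ i, wbar i * yy i) ∧
      ((∑ i, fbar i * yy i) ≤ (1+ε) * ∑ i, fbar i * p.1 i) := by
  classical
  obtain ⟨hbox, hcov, hα0, hαc, hzero, hyh, hexact, hbig⟩ := hp
  have hbpos : (0:ℝ) < 1 + ε := by linarith
  have hbne : (1+ε) ≠ 0 := ne_of_gt hbpos
  have hb1 : (1:ℝ) ≤ 1 + ε := by linarith
  set Sk : Fin K → Finset (Fin η) := fun k => Shk η fbar ε h (k : ℕ) with hSk
  set Rsm : Finset (Fin η) :=
    Finset.univ.filter (fun i => h < i ∧ fbar i ≤ fbar h * (1+ε) ^ (-(K:ℤ))) with hRsm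
  have hmemS : ∀ (k : Fin K) (i : Fin η), i ∈ Sk k ↔
      h < i ∧ fbar i ≤ fbar h * (1+ε) ^ (-((k:ℕ):ℤ)) ∧
        fbar h * (1+ε) ^ (-(((k:ℕ):ℤ)+1)) < fbar i := by
    intro k i; simp [hSk, Shk]
  have hmemR : ∀ i, i ∈ Rsm ↔ h < i ∧ fbar i ≤ fbar h * (1+ε) ^ (-(K:ℤ)) := by
    intro i; simp [hRsm]
  have hmono : ∀ m n : ℤ, m ≤ n → (1+ε) ^ m ≤ (1+ε) ^ n := fun m n hmn =>
    zpow_le_zpow_right₀ hb1 hmn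
  have hzpos : ∀ m : ℤ, (0:ℝ) < (1+ε) ^ m := fun m => zpow_pos hbpos m
  have hfh : 0 < fbar h := hf h
  -- every non-small item above h lies in some class
  have hcls : ∀ i : Fin η, h < i → ¬ (fbar i ≤ fbar h * (1+ε) ^ (-(K:ℤ))) →
      ∃ k : Fin K, i ∈ Sk k := by
    intro i hhi hns
    push_neg at hns
    have hCK : fbar h * (1+ε) ^ (-(((K-1:ℕ):ℤ)+1)) < fbar i := by
      rw [show (-(((K-1:ℕ):ℤ)+1)) = -(K:ℤ) by omega]
      exact hns
    have hCex : ∃ k : ℕ, fbar h * (1+ε) ^ (-((k:ℤ)+1)) < fbar i := ⟨K-1, hCK⟩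
    set k₀ := Nat.find hCex with hk₀def
    have hk₀spec : fbar h * (1+ε) ^ (-((k₀:ℤ)+1)) < fbar i := Nat.find_spec hCex
    have hk₀le : k₀ ≤ K - 1 := Nat.find_min' hCex hCK
    have hk₀K : k₀ < K := by omega
    refine ⟨⟨k₀, hk₀K⟩, (hmemS _ _).mpr ⟨hhi, ?_, hk₀spec⟩⟩
    show fbar i ≤ fbar h * (1+ε) ^ (-(k₀:ℤ))
    rcases Nat.eq_zero_or_pos k₀ with hk0 | hkpos
    · rw [show (-(k₀:ℤ)) = 0 by omega, zpow_zero, mul_one]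
      exact hsort h i (le_of_lt hhi)
    · have hnot := Nat.find_min hCex (show k₀ - 1 < k₀ by omega)
      push_neg at hnot
      rw [show (-(k₀:ℤ)) = -(((k₀-1:ℕ):ℤ)+1) by omega]
      exact hnot
  -- disjointness
  have hdisjSS : ∀ k k' : Fin K, k ≠ k' → Disjoint (Sk k) (Sk k') := by
    have key : ∀ k k' : Fin K, (k:ℕ) < (k':ℕ) → Disjoint (Sk k) (Sk k') := by
      intro k k' hlt
      rw [Finset.disjoint_left]
      intro i hik hik'
      obtain ⟨_, hub, hlb⟩ := (hmemS k i).mp hik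
      obtain ⟨_, hub', hlb'⟩ := (hmemS k' i).mp hik'
      have hmn : (1+ε) ^ (-((k':ℕ):ℤ)) ≤ (1+ε) ^ (-(((k:ℕ):ℤ)+1)) := hmono _ _ (by omega)
      nlinarith
    intro k k' hne
    rcases Nat.lt_or_ge (k:ℕ) (k':ℕ) with hlt | hge
    · exact key k k' hlt
    · have hlt' : (k':ℕ) < (k:ℕ) := lt_of_le_of_ne hge (fun hh => hne (Fin.ext hh.symm))
      exact (key k' k hlt').symm
  have hdisjSR : ∀ k : Fin K, Disjoint (Sk k) Rsm := by
    intro k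
    rw [Finset.disjoint_left]
    intro i hik hiR
    obtain ⟨_, hub, hlb⟩ := (hmemS k i).mp hik
    obtain ⟨_, hsm⟩ := (hmemR i).mp hiR
    have hmn : (1+ε) ^ (-(K:ℤ)) ≤ (1+ε) ^ (-(((k:ℕ):ℤ)+1)) := by
      refine hmono _ _ ?_
      have := k.isLt
      omega
    nlinarith
  have hnotHS : ∀ k : Fin K, h ∉ Sk k := by
    intro k hmem
    exact absurd ((hmemS k h).mp hmem).1 (lt_irrefl h)
  have hnotHR : h ∉ Rsm := by
    intro hmem
    exact absurd ((hmemR h).mp hmem).1 (lt_irrefl h)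
  -- generic sum decomposition
  have sumDecomp : ∀ (Tk' : Fin K → Finset (Fin η)) (TR' : Finset (Fin η)),
      (∀ k, Tk' k ⊆ Sk k) → TR' ⊆ Rsm → ∀ g : Fin η → ℝ,
      ∑ i ∈ insert h ((Finset.univ.biUnion Tk') ∪ TR'), g i
        = g h + (∑ k : Fin K, ∑ i ∈ Tk' k, g i) + ∑ i ∈ TR', g i := by
    intro Tk' TR' hsub hsubR g
    have hd1 : Disjoint (Finset.univ.biUnion Tk') TR' := by
      rw [Finset.disjoint_left]
      intro i hi hiR
      obtain ⟨k, _, hik⟩ := Finset.mem_biUnion.mp hi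
      exact (Finset.disjoint_left.mp (hdisjSR k)) (hsub k hik) (hsubR hiR)
    have hh : h ∉ (Finset.univ.biUnion Tk') ∪ TR' := by
      intro hmem
      rcases Finset.mem_union.mp hmem with h1 | h1
      · obtain ⟨k, _, hik⟩ := Finset.mem_biUnion.mp h1
        exact hnotHS k (hsub k hik)
      · exact hnotHR (hsubR h1)
    rw [Finset.sum_insert hh, Finset.sum_union hd1, Finset.sum_biUnion]
    · ring
    · intro k _ k' _ hkk'
      exact ((hdisjSS k k' hkk').mono (hsub k) (hsub k'))
  have sumU : ∀ g : Fin η → ℝ, (∀ i, i < h → g i = 0) →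
      ∑ i, g i = g h + (∑ k : Fin K, ∑ i ∈ Sk k, g i) + ∑ i ∈ Rsm, g i := by
    intro g hg
    have e1 : ∑ i ∈ insert h ((Finset.univ.biUnion Sk) ∪ Rsm), g i = ∑ i, g i := by
      refine Finset.sum_subset (Finset.subset_univ _) ?_
      intro i _ hi
      apply hg
      rcases lt_trichotomy i h with h1 | h1 | h1
      · exact h1
      · subst h1; exact absurd (Finset.mem_insert_self i _) hi
      · exfalso
        by_cases hsm : fbar i ≤ fbar h * (1+ε) ^ (-(K:ℤ))
        · exact hi (Finset.mem_insert_of_mem (Finset.mem_union_right _ ((hmemR i).mpr ⟨h1, hsm⟩)))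
        · obtain ⟨k, hk⟩ := hcls i h1 hsm
          exact hi (Finset.mem_insert_of_mem (Finset.mem_union_left _
            (Finset.mem_biUnion.mpr ⟨k, Finset.mem_univ k, hk⟩)))
    rw [← e1]
    exact sumDecomp Sk Rsm (fun k => Finset.Subset.refl _) (Finset.Subset.refl _) g
  -- per-class rounding
  have hclass : ∀ k : Fin K, ∃ T' ⊆ Sk k,
      (∑ i ∈ Sk k, wbar i * p.1 i ≤ ∑ i ∈ T', wbar i) ∧
      (∑ i ∈ T', fbar i ≤ (1+ε) * ∑ i ∈ Sk k, fbar i * p.1 i) := by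
    intro k
    set fmin := fbar h * (1+ε) ^ (-(((k:ℕ):ℤ)+1)) with hfmin
    set fmax := fbar h * (1+ε) ^ (-((k:ℕ):ℤ)) with hfmax
    have hfminpos : 0 < fmin := mul_pos hfh (hzpos _)
    have hmaxmin : fmax = (1+ε) * fmin := by
      rw [hfmax, hfmin, show (-((k:ℕ):ℤ)) = 1 + (-(((k:ℕ):ℤ)+1)) by ring,
        zpow_add₀ hbne, zpow_one]
      ring
    have hfmax0 : 0 ≤ fmax := by nlinarith
    have hub : ∀ i ∈ Sk k, fbar i ≤ fmax := fun i hi => ((hmemS k i).mp hi).2.1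
    have hlb : ∀ i ∈ Sk k, fmin ≤ fbar i := fun i hi => le_of_lt ((hmemS k i).mp hi).2.2
    have hfy_lb : fmin * ∑ i ∈ Sk k, p.1 i ≤ ∑ i ∈ Sk k, fbar i * p.1 i := by
      rw [Finset.mul_sum]
      exact Finset.sum_le_sum fun i hi => mul_le_mul_of_nonneg_right (hlb i hi) (hbox i).1
    by_cases hσk : σ k < J
    · have heq : ∑ i ∈ Sk k, p.1 i = (σ k : ℝ) := hexact k hσk
      obtain ⟨T', hTs, hTc, hTw⟩ := lemA wbar p.1 (Sk k) (σ k)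
        (fun i _ => le_of_lt (hwpos i)) (fun i _ => (hbox i).1) (fun i _ => (hbox i).2)
        (le_of_eq heq)
      refine ⟨T', hTs, hTw, ?_⟩
      have h1 : ∑ i ∈ T', fbar i ≤ (T'.card : ℝ) * fmax := by
        calc ∑ i ∈ T', fbar i ≤ ∑ _i ∈ T', fmax :=
              Finset.sum_le_sum fun i hi => hub i (hTs hi)
        _ = (T'.card : ℝ) * fmax := by rw [Finset.sum_const, nsmul_eq_mul]
      have h2 : (T'.card : ℝ) ≤ (σ k : ℝ) := by exact_mod_cast hTc
      have h3 : fmin * (σ k : ℝ) ≤ ∑ i ∈ Sk k, fbar i * p.1 i := by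
        rw [← heq]; exact hfy_lb
      have h4 : (T'.card : ℝ) * fmax ≤ (σ k : ℝ) * fmax :=
        mul_le_mul_of_nonneg_right h2 hfmax0
      have h5 : (1+ε) * (fmin * (σ k : ℝ)) ≤ (1+ε) * ∑ i ∈ Sk k, fbar i * p.1 i :=
        mul_le_mul_of_nonneg_left h3 (le_of_lt hbpos)
      calc ∑ i ∈ T', fbar i ≤ (σ k : ℝ) * fmax := le_trans h1 h4
      _ = (1+ε) * (fmin * (σ k : ℝ)) := by rw [hmaxmin]; ring
      _ ≤ (1+ε) * ∑ i ∈ Sk k, fbar i * p.1 i := h5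
    · have hσk' : σ k = J := le_antisymm (hσJ k) (not_lt.mp hσk)
      have hge : (J:ℝ) ≤ ∑ i ∈ Sk k, p.1 i := hbig k hσk'
      obtain ⟨T', hTs, hTw, hTf⟩ := lemG wbar fbar p.1 (Sk k) fmax
        (fun i _ => hwpos i) (fun i _ => le_of_lt (hf i)) hub hfmax0
        (fun i _ => (hbox i).1) (fun i _ => (hbox i).2)
      refine ⟨T', hTs, hTw, ?_⟩
      have h3 : fmin * (J:ℝ) ≤ ∑ i ∈ Sk k, fbar i * p.1 i :=
        le_trans (mul_le_mul_of_nonneg_left hge (le_of_lt hfminpos)) hfy_lb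
      have hεJ : 1 + ε ≤ ε * (J:ℝ) := by
        have h6 : ε * (1 + 1/ε) ≤ ε * (J:ℝ) := mul_le_mul_of_nonneg_left hJge (le_of_lt hε0)
        have hεinv : ε * (1/ε) = 1 := by field_simp
        nlinarith
      have h4 : fmax ≤ ε * ∑ i ∈ Sk k, fbar i * p.1 i := by
        calc fmax = (1+ε) * fmin := hmaxmin
        _ ≤ (ε * (J:ℝ)) * fmin := mul_le_mul_of_nonneg_right hεJ (le_of_lt hfminpos)
        _ = ε * (fmin * (J:ℝ)) := by ring
        _ ≤ ε * ∑ i ∈ Sk k, fbar i * p.1 i := mul_le_mul_of_nonneg_left h3 (le_of_lt hε0)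
      have hX0 : 0 ≤ ∑ i ∈ Sk k, fbar i * p.1 i :=
        Finset.sum_nonneg fun i _ => mul_nonneg (le_of_lt (hf i)) (hbox i).1
      nlinarith
  choose Tk hTksub hTkcov hTkcost using hclass
  -- small items
  obtain ⟨TR, hTRsub, hTRcov, hTRcost⟩ := lemG wbar fbar p.1 Rsm (ε * fbar h)
    (fun i _ => hwpos i) (fun i _ => le_of_lt (hf i))
    (fun i hi => by
      have h1 := ((hmemR i).mp hi).2
      have h2 : fbar h * (1+ε) ^ (-(K:ℤ)) ≤ fbar h * ε :=
        mul_le_mul_of_nonneg_left hKle (le_of_lt hfh)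
      linarith [h1, h2])
    (le_of_lt (mul_pos hε0 hfh))
    (fun i _ => (hbox i).1) (fun i _ => (hbox i).2)
  -- the integral solution
  set T : Finset (Fin η) := insert h ((Finset.univ.biUnion Tk) ∪ TR) with hT
  refine ⟨fun i => if i ∈ T then (1:ℝ) else 0, fun i => by by_cases hi : i ∈ T <;> simp [hi], ?_, ?_⟩
  all_goals {
    have ind : ∀ g : Fin η → ℝ,
        ∑ i, g i * (if i ∈ T then (1:ℝ) else 0) = ∑ i ∈ T, g i := by
      intro g
      have e : ∀ i : Fin η, g i * (if i ∈ T then (1:ℝ) else 0)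
          = if i ∈ T then g i else 0 := fun i => by split <;> ring
      simp_rw [e]
      rw [Finset.sum_ite_mem, Finset.univ_inter]
    have hTdec := sumDecomp Tk TR hTksub hTRsub
    first
    | { -- coverage goal
        show dbar - p.2 ≤ ∑ i, wbar i * (if i ∈ T then (1:ℝ) else 0)
        rw [ind wbar]
        have e1 : ∑ i, wbar i * p.1 i
            = wbar h * p.1 h + (∑ k : Fin K, ∑ i ∈ Sk k, wbar i * p.1 i)
              + ∑ i ∈ Rsm, wbar i * p.1 i :=
          sumU (fun i => wbar i * p.1 i) (fun i hih => by simp [hzero i hih])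
        have e2 := hTdec wbar
        have h1 : ∑ k : Fin K, ∑ i ∈ Sk k, wbar i * p.1 i ≤ ∑ k : Fin K, ∑ i ∈ Tk k, wbar i :=
          Finset.sum_le_sum fun k _ => hTkcov k
        rw [hyh, mul_one] at e1
        rw [← hT] at e2
        linarith [hcov, e1, e2, hTRcov] }
    | { -- cost goal
        show ∑ i, fbar i * (if i ∈ T then (1:ℝ) else 0) ≤ (1+ε) * ∑ i, fbar i * p.1 i
        rw [ind fbar]
        have e1 : ∑ i, fbar i * p.1 i
            = fbar h * p.1 h + (∑ k : Fin K, ∑ i ∈ Sk k, fbar i * p.1 i)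
              + ∑ i ∈ Rsm, fbar i * p.1 i :=
          sumU (fun i => fbar i * p.1 i) (fun i hih => by simp [hzero i hih])
        have e2 := hTdec fbar
        have h1 : ∑ k : Fin K, ∑ i ∈ Tk k, fbar i
            ≤ (1+ε) * ∑ k : Fin K, ∑ i ∈ Sk k, fbar i * p.1 i := by
          rw [Finset.mul_sum]
          exact Finset.sum_le_sum fun k _ => hTkcost k
        have hR0 : 0 ≤ ∑ i ∈ Rsm, fbar i * p.1 i :=
          Finset.sum_nonneg fun i _ => mul_nonneg (le_of_lt (hf i)) (hbox i).1
        rw [hyh, mul_one] at e1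
        rw [← hT] at e2
        nlinarith [e1, e2, h1, hR0, hTRcost, hfh, hε0] }
  }

/-- (Lemma A.3 of the paper.) With `Q` the convex hull of the union
of all `P^{h,σ}`, `OPT ≤ (1+ε) · min{f̄ᵀy + v̄α : (y, α) ∈ Q}`. -/
theorem stmt19
    (η : ℕ) (hη : 0 < η)
    (fbar wbar : Fin η → ℝ) (vbar dbar cbar : ℝ)
    (hf : ∀ i, 0 < fbar i) (hv : 0 < vbar)
    (hw : ∀ i, 0 < wbar i ∧ wbar i ≤ dbar) (hc : 0 < cbar ∧ cbar ≤ dbar)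
    (hsort : ∀ i i' : Fin η, i ≤ i' → fbar i' ≤ fbar i)
    (ε : ℝ) (hε : ε ∈ Set.Ioo (0 : ℝ) 1)
    (K : ℕ) (hK : 0 < K) (hKle : (1 + ε) ^ (-(K : ℤ)) ≤ ε)
    (hKmin : ∀ K' : ℕ, 0 < K' → (1 + ε) ^ (-(K' : ℤ)) ≤ ε → K ≤ K')
    (J : ℕ) (hJ : J = ⌈1 + 1 / ε⌉₊)
    (Q : Set ((Fin η → ℝ) × ℝ))
    (hQ : Q = convexHull ℝ
      (⋃ (h : Fin η) (σ : Fin K → ℕ) (_ : ∀ k, σ k ≤ J),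
        Pset η K fbar wbar dbar cbar ε J h σ))
    (hQne : Q.Nonempty)
    (OPT : ℝ)
    (hOPT : IsLeast {r : ℝ | ∃ (y : Fin η → ℝ) (α : ℝ),
        (∀ i, y i = 0 ∨ y i = 1) ∧ 0 ≤ α ∧ α ≤ cbar ∧
        (dbar - α ≤ ∑ i, wbar i * y i) ∧
        r = (∑ i, fbar i * y i) + vbar * α} OPT) :
    OPT ≤ (1 + ε) * sInf {r : ℝ | ∃ p ∈ Q,
        r = (∑ i, fbar i * p.1 i) + vbar * p.2} := by
  obtain ⟨hε0, hε1⟩ := hε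
  have hbpos : (0:ℝ) < 1 + ε := by linarith
  have hJge : (1:ℝ) + 1/ε ≤ (J:ℝ) := by rw [hJ]; exact Nat.le_ceil _
  -- pointwise bound on the union, extended to the hull by convexity
  have hD : Convex ℝ {q : (Fin η → ℝ) × ℝ |
      OPT ≤ (1+ε) * ((∑ i, fbar i * q.1 i) + vbar * q.2)} := by
    intro x hx y hy a b ha hb hab
    simp only [Set.mem_setOf_eq] at hx hy ⊢
    have e1 : (∑ i, fbar i * (a • x + b • y).1 i) + vbar * (a • x + b • y).2
        = a * ((∑ i, fbar i * x.1 i) + vbar * x.2)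
          + b * ((∑ i, fbar i * y.1 i) + vbar * y.2) := by
      simp only [Prod.fst_add, Prod.smul_fst, Prod.snd_add, Prod.smul_snd, Pi.add_apply,
        Pi.smul_apply, smul_eq_mul]
      have e0 : ∑ i, fbar i * (a * x.1 i + b * y.1 i)
          = a * (∑ i, fbar i * x.1 i) + b * (∑ i, fbar i * y.1 i) := by
        rw [Finset.mul_sum, Finset.mul_sum, ← Finset.sum_add_distrib]
        exact Finset.sum_congr rfl fun i _ => by ring
      rw [e0]
      ring
    rw [e1]
    have h2 : a * OPT + b * OPT
        ≤ a * ((1+ε) * ((∑ i, fbar i * x.1 i) + vbar * x.2))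
          + b * ((1+ε) * ((∑ i, fbar i * y.1 i) + vbar * y.2)) :=
      add_le_add (mul_le_mul_of_nonneg_left hx ha) (mul_le_mul_of_nonneg_left hy hb)
    have h3 : a * OPT + b * OPT = OPT := by rw [← add_mul, hab, one_mul]
    have h4 : (1+ε) * (a * ((∑ i, fbar i * x.1 i) + vbar * x.2)
          + b * ((∑ i, fbar i * y.1 i) + vbar * y.2))
        = a * ((1+ε) * ((∑ i, fbar i * x.1 i) + vbar * x.2))
          + b * ((1+ε) * ((∑ i, fbar i * y.1 i) + vbar * y.2)) := by ring
    linarith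
  have hsub : (⋃ (h : Fin η) (σ : Fin K → ℕ) (_ : ∀ k, σ k ≤ J),
      Pset η K fbar wbar dbar cbar ε J h σ) ⊆
      {q : (Fin η → ℝ) × ℝ | OPT ≤ (1+ε) * ((∑ i, fbar i * q.1 i) + vbar * q.2)} := by
    intro p hp
    simp only [Set.mem_iUnion] at hp
    obtain ⟨h, σ, hσ, hpP⟩ := hp
    obtain ⟨yy, hyy01, hyycov, hyycost⟩ := core η K fbar wbar dbar cbar ε J h σ
      hf (fun i => (hw i).1) hsort hε0 hK hKle hJge hσ p hpP
    have hpmem := hpP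
    obtain ⟨hbox, hcov, hα0, hαc, _⟩ := hpmem
    have hOPTle : OPT ≤ (∑ i, fbar i * yy i) + vbar * p.2 :=
      hOPT.2 ⟨yy, p.2, hyy01, hα0, hαc, hyycov, rfl⟩
    simp only [Set.mem_setOf_eq]
    have hvα : 0 ≤ vbar * p.2 := mul_nonneg (le_of_lt hv) hα0
    nlinarith
  have hmain : ∀ p ∈ Q, OPT ≤ (1+ε) * ((∑ i, fbar i * p.1 i) + vbar * p.2) := by
    intro p hp
    rw [hQ] at hp
    exact convexHull_min hsub hD hp
  obtain ⟨p₀, hp₀⟩ := hQne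
  have hRne : {r : ℝ | ∃ p ∈ Q, r = (∑ i, fbar i * p.1 i) + vbar * p.2}.Nonempty :=
    ⟨_, ⟨p₀, hp₀, rfl⟩⟩
  have hlow : OPT / (1+ε) ≤ sInf {r : ℝ | ∃ p ∈ Q,
      r = (∑ i, fbar i * p.1 i) + vbar * p.2} := by
    refine le_csInf hRne ?_
    rintro r ⟨p, hp, rfl⟩
    rw [div_le_iff₀ hbpos]
    have := hmain p hp
    linarith
  rw [div_le_iff₀ hbpos] at hlow
  linarith
end
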